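/- arXiv:2405.14248 — 5 statements merged into one kernel-verified Lean document; each statement's English description precedes it below -/
import Mathlib

section
/- For real a > 0 and real b, the integral of cos(b·x·√(x²+1))·e^{-a x²} over x from 0 to ∞ equals (√(π/2)/2) · √(√(a²+b²)+a)/√(a²+b²) · e^{(a−√(a²+b²))/2}. -/
open Real MeasureTheory Set Filter
open scoped Topology

noncomputable def erfAux (z : ℂ) : ℂ := ∫ u in (0:ℝ)..1, z * Complex.exp (-((u:ℂ)*z)^2)

lemma hasDerivAt_param (w : ℂ) (u : ℝ) : HasDerivAt (fun w : ℂ => w * Complex.exp (-((u:ℂ)*w)^2))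
    ((1 - 2*(u:ℂ)^2*w^2) * Complex.exp (-((u:ℂ)*w)^2)) w := by
  have h1 : HasDerivAt (fun w : ℂ => -((u:ℂ)*w)^2) (-2*(u:ℂ)^2*w) w := by
    have := (((hasDerivAt_id w).const_mul (u:ℂ)).pow 2).neg
    refine this.congr_deriv ?_
    simp only [id_eq]
    ring
  have h3 := (hasDerivAt_id w).mul h1.cexp
  refine h3.congr_deriv ?_
  simp only [id_eq]
  ring

lemma hasDerivAt_param' (z : ℂ) (u : ℝ) : HasDerivAt (fun u : ℝ => (u:ℂ) * Complex.exp (-((u:ℂ)*z)^2))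
    ((1 - 2*(u:ℂ)^2*z^2) * Complex.exp (-((u:ℂ)*z)^2)) u := by
  have hc : HasDerivAt (fun u : ℝ => ((u:ℂ)*z)) z u := by
    simpa using (Complex.ofRealCLM.hasDerivAt (x := u)).mul_const z
  have h1 : HasDerivAt (fun u : ℝ => -((u:ℂ)*z)^2) (-2*(u:ℂ)*z^2) u := by
    simp only [pow_two]
    refine (hc.mul hc).neg.congr_deriv ?_
    ring
  have h3 := (Complex.ofRealCLM.hasDerivAt (x := u)).mul h1.cexp
  refine h3.congr_deriv ?_
  simp only [Complex.ofRealCLM_apply, Complex.ofReal_one]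
  push_cast
  ring

lemma erfAux_hasDerivAt (z : ℂ) : HasDerivAt erfAux (Complex.exp (-z^2)) z := by
  have main := intervalIntegral.hasDerivAt_integral_of_dominated_loc_of_deriv_le
    (F := fun (w : ℂ) (u : ℝ) => w * Complex.exp (-((u:ℂ)*w)^2))
    (F' := fun (w : ℂ) (u : ℝ) => (1 - 2*(u:ℂ)^2*w^2) * Complex.exp (-((u:ℂ)*w)^2))
    (x₀ := z) (a := 0) (b := 1) (μ := volume)
    (bound := fun _ => (1 + 2*(‖z‖+1)^2) * Real.exp ((‖z‖+1)^2))
    (s := Metric.ball z 1) (Metric.ball_mem_nhds z one_pos) ?_ ?_ ?_ ?_ ?_ ?_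
  · obtain ⟨-, hd⟩ := main
    have heq : (∫ u in (0:ℝ)..1, (1 - 2*(u:ℂ)^2*z^2) * Complex.exp (-((u:ℂ)*z)^2))
        = Complex.exp (-z^2) := by
      have := intervalIntegral.integral_eq_sub_of_hasDerivAt
        (f := fun u : ℝ => (u:ℂ) * Complex.exp (-((u:ℂ)*z)^2)) (a := 0) (b := 1)
        (fun u _ => hasDerivAt_param' z u) (by apply Continuous.intervalIntegrable; continuity)
      simpa using this
    rw [heq] at hd
    exact hd
  · filter_upwards with w
    apply Continuous.aestronglyMeasurable
    continuity
  · apply Continuous.intervalIntegrable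
    continuity
  · apply Continuous.aestronglyMeasurable
    continuity
  · filter_upwards with u hu w hw
    have hu' : |u| ≤ 1 := by
      rw [Set.uIoc_of_le (by norm_num : (0:ℝ) ≤ 1)] at hu
      rw [abs_le]; constructor <;> [linarith [hu.1]; linarith [hu.2]]
    have hw' : ‖w‖ ≤ ‖z‖ + 1 := by
      have := mem_ball_iff_norm.mp hw
      have h := norm_sub_norm_le w z
      linarith
    have hnz : 0 ≤ ‖z‖ := norm_nonneg z
    have huw : |u| * ‖w‖ ≤ ‖z‖ + 1 := by nlinarith [abs_nonneg u, norm_nonneg w]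
    rw [norm_mul, Complex.norm_exp]
    have hre : (-((u:ℂ)*w)^2).re ≤ (‖z‖+1)^2 := by
      have h2 : ‖(-((u:ℂ)*w)^2)‖ ≤ (‖z‖+1)^2 := by
        rw [norm_neg, norm_pow, norm_mul, Complex.norm_real, Real.norm_eq_abs]
        have : (|u| * ‖w‖)^2 ≤ (‖z‖+1)^2 := by
          apply pow_le_pow_left₀ (by positivity) huw 2
        linarith [this]
      exact le_trans (Complex.re_le_norm _) h2
    have h1 : ‖(1 - 2*(u:ℂ)^2*w^2)‖ ≤ 1 + 2*(‖z‖+1)^2 := by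
      have hb : ‖2*(u:ℂ)^2*w^2‖ ≤ 2*(‖z‖+1)^2 := by
        rw [norm_mul, norm_mul, norm_pow, norm_pow]
        simp only [Complex.norm_real, Real.norm_eq_abs, Complex.norm_ofNat]
        have h := pow_le_pow_left₀ (mul_nonneg (abs_nonneg u) (norm_nonneg w)) huw 2
        nlinarith [h]
      have := norm_sub_le (1:ℂ) (2*(u:ℂ)^2*w^2)
      rw [norm_one] at this
      linarith
    exact mul_le_mul h1 (Real.exp_le_exp.mpr hre) (Real.exp_nonneg _) (by positivity)
  · exact intervalIntegrable_const
  · filter_upwards with u hu w hw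
    exact hasDerivAt_param w u

lemma erfAux_neg (z : ℂ) : erfAux (-z) = - erfAux z := by
  unfold erfAux
  rw [← intervalIntegral.integral_neg]
  apply intervalIntegral.integral_congr
  intro u _
  have h : ((u:ℂ)*(-z))^2 = ((u:ℂ)*z)^2 := by ring
  simp only [h]; ring

lemma intervalIntegral_conj {f : ℝ → ℂ} {a b : ℝ} :
    (∫ u in a..b, (starRingEnd ℂ) (f u)) = (starRingEnd ℂ) (∫ u in a..b, f u) := by
  rw [intervalIntegral.intervalIntegral_eq_integral_uIoc,
    intervalIntegral.intervalIntegral_eq_integral_uIoc, integral_conj]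
  rcases le_or_gt a b with h | h
  · simp [h]
  · simp [not_le.mpr h, map_neg]

lemma erfAux_conj (z : ℂ) : erfAux ((starRingEnd ℂ) z) = (starRingEnd ℂ) (erfAux z) := by
  unfold erfAux
  rw [← intervalIntegral_conj]
  apply intervalIntegral.integral_congr
  intro u _
  simp only [map_mul, map_neg, map_pow, ← Complex.exp_conj, Complex.conj_ofReal]

lemma erfAux_real_smul (w : ℂ) {x : ℝ} (hx : x ≠ 0) :
    erfAux ((x:ℂ) * w) = ∫ u in (0:ℝ)..x, w * Complex.exp (-((u:ℂ)*w)^2) := by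
  unfold erfAux
  have h : ∀ u : ℝ, (x:ℂ) * w * Complex.exp (-((u:ℂ)*((x:ℂ)*w))^2)
      = x • ((fun v : ℝ => w * Complex.exp (-((v:ℂ)*w)^2)) (x*u)) := by
    intro u
    simp only [Complex.real_smul, Complex.ofReal_mul]
    ring_nf
  simp_rw [h]
  rw [intervalIntegral.integral_smul,
    intervalIntegral.integral_comp_mul_left (f := fun v : ℝ => w * Complex.exp (-((v:ℂ)*w)^2)) hx]
  rw [smul_smul, mul_inv_cancel₀ hx, one_smul]
  norm_num

lemma tendsto_erfAux_ray (w : ℂ) (hw : 0 < (w^2).re) :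
    Tendsto (fun x : ℝ => erfAux ((x:ℂ) * w)) atTop
      (𝓝 (w * ((↑π/w^2) ^ (1/2 : ℂ) / 2))) := by
  have h0 : ∀ u : ℝ, -((u:ℂ)*w)^2 = -(w^2) * (u:ℂ)^2 := fun u => by ring
  have hint : IntegrableOn (fun u : ℝ => w * Complex.exp (-((u:ℂ)*w)^2)) (Ioi 0) := by
    apply Integrable.integrableOn
    apply ((integrable_cexp_neg_mul_sq hw).const_mul w).congr
    filter_upwards with u
    rw [h0 u]
  have hlim := intervalIntegral_tendsto_integral_Ioi 0 hint tendsto_id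
  have hval : ∫ u in Ioi (0:ℝ), w * Complex.exp (-((u:ℂ)*w)^2)
      = w * ((↑π/w^2) ^ (1/2 : ℂ) / 2) := by
    simp_rw [h0]
    rw [MeasureTheory.integral_const_mul, integral_gaussian_complex_Ioi hw]
  rw [hval] at hlim
  apply hlim.congr'
  filter_upwards [eventually_ne_atTop (0:ℝ)] with x hx
  exact (erfAux_real_smul w hx).symm

lemma ofReal_add_mul_I_re (p q : ℝ) : ((p:ℂ) + (q:ℂ)*Complex.I).re = p := by simp

lemma ofReal_add_mul_I_im (p q : ℝ) : ((p:ℂ) + (q:ℂ)*Complex.I).im = q := by simp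

lemma neg_sq_mk (p q : ℝ) : -((p:ℂ) - (q:ℂ)*Complex.I)^2
    = ((q^2 - p^2 : ℝ):ℂ) + ((2*p*q : ℝ):ℂ)*Complex.I := by
  push_cast
  linear_combination (-(q:ℂ)^2) * Complex.I_sq

set_option maxHeartbeats 1000000 in
theorem key (a b : ℝ) (ha : 0 < a) (hb : 0 ≤ b) :
    ∫ x in Set.Ioi (0:ℝ), Real.cos (b * x * Real.sqrt (x^2 + 1)) * Real.exp (-a * x^2)
      = Real.sqrt (π / 2) / 2 * Real.sqrt (Real.sqrt (a^2 + b^2) + a) / Real.sqrt (a^2 + b^2)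
        * Real.exp ((a - Real.sqrt (a^2 + b^2)) / 2) := by
  set r : ℝ := Real.sqrt (a^2 + b^2) with hrdef
  have hr2 : r^2 = a^2 + b^2 := Real.sq_sqrt (by positivity)
  have hr : 0 < r := Real.sqrt_pos.mpr (by positivity)
  have har : a ≤ r := by
    rw [hrdef]
    calc a = Real.sqrt (a^2) := (Real.sqrt_sq ha.le).symm
      _ ≤ _ := Real.sqrt_le_sqrt (by nlinarith)
  set ss : ℝ := Real.sqrt ((r+a)/2) with hssdef
  set tt : ℝ := Real.sqrt ((r-a)/2) with httdef
  have hss0 : 0 < ss := Real.sqrt_pos.mpr (by linarith)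
  have htt0 : 0 ≤ tt := Real.sqrt_nonneg _
  have hss2 : ss^2 = (r+a)/2 := Real.sq_sqrt (by linarith)
  have htt2 : tt^2 = (r-a)/2 := Real.sq_sqrt (by linarith)
  have hsstt : 2*(ss*tt) = b := by
    have h1 : ss*tt = Real.sqrt (((r+a)/2) * ((r-a)/2)) := (Real.sqrt_mul (by linarith) _).symm
    have h2 : ((r+a)/2) * ((r-a)/2) = (b/2)^2 := by nlinarith
    rw [h1, h2, Real.sqrt_sq (by linarith)]
    ring
  have hdiff : ss^2 - tt^2 = a := by rw [hss2, htt2]; ring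
  have hsum : ss^2 + tt^2 = r := by rw [hss2, htt2]; ring
  -- the functions
  set Z : ℝ → ℝ := fun x => Real.sqrt (x^2+1) with hZdef
  have hZpos : ∀ x, 0 < Z x := fun x => Real.sqrt_pos.mpr (by positivity)
  have hZsq : ∀ x, (Z x)^2 = x^2+1 := fun x => Real.sq_sqrt (by positivity)
  have hZx : ∀ x, |x| ≤ Z x := by
    intro x
    rw [hZdef, ← Real.sqrt_sq_eq_abs]
    exact Real.sqrt_le_sqrt (by nlinarith)
  have hZeven : ∀ x : ℝ, Z (-x) = Z x := fun x => by simp [hZdef]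
  have hZderiv : ∀ x, HasDerivAt Z (x / Z x) x := by
    intro x
    have h1 : HasDerivAt (fun x : ℝ => x^2+1) (2*x) x := by
      simpa using ((hasDerivAt_id x).pow 2).add_const 1
    have := (Real.hasDerivAt_sqrt (by positivity : x^2+1 ≠ 0)).comp x h1
    refine this.congr_deriv ?_
    simp only [hZdef]
    field_simp
  set G : ℝ → ℂ := fun x => ((ss*x : ℝ):ℂ) - ((tt * Z x : ℝ):ℂ)*Complex.I with hGdef
  set D : ℝ → ℂ := fun x => ((ss * Z x : ℝ):ℂ) - ((tt * x : ℝ):ℂ)*Complex.I with hDdef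
  set G' : ℝ → ℂ := fun x => ((ss : ℝ):ℂ) - ((tt * (x / Z x) : ℝ):ℂ)*Complex.I with hG'def
  set D' : ℝ → ℂ := fun x => ((ss * (x / Z x) : ℝ):ℂ) - ((tt : ℝ):ℂ)*Complex.I with hD'def
  set g1 : ℝ → ℂ := fun x => Complex.exp (-(G x)^2) * G' x with hg1def
  set g2 : ℝ → ℂ := fun x => Complex.exp (-(D x)^2) * D' x with hg2def
  have hGderiv : ∀ x, HasDerivAt G (G' x) x := by
    intro x
    have h1 : HasDerivAt (fun x : ℝ => ((ss*x : ℝ):ℂ)) ((ss:ℝ):ℂ) x := by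
      have := ((hasDerivAt_id x).const_mul ss).ofReal_comp
      simpa using this
    have h2 : HasDerivAt (fun x : ℝ => ((tt * Z x : ℝ):ℂ)) ((tt * (x / Z x) : ℝ):ℂ) x :=
      ((hZderiv x).const_mul tt).ofReal_comp
    exact h1.sub (h2.mul_const Complex.I)
  have hDderiv : ∀ x, HasDerivAt D (D' x) x := by
    intro x
    have h1 : HasDerivAt (fun x : ℝ => ((ss * Z x : ℝ):ℂ)) ((ss * (x / Z x) : ℝ):ℂ) x :=
      ((hZderiv x).const_mul ss).ofReal_comp
    have h2 : HasDerivAt (fun x : ℝ => ((tt * x : ℝ):ℂ)) ((tt:ℝ):ℂ) x := by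
      have := ((hasDerivAt_id x).const_mul tt).ofReal_comp
      simpa using this
    exact h1.sub (h2.mul_const Complex.I)
  have hFG : ∀ x, HasDerivAt (fun y => erfAux (G y)) (g1 x) x := fun x =>
    (erfAux_hasDerivAt (G x)).comp x (hGderiv x)
  have hFD : ∀ x, HasDerivAt (fun y => erfAux (D y)) (g2 x) x := fun x =>
    (erfAux_hasDerivAt (D x)).comp x (hDderiv x)
  -- re/im of the exponents
  have hGsq : ∀ x, -(G x)^2 = (((r-a)/2 - a*x^2 : ℝ):ℂ) + ((b * x * Z x : ℝ):ℂ)*Complex.I := by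
    intro x
    have h1 : (tt * Z x)^2 - (ss*x)^2 = (r-a)/2 - a*x^2 := by
      rw [mul_pow, mul_pow, hZsq x, hss2, htt2]; ring
    have h2 : 2*(ss*x)*(tt*Z x) = b * x * Z x := by rw [← hsstt]; ring
    rw [hGdef, neg_sq_mk, h1, h2]
  have hDsq : ∀ x, -(D x)^2 = ((-(a*x^2) - (r+a)/2 : ℝ):ℂ) + ((b * x * Z x : ℝ):ℂ)*Complex.I := by
    intro x
    have h1 : (tt * x)^2 - (ss * Z x)^2 = -(a*x^2) - (r+a)/2 := by
      rw [mul_pow, mul_pow, hZsq x, hss2, htt2]; ring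
    have h2 : 2*(ss*Z x)*(tt*x) = b * x * Z x := by rw [← hsstt]; ring
    rw [hDdef, neg_sq_mk, h1, h2]
  -- continuity
  have hZcont : Continuous Z := by
    rw [hZdef]; exact Real.continuous_sqrt.comp (by continuity)
  have hdivcont : Continuous (fun x : ℝ => x / Z x) :=
    continuous_id.div hZcont (fun x => (hZpos x).ne')
  have hGcont : Continuous G := by
    rw [hGdef]
    apply Continuous.sub
    · exact Complex.continuous_ofReal.comp (continuous_const.mul continuous_id)
    · exact (Complex.continuous_ofReal.comp (continuous_const.mul hZcont)).mul continuous_const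
  have hDcont : Continuous D := by
    rw [hDdef]
    apply Continuous.sub
    · exact Complex.continuous_ofReal.comp (continuous_const.mul hZcont)
    · exact (Complex.continuous_ofReal.comp (continuous_const.mul continuous_id)).mul
        continuous_const
  have hG'cont : Continuous G' := by
    rw [hG'def]
    apply Continuous.sub continuous_const
    exact (Complex.continuous_ofReal.comp (continuous_const.mul hdivcont)).mul continuous_const
  have hD'cont : Continuous D' := by
    rw [hD'def]
    apply Continuous.sub ?_ continuous_const
    exact Complex.continuous_ofReal.comp (continuous_const.mul hdivcont)
  -- norms
  have hnormexpG : ∀ x, ‖Complex.exp (-(G x)^2)‖ = Real.exp ((r-a)/2 - a*x^2) := by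
    intro x
    rw [Complex.norm_exp, hGsq, ofReal_add_mul_I_re]
  have hnormexpD : ∀ x, ‖Complex.exp (-(D x)^2)‖ = Real.exp (-(a*x^2) - (r+a)/2) := by
    intro x
    rw [Complex.norm_exp, hDsq, ofReal_add_mul_I_re]
  have hxZ : ∀ x : ℝ, |x / Z x| ≤ 1 := by
    intro x
    rw [abs_div, abs_of_pos (hZpos x), div_le_one (hZpos x)]
    exact hZx x
  have hnormG' : ∀ x, ‖G' x‖ ≤ ss + tt := by
    intro x
    rw [hG'def]
    refine le_trans (norm_sub_le _ _) ?_
    rw [norm_mul, Complex.norm_I, mul_one, Complex.norm_real, Complex.norm_real,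
      Real.norm_eq_abs, Real.norm_eq_abs, abs_of_pos hss0, abs_mul, abs_of_nonneg htt0]
    have := hxZ x
    nlinarith [htt0, hxZ x, abs_nonneg (x / Z x)]
  have hnormD' : ∀ x, ‖D' x‖ ≤ ss + tt := by
    intro x
    rw [hD'def]
    refine le_trans (norm_sub_le _ _) ?_
    rw [norm_mul, Complex.norm_I, mul_one, Complex.norm_real, Complex.norm_real,
      Real.norm_eq_abs, Real.norm_eq_abs, abs_of_nonneg htt0, abs_mul, abs_of_pos hss0]
    nlinarith [hss0, hxZ x, abs_nonneg (x / Z x)]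
  have hcexpGcont : Continuous (fun x => Complex.exp (-(G x)^2)) :=
    Complex.continuous_exp.comp ((hGcont.pow 2).neg)
  have hcexpDcont : Continuous (fun x => Complex.exp (-(D x)^2)) :=
    Complex.continuous_exp.comp ((hDcont.pow 2).neg)
  -- integrability
  have hint_exp : Integrable (fun x : ℝ => Real.exp (-a*x^2)) := integrable_exp_neg_mul_sq ha
  have hint_g1 : Integrable g1 := by
    apply Integrable.mono' (hint_exp.const_mul (Real.exp ((r-a)/2) * (ss+tt)))
    · exact (hcexpGcont.mul hG'cont).aestronglyMeasurable
    · filter_upwards with x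
      rw [hg1def]
      simp only []
      rw [norm_mul, hnormexpG]
      have h1 : Real.exp ((r-a)/2 - a*x^2) = Real.exp ((r-a)/2) * Real.exp (-a*x^2) := by
        rw [← Real.exp_add]; ring_nf
      rw [h1]
      have h2 := hnormG' x
      have h3 : (0:ℝ) < Real.exp ((r-a)/2) * Real.exp (-a*x^2) := by positivity
      calc Real.exp ((r-a)/2) * Real.exp (-a*x^2) * ‖G' x‖
          ≤ Real.exp ((r-a)/2) * Real.exp (-a*x^2) * (ss+tt) := by
            exact mul_le_mul_of_nonneg_left h2 h3.le
        _ = Real.exp ((r-a)/2) * (ss+tt) * Real.exp (-a*x^2) := by ring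
  have hint_g2 : Integrable g2 := by
    apply Integrable.mono' (hint_exp.const_mul (ss+tt))
    · exact (hcexpDcont.mul hD'cont).aestronglyMeasurable
    · filter_upwards with x
      rw [hg2def]
      simp only []
      rw [norm_mul, hnormexpD]
      have h1 : Real.exp (-(a*x^2) - (r+a)/2) ≤ Real.exp (-a*x^2) := by
        apply Real.exp_le_exp.mpr; linarith
      have h2 := hnormD' x
      have h4 : (0:ℝ) ≤ Real.exp (-(a*x^2) - (r+a)/2) := (Real.exp_pos _).le
      calc Real.exp (-(a*x^2) - (r+a)/2) * ‖D' x‖ ≤ Real.exp (-a*x^2) * (ss+tt) := by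
            apply mul_le_mul h1 h2 (norm_nonneg _) (Real.exp_pos _).le
        _ = (ss+tt) * Real.exp (-a*x^2) := by ring
  have hint_cexpG : Integrable (fun x => Complex.exp (-(G x)^2)) := by
    apply Integrable.mono' (hint_exp.const_mul (Real.exp ((r-a)/2)))
    · exact hcexpGcont.aestronglyMeasurable
    · filter_upwards with x
      rw [hnormexpG]
      rw [← Real.exp_add]
      apply Real.exp_le_exp.mpr
      linarith [sq_nonneg x]
  -- the direction w and the limit value
  set w : ℂ := ((ss:ℝ):ℂ) - ((tt:ℝ):ℂ)*Complex.I with hwdef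
  have hw2 : w^2 = ((a:ℝ):ℂ) - ((b:ℝ):ℂ)*Complex.I := by
    have h1 : w^2 = -(-(((ss:ℝ):ℂ) - ((tt:ℝ):ℂ)*Complex.I)^2) := by rw [hwdef]; ring
    rw [h1, neg_sq_mk, ← hdiff, ← hsstt]
    push_cast
    ring
  have hwre : 0 < (w^2).re := by
    rw [hw2]
    simpa using ha
  have hrC : ((r:ℝ):ℂ) ≠ 0 := by
    simpa using hr.ne'
  have hr2C : ((r:ℝ):ℂ)^2 = (a:ℂ)^2 + (b:ℂ)^2 := by
    exact_mod_cast congrArg (fun t : ℝ => (t:ℂ)) hr2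
  have hwne : w^2 ≠ 0 := by
    rw [hw2]
    intro h
    have := congrArg Complex.re h
    simp at this
    exact ha.ne' this
  have hζ : (↑π/w^2 : ℂ) = ((π*a/r^2 : ℝ):ℂ) + ((π*b/r^2 : ℝ):ℂ)*Complex.I := by
    rw [eq_comm, eq_div_iff hwne, hw2]
    push_cast
    field_simp
    linear_combination (-(b:ℂ)^2) * Complex.I_sq - hr2C
  have habs : ‖(↑π/w^2 : ℂ)‖ = π/r := by
    rw [hζ]
    rw [Complex.norm_def, Complex.normSq_apply, ofReal_add_mul_I_re, ofReal_add_mul_I_im]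
    have e : π*a/r^2 * (π*a/r^2) + π*b/r^2 * (π*b/r^2) = (π/r)^2 := by
      field_simp
      linear_combination (-1) * hr2
    rw [e, Real.sqrt_sq (by positivity)]
  have hcpow : (↑π/w^2 : ℂ) ^ (1/2:ℂ)
      = ((Real.sqrt π * ss / r : ℝ):ℂ) + ((Real.sqrt π * tt / r : ℝ):ℂ)*Complex.I := by
    rw [one_div]
    apply Complex.ext
    · rw [Complex.cpow_inv_two_re, habs, ofReal_add_mul_I_re]
      rw [hζ, ofReal_add_mul_I_re]
      have e : (π/r + π*a/r^2)/2 = (π * ((r+a)/2))/r^2 := by field_simp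
      rw [e, Real.sqrt_div (by positivity), Real.sqrt_mul pi_nonneg, ← hssdef,
        Real.sqrt_sq hr.le]
    · rw [Complex.cpow_inv_two_im_eq_sqrt (by rw [hζ, ofReal_add_mul_I_im]; exact div_nonneg (mul_nonneg pi_nonneg hb) (sq_nonneg r)),
        habs, ofReal_add_mul_I_im]
      rw [hζ, ofReal_add_mul_I_re]
      have e : (π/r - π*a/r^2)/2 = (π * ((r-a)/2))/r^2 := by field_simp
      rw [e, Real.sqrt_div (mul_nonneg pi_nonneg (by linarith)), Real.sqrt_mul pi_nonneg, ← httdef,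
        Real.sqrt_sq hr.le]
  have hL : w * ((↑π/w^2 : ℂ) ^ (1/2:ℂ) / 2) = ((Real.sqrt π / 2 : ℝ):ℂ) := by
    rw [hcpow, hwdef]
    have hsumC : ((ss:ℝ):ℂ)^2 + ((tt:ℝ):ℂ)^2 = ((r:ℝ):ℂ) := by exact_mod_cast hsum
    push_cast
    field_simp
    linear_combination (-((tt:ℝ):ℂ)^2) * Complex.I_sq
      + hsumC
  have hray : Tendsto (fun x : ℝ => erfAux ((x:ℂ) * w)) atTop (𝓝 ((Real.sqrt π / 2 : ℝ):ℂ)) := by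
    have := tendsto_erfAux_ray w hwre
    rwa [hL] at this
  -- mean value estimate
  have hbound : ∀ ζ : ℂ, 0 ≤ (ζ^2).re → ‖Complex.exp (-ζ^2)‖ ≤ 1 := by
    intro ζ h
    rw [Complex.norm_exp, Real.exp_le_one_iff]
    simpa using h
  have hmv : ∀ (z₁ z₂ : ℂ), (∀ ζ ∈ segment ℝ z₁ z₂, 0 ≤ (ζ^2).re) →
      ‖erfAux z₂ - erfAux z₁‖ ≤ ‖z₂ - z₁‖ := by
    intro z₁ z₂ hseg
    have := Convex.norm_image_sub_le_of_norm_hasDerivWithin_le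
      (f := erfAux) (f' := fun ζ => Complex.exp (-ζ^2)) (s := segment ℝ z₁ z₂) (C := 1)
      (fun ζ _ => (erfAux_hasDerivAt ζ).hasDerivWithinAt)
      (fun ζ hζ => hbound ζ (hseg ζ hζ)) (convex_segment _ _)
      (left_mem_segment ℝ z₁ z₂) (right_mem_segment ℝ z₁ z₂)
    simpa using this
  have hz2re : ∀ z:ℂ, (z^2).re = z.re^2 - z.im^2 := by
    intro z
    rw [sq, Complex.mul_re]
    ring
  have hwre2 : w.re = ss := by rw [hwdef]; simp
  have hwim : w.im = -tt := by rw [hwdef]; simp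
  have hGre : ∀ x, (G x).re = ss*x := by intro x; rw [hGdef]; simp
  have hGim : ∀ x, (G x).im = -(tt*Z x) := by intro x; rw [hGdef]; simp
  have hDre : ∀ x, (D x).re = ss*Z x := by intro x; rw [hDdef]; simp
  have hDim : ∀ x, (D x).im = -(tt*x) := by intro x; rw [hDdef]; simp
  have hxwre : ∀ x : ℝ, ((x:ℂ)*w).re = x*ss := by
    intro x
    rw [Complex.mul_re, hwre2, hwim]
    simp only [Complex.ofReal_re, Complex.ofReal_im]
    ring
  have hxwim : ∀ x : ℝ, ((x:ℂ)*w).im = -(x*tt) := by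
    intro x
    rw [Complex.mul_im, hwre2, hwim]
    simp only [Complex.ofReal_re, Complex.ofReal_im]
    ring
  have htendaux : Tendsto (fun x : ℝ => (ss+tt) * x⁻¹) atTop (𝓝 0) := by
    have := tendsto_inv_atTop_zero.const_mul (ss+tt)
    simpa using this
  have hdiffsq : ∀ x : ℝ, ss^2*x^2 - tt^2*x^2 = a*x^2 := by
    intro x
    linear_combination x^2*hdiff
  have hZxx : ∀ x : ℝ, 0 < x → Z x - x ≤ x⁻¹ := by
    intro x hx0
    have hxx : x * x⁻¹ = 1 := mul_inv_cancel₀ hx0.ne'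
    have h2 : x^2 + 1 ≤ (x + x⁻¹)^2 := by nlinarith [sq_nonneg x⁻¹]
    have h1 : Z x ≤ x + x⁻¹ := by
      rw [hZdef]
      calc Real.sqrt (x^2+1) ≤ Real.sqrt ((x+x⁻¹)^2) := Real.sqrt_le_sqrt h2
        _ = x + x⁻¹ := Real.sqrt_sq (by positivity)
    linarith
  have hT1 : Tendsto (fun x : ℝ => erfAux (G x)) atTop (𝓝 ((Real.sqrt π / 2 : ℝ):ℂ)) := by
    apply hray.congr_dist
    apply squeeze_zero' (g := fun x : ℝ => (ss+tt) * x⁻¹) ?_ ?_ htendaux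
    · filter_upwards with x using dist_nonneg
    · filter_upwards [eventually_ge_atTop (max 1 (Real.sqrt ((r-a)/(2*a))))] with x hx
      have hx1 : (1:ℝ) ≤ x := le_trans (le_max_left _ _) hx
      have hx0 : (0:ℝ) < x := by linarith
      have hxZ' : x ≤ Z x := le_trans (le_abs_self x) (hZx x)
      have hinv0 : (0:ℝ) ≤ x⁻¹ := inv_nonneg.mpr hx0.le
      have hxa : tt^2 ≤ a*x^2 := by
        have h2 : Real.sqrt ((r-a)/(2*a)) ≤ x := le_trans (le_max_right _ _) hx
        have h4 : 0 ≤ (r-a)/(2*a) := div_nonneg (by linarith) (by linarith)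
        have h5 := Real.sq_sqrt h4
        have h6 := Real.sqrt_nonneg ((r-a)/(2*a))
        have h8 : (r-a)/(2*a) ≤ x^2 := by nlinarith only [mul_self_le_mul_self h6 h2, h5]
        have h7 : a * ((r-a)/(2*a)) = (r-a)/2 := by field_simp
        rw [htt2, ← h7]
        exact mul_le_mul_of_nonneg_left h8 ha.le
      have hseg : ∀ ζ ∈ segment ℝ ((x:ℂ)*w) (G x), 0 ≤ (ζ^2).re := by
        rintro ζ ⟨p, q, hp, hq, hpq, rfl⟩
        rw [hz2re]
        have hre : (p • ((x:ℂ)*w) + q • G x).re = ss*x := by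
          rw [Complex.add_re, Complex.smul_re, Complex.smul_re, hxwre, hGre]
          simp only [smul_eq_mul]
          linear_combination (ss*x)*hpq
        have him : (p • ((x:ℂ)*w) + q • G x).im = -(p*(x*tt) + q*(tt*Z x)) := by
          rw [Complex.add_im, Complex.smul_im, Complex.smul_im, hxwim, hGim]
          simp only [smul_eq_mul]
          ring
        rw [hre, him]
        have e0 : x*tt ≤ Z x*tt := mul_le_mul_of_nonneg_right hxZ' htt0
        have e1 : p*(x*tt) ≤ p*(Z x*tt) := mul_le_mul_of_nonneg_left e0 hp
        have e2 : p*(Z x*tt) + q*(tt*Z x) = tt*Z x := by linear_combination (tt*Z x)*hpq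
        have hZb : p*(x*tt) + q*(tt*Z x) ≤ tt * Z x := by linarith only [e1, e2]
        have hZnn : 0 ≤ p*(x*tt) + q*(tt*Z x) :=
          add_nonneg (mul_nonneg hp (mul_nonneg hx0.le htt0))
            (mul_nonneg hq (mul_nonneg htt0 (hZpos x).le))
        have h7 : (p*(x*tt) + q*(tt*Z x))^2 ≤ (tt*Z x)^2 := pow_le_pow_left₀ hZnn hZb 2
        have h8 : (tt * Z x)^2 = tt^2*x^2 + tt^2 := by
          rw [mul_pow, hZsq x]; ring
        have h9 : (ss*x)^2 = ss^2*x^2 := by ring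
        have h11 : (-(p*(x*tt) + q*(tt*Z x)))^2 = (p*(x*tt) + q*(tt*Z x))^2 := by ring
        rw [h9, h11]
        linarith only [hdiffsq x, hxa, h7, h8]
      have hnn : 0 ≤ tt*(Z x - x) := mul_nonneg htt0 (sub_nonneg.mpr hxZ')
      have hGxw : G x - (x:ℂ)*w = ((tt*(Z x - x) : ℝ):ℂ) * (-Complex.I) := by
        rw [hGdef, hwdef]; push_cast; ring
      rw [dist_eq_norm, norm_sub_rev]
      have hstep : tt * x⁻¹ ≤ (ss+tt) * x⁻¹ := by linarith only [mul_nonneg hss0.le hinv0]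
      have hstep2 : tt*(Z x - x) ≤ tt * x⁻¹ := mul_le_mul_of_nonneg_left (hZxx x hx0) htt0
      calc ‖erfAux (G x) - erfAux ((x:ℂ)*w)‖ ≤ ‖G x - (x:ℂ)*w‖ := hmv _ _ hseg
        _ = tt*(Z x - x) := by
            rw [hGxw, norm_mul, norm_neg, Complex.norm_I, mul_one, Complex.norm_real,
              Real.norm_eq_abs, abs_of_nonneg hnn]
        _ ≤ (ss+tt) * x⁻¹ := le_trans hstep2 hstep
  have hT2 : Tendsto (fun x : ℝ => erfAux (D x)) atTop (𝓝 ((Real.sqrt π / 2 : ℝ):ℂ)) := by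
    apply hray.congr_dist
    apply squeeze_zero' (g := fun x : ℝ => (ss+tt) * x⁻¹) ?_ ?_ htendaux
    · filter_upwards with x using dist_nonneg
    · filter_upwards [eventually_ge_atTop 1] with x hx1
      have hx0 : (0:ℝ) < x := by linarith
      have hxZ' : x ≤ Z x := le_trans (le_abs_self x) (hZx x)
      have hinv0 : (0:ℝ) ≤ x⁻¹ := inv_nonneg.mpr hx0.le
      have hseg : ∀ ζ ∈ segment ℝ ((x:ℂ)*w) (D x), 0 ≤ (ζ^2).re := by
        rintro ζ ⟨p, q, hp, hq, hpq, rfl⟩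
        rw [hz2re]
        have hre : (p • ((x:ℂ)*w) + q • D x).re = p*(x*ss) + q*(ss*Z x) := by
          rw [Complex.add_re, Complex.smul_re, Complex.smul_re, hxwre, hDre]
          simp only [smul_eq_mul]
        have him : (p • ((x:ℂ)*w) + q • D x).im = -(x*tt) := by
          rw [Complex.add_im, Complex.smul_im, Complex.smul_im, hxwim, hDim]
          simp only [smul_eq_mul]
          linear_combination (-(x*tt))*hpq
        rw [hre, him]
        have e0 : x*ss ≤ Z x*ss := mul_le_mul_of_nonneg_right hxZ' hss0.le
        have e1 : q*(x*ss) ≤ q*(ss*Z x) := by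
          have h := mul_le_mul_of_nonneg_left e0 hq
          linarith only [h]
        have e2 : p*(x*ss) + q*(x*ss) = x*ss := by linear_combination (x*ss)*hpq
        have h9 : x*ss ≤ p*(x*ss) + q*(ss*Z x) := by linarith only [e1, e2]
        have h10 : (0:ℝ) ≤ x*ss := mul_nonneg hx0.le hss0.le
        have h11 : (x*ss)^2 ≤ (p*(x*ss) + q*(ss*Z x))^2 := pow_le_pow_left₀ h10 h9 2
        have h12 : (x*ss)^2 = ss^2*x^2 := by ring
        have h13 : (-(x*tt))^2 = tt^2*x^2 := by ring
        rw [h13]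
        have h14 := mul_nonneg ha.le (sq_nonneg x)
        linarith only [hdiffsq x, h11, h12, h14]
      have hnn : 0 ≤ ss*(Z x - x) := mul_nonneg hss0.le (sub_nonneg.mpr hxZ')
      have hDxw : D x - (x:ℂ)*w = ((ss*(Z x - x) : ℝ):ℂ) := by
        rw [hDdef, hwdef]; push_cast; ring
      rw [dist_eq_norm, norm_sub_rev]
      have hstep : ss * x⁻¹ ≤ (ss+tt) * x⁻¹ := by linarith only [mul_nonneg htt0 hinv0]
      have hstep2 : ss*(Z x - x) ≤ ss * x⁻¹ := mul_le_mul_of_nonneg_left (hZxx x hx0) hss0.le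
      calc ‖erfAux (D x) - erfAux ((x:ℂ)*w)‖ ≤ ‖D x - (x:ℂ)*w‖ := hmv _ _ hseg
        _ = ss*(Z x - x) := by
            rw [hDxw, Complex.norm_real, Real.norm_eq_abs, abs_of_nonneg hnn]
        _ ≤ (ss+tt) * x⁻¹ := le_trans hstep2 hstep
  -- reflection
  have hGneg : ∀ x : ℝ, G (-x) = -(starRingEnd ℂ) (G x) := by
    intro x
    rw [hGdef]
    simp only [hZeven]
    apply Complex.ext <;> simp <;> ring
  have hDneg : ∀ x : ℝ, D (-x) = (starRingEnd ℂ) (D x) := by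
    intro x
    rw [hDdef]
    simp only [hZeven]
    apply Complex.ext <;> simp <;> ring
  have hB1 : Tendsto (fun x : ℝ => erfAux (G x)) atBot (𝓝 (-((Real.sqrt π / 2:ℝ):ℂ))) := by
    have h1 : Tendsto (fun y : ℝ => -(starRingEnd ℂ) (erfAux (G y))) atTop
        (𝓝 (-(starRingEnd ℂ) ((Real.sqrt π / 2:ℝ):ℂ)))
      := (((Complex.continuous_conj).tendsto _).comp hT1).neg
    have h2 := h1.comp (tendsto_neg_atBot_atTop (G := ℝ))
    rw [Complex.conj_ofReal] at h2
    apply h2.congr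
    intro x
    simp only [Function.comp_apply]
    have h3 : -(starRingEnd ℂ) (G (-x)) = G x := by rw [← hGneg (-x), neg_neg]
    rw [← h3, ← erfAux_conj, ← erfAux_neg]
  have hB2 : Tendsto (fun x : ℝ => erfAux (D x)) atBot (𝓝 ((Real.sqrt π / 2:ℝ):ℂ)) := by
    have h1 : Tendsto (fun y : ℝ => (starRingEnd ℂ) (erfAux (D y))) atTop
        (𝓝 ((starRingEnd ℂ) ((Real.sqrt π / 2:ℝ):ℂ)))
      := ((Complex.continuous_conj).tendsto _).comp hT2
    have h2 := h1.comp (tendsto_neg_atBot_atTop (G := ℝ))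
    rw [Complex.conj_ofReal] at h2
    apply h2.congr
    intro x
    simp only [Function.comp_apply]
    have h3 : (starRingEnd ℂ) (D (-x)) = D x := by rw [← hDneg (-x), neg_neg]
    rw [← h3, ← erfAux_conj]
  -- FTC on the two half-lines
  have hIoi1 : ∫ x in Ioi (0:ℝ), g1 x = ((Real.sqrt π / 2:ℝ):ℂ) - erfAux (G 0) :=
    integral_Ioi_of_hasDerivAt_of_tendsto' (fun x _ => hFG x) hint_g1.integrableOn hT1
  have hIic1 : ∫ x in Iic (0:ℝ), g1 x = erfAux (G 0) - (-((Real.sqrt π / 2:ℝ):ℂ)) :=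
    integral_Iic_of_hasDerivAt_of_tendsto' (fun x _ => hFG x) hint_g1.integrableOn hB1
  have hItot1 : ∫ x : ℝ, g1 x = ((Real.sqrt π :ℝ):ℂ) := by
    rw [← intervalIntegral.integral_Iic_add_Ioi hint_g1.integrableOn hint_g1.integrableOn, hIoi1, hIic1]
    push_cast
    ring
  have hIoi2 : ∫ x in Ioi (0:ℝ), g2 x = ((Real.sqrt π / 2:ℝ):ℂ) - erfAux (D 0) :=
    integral_Ioi_of_hasDerivAt_of_tendsto' (fun x _ => hFD x) hint_g2.integrableOn hT2
  have hIic2 : ∫ x in Iic (0:ℝ), g2 x = erfAux (D 0) - ((Real.sqrt π / 2:ℝ):ℂ) :=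
    integral_Iic_of_hasDerivAt_of_tendsto' (fun x _ => hFD x) hint_g2.integrableOn hB2
  have hItot2 : ∫ x : ℝ, g2 x = 0 := by
    rw [← intervalIntegral.integral_Iic_add_Ioi hint_g2.integrableOn hint_g2.integrableOn, hIoi2, hIic2]
    ring
  -- pointwise identity
  have hsumC : ((ss:ℝ):ℂ)^2 + ((tt:ℝ):ℂ)^2 = ((r:ℝ):ℂ) := by exact_mod_cast hsum
  have hPI : ∀ x : ℝ, ((r:ℝ):ℂ) * Complex.exp (-(G x)^2)
      = ((ss:ℝ):ℂ) * g1 x + ((tt:ℝ):ℂ)*Complex.I*Complex.exp ((r:ℝ):ℂ) * g2 x := by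
    intro x
    have hZC : ((Z x:ℝ):ℂ)^2 = (x:ℂ)^2 + 1 := by exact_mod_cast hZsq x
    have hDG : (D x)^2 - (G x)^2 = ((r:ℝ):ℂ) := by
      rw [hGdef, hDdef]
      push_cast
      linear_combination (((tt:ℝ):ℂ)^2*(x:ℂ)^2 - ((tt:ℝ):ℂ)^2*((Z x:ℝ):ℂ)^2) * Complex.I_sq
        + (((ss:ℝ):ℂ)^2+((tt:ℝ):ℂ)^2) * hZC + hsumC
    have hexp : Complex.exp ((r:ℝ):ℂ) * Complex.exp (-(D x)^2) = Complex.exp (-(G x)^2) := by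
      rw [← Complex.exp_add]
      congr 1
      linear_combination -hDG
    have hcomb : ((ss:ℝ):ℂ) * G' x + ((tt:ℝ):ℂ)*Complex.I*(D' x) = ((r:ℝ):ℂ) := by
      rw [hG'def, hD'def]
      push_cast
      linear_combination (-((tt:ℝ):ℂ)^2) * Complex.I_sq + hsumC
    rw [hg1def, hg2def]
    simp only []
    linear_combination (-(Complex.exp (-(G x)^2))) * hcomb - ((tt:ℝ):ℂ)*Complex.I*(D' x) * hexp
  -- value of the complex integral
  have hintC : ∫ x : ℝ, Complex.exp (-(G x)^2) = ((Real.sqrt π * ss / r:ℝ):ℂ) := by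
    have h3 : ∫ x : ℝ, ((r:ℝ):ℂ) * Complex.exp (-(G x)^2)
        = ∫ x : ℝ, (((ss:ℝ):ℂ) * g1 x + (((tt:ℝ):ℂ)*Complex.I*Complex.exp ((r:ℝ):ℂ)) * g2 x) := by
      apply integral_congr_ae
      filter_upwards with x
      rw [hPI x]
    rw [MeasureTheory.integral_const_mul] at h3
    rw [integral_add (hint_g1.const_mul _) (hint_g2.const_mul _),
      MeasureTheory.integral_const_mul, MeasureTheory.integral_const_mul, hItot1, hItot2] at h3
    have h4 : ((Real.sqrt π * ss / r:ℝ):ℂ) = (((ss:ℝ):ℂ) * ((Real.sqrt π:ℝ):ℂ))/((r:ℝ):ℂ) := by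
      push_cast
      ring
    rw [h4, eq_div_iff hrC]
    rw [mul_comm] at h3
    rw [h3]
    ring
  have hψint : ∫ x : ℝ, (Complex.exp (-(G x)^2)).re = Real.sqrt π * ss / r := by
    have h := integral_re hint_cexpG
    simp only [RCLike.re_to_complex] at h
    rw [h, hintC, Complex.ofReal_re]
  -- back to the real integrand
  have hφeq : ∀ x : ℝ, Real.cos (b*x*Z x) * Real.exp (-a*x^2)
      = Real.exp (-((r-a)/2)) * (Complex.exp (-(G x)^2)).re := by
    intro x
    rw [hGsq x, Complex.exp_re, ofReal_add_mul_I_re, ofReal_add_mul_I_im,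
      ← mul_assoc, ← Real.exp_add,
      show -((r-a)/2) + ((r-a)/2 - a*x^2) = -a*x^2 by ring]
    ring
  have hcoscont : Continuous (fun x : ℝ => Real.cos (b*x*Z x)) :=
    Real.continuous_cos.comp ((continuous_const.mul continuous_id).mul hZcont)
  have hexpcont : Continuous (fun x : ℝ => Real.exp (-a*x^2)) :=
    Real.continuous_exp.comp (continuous_const.mul (continuous_pow 2))
  have hφint : Integrable (fun x : ℝ => Real.cos (b*x*Z x) * Real.exp (-a*x^2)) := by
    apply Integrable.mono' hint_exp ((hcoscont.mul hexpcont).aestronglyMeasurable)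
    filter_upwards with x
    rw [Real.norm_eq_abs, Pi.mul_apply, abs_mul, abs_of_pos (Real.exp_pos _)]
    have h1 : |Real.cos (b*x*Z x)| ≤ 1 := Real.abs_cos_le_one _
    nlinarith only [h1, Real.exp_pos (-a*x^2), abs_nonneg (Real.cos (b*x*Z x))]
  have hIic : ∫ x in Iic (0:ℝ), Real.cos (b*x*Z x)*Real.exp (-a*x^2)
      = ∫ x in Ioi (0:ℝ), Real.cos (b*x*Z x)*Real.exp (-a*x^2) := by
    have hneg := integral_comp_neg_Ioi (0:ℝ)
      (fun x => Real.cos (b*x*Z x)*Real.exp (-a*x^2))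
    rw [neg_zero] at hneg
    rw [← hneg]
    apply setIntegral_congr_fun measurableSet_Ioi
    intro x _
    simp only [hZeven, mul_neg, neg_mul, neg_neg, Real.cos_neg, neg_sq]
  have hsplit := intervalIntegral.integral_Iic_add_Ioi (b := (0:ℝ)) hφint.integrableOn hφint.integrableOn
  rw [hIic] at hsplit
  have hgoal1 : (∫ x in Set.Ioi (0:ℝ), Real.cos (b*x*Real.sqrt (x^2+1)) * Real.exp (-a*x^2))
      = 2⁻¹ * ∫ x : ℝ, Real.cos (b*x*Z x)*Real.exp (-a*x^2) := by
    have he : (∫ x in Set.Ioi (0:ℝ), Real.cos (b*x*Real.sqrt (x^2+1)) * Real.exp (-a*x^2))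
        = ∫ x in Ioi (0:ℝ), Real.cos (b*x*Z x)*Real.exp (-a*x^2) := rfl
    rw [he]
    linarith only [hsplit]
  rw [hgoal1]
  have hgoal2 : ∫ x : ℝ, Real.cos (b*x*Z x)*Real.exp (-a*x^2)
      = Real.exp (-((r-a)/2)) * (Real.sqrt π * ss / r) := by
    simp_rw [hφeq]
    rw [MeasureTheory.integral_const_mul, hψint]
  rw [hgoal2]
  have hss_eq : Real.sqrt π * ss = Real.sqrt (π/2) * Real.sqrt (r+a) := by
    rw [hssdef, ← Real.sqrt_mul pi_nonneg, ← Real.sqrt_mul (by positivity : (0:ℝ) ≤ π/2)]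
    congr 1
    ring
  rw [show -((r-a)/2) = (a-r)/2 by ring,
    show Real.sqrt (π/2)/2*Real.sqrt (r+a)/r*Real.exp ((a-r)/2)
      = 2⁻¹ * (Real.exp ((a-r)/2) * ((Real.sqrt (π/2)*Real.sqrt (r+a))/r)) by ring,
    ← hss_eq]

theorem stmt0 (a b : ℝ) (ha : 0 < a) :
    ∫ x in Set.Ioi (0:ℝ), Real.cos (b * x * Real.sqrt (x^2 + 1)) * Real.exp (-a * x^2)
      = Real.sqrt (π / 2) / 2 * Real.sqrt (Real.sqrt (a^2 + b^2) + a) / Real.sqrt (a^2 + b^2)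
        * Real.exp ((a - Real.sqrt (a^2 + b^2)) / 2) := by
  rcases le_or_gt 0 b with hb | hb
  · exact key a b ha hb
  · have h := key a (-b) ha (by linarith)
    rw [neg_sq] at h
    have hc : ∀ x : ℝ, Real.cos (-b*x*Real.sqrt (x^2+1)) = Real.cos (b*x*Real.sqrt (x^2+1)) := by
      intro x
      rw [neg_mul, neg_mul, Real.cos_neg]
    simp_rw [hc] at h
    exact h
end

section
/- The integral of cos(4x·√(x²+1))·e^{-3x²} over x from 0 to ∞ equals √π/(5e). -/
open Real MeasureTheory intervalIntegral Set Complex Filter Topology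

noncomputable def myE (z : ℂ) : ℂ := ∫ t in (0:ℝ)..1, z * Complex.exp (-((t:ℂ) * z)^2)

lemma myF'_deriv (t : ℝ) (x : ℂ) :
    HasDerivAt (fun z : ℂ => z * Complex.exp (-((t:ℂ) * z)^2))
      ((1 - 2*((t:ℂ)*x)^2) * Complex.exp (-((t:ℂ)*x)^2)) x := by
  have h1 : HasDerivAt (fun z : ℂ => -((t:ℂ) * z)^2) (-(2 * ((t:ℂ) * x)^(2-1) * ((t:ℂ)*1))) x :=
    (((hasDerivAt_id x).const_mul (t:ℂ)).pow 2).neg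
  have h3 := (hasDerivAt_id x).mul h1.cexp
  simp only [id] at h3
  refine HasDerivAt.congr_deriv h3 ?_
  ring

-- t-derivative of t ↦ t * exp(-(t z)^2), needed to evaluate ∫₀¹ F' z t dt
lemma myG_deriv (z : ℂ) (t : ℝ) :
    HasDerivAt (fun s : ℝ => (s:ℂ) * Complex.exp (-((s:ℂ) * z)^2))
      ((1 - 2*((t:ℂ)*z)^2) * Complex.exp (-((t:ℂ)*z)^2)) t := by
  have h : HasDerivAt (fun u : ℂ => u * Complex.exp (-(u * z)^2))
      ((1 - 2*(((t:ℝ):ℂ)*z)^2) * Complex.exp (-(((t:ℝ):ℂ)*z)^2)) ((t:ℝ):ℂ) := by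
    have h1 : HasDerivAt (fun u : ℂ => -(u * z)^2) (-(2 * (((t:ℝ):ℂ) * z)^(2-1) * (1*z))) ((t:ℝ):ℂ) :=
      (((hasDerivAt_id ((t:ℝ):ℂ)).mul_const z).pow 2).neg
    have h3 := (hasDerivAt_id ((t:ℝ):ℂ)).mul h1.cexp
    simp only [id] at h3
    refine HasDerivAt.congr_deriv h3 ?_
    ring
  exact h.comp_ofReal

lemma myE_hasDerivAt (z₀ : ℂ) : HasDerivAt myE (Complex.exp (-z₀^2)) z₀ := by
  have hR : (0:ℝ) < ‖z₀‖ + 1 := by positivity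
  set R : ℝ := ‖z₀‖ + 1 with hRdef
  have cont : ∀ z : ℂ, Continuous fun t : ℝ => z * Complex.exp (-((t:ℂ) * z)^2) := by
    intro z; fun_prop
  have cont' : ∀ z : ℂ, Continuous fun t : ℝ => (1 - 2*((t:ℂ)*z)^2) * Complex.exp (-((t:ℂ)*z)^2) := by
    intro z; fun_prop
  have key := intervalIntegral.hasDerivAt_integral_of_dominated_loc_of_deriv_le
    (F := fun (z : ℂ) (t : ℝ) => z * Complex.exp (-((t:ℂ) * z)^2))
    (F' := fun (z : ℂ) (t : ℝ) => (1 - 2*((t:ℂ)*z)^2) * Complex.exp (-((t:ℂ)*z)^2))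
    (x₀ := z₀) (a := (0:ℝ)) (b := 1) (μ := volume)
    (bound := fun _ => (1 + 2*R^2) * Real.exp (R^2))
    (Metric.ball_mem_nhds z₀ one_pos)
    (Filter.Eventually.of_forall fun z => (cont z).aestronglyMeasurable)
    ((cont z₀).intervalIntegrable _ _)
    ((cont' z₀).aestronglyMeasurable)
    ?_
    (intervalIntegrable_const)
    ?_
  · have hval : (∫ t in (0:ℝ)..1, (1 - 2*((t:ℂ)*z₀)^2) * Complex.exp (-((t:ℂ)*z₀)^2))
        = Complex.exp (-z₀^2) := by
      have := intervalIntegral.integral_eq_sub_of_hasDerivAt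
        (f := fun s : ℝ => (s:ℂ) * Complex.exp (-((s:ℂ) * z₀)^2))
        (fun t _ => myG_deriv z₀ t) ((cont' z₀).intervalIntegrable 0 1)
      rw [this]
      norm_num
    rw [hval] at key
    exact key.2
  · -- bound
    refine Filter.Eventually.of_forall fun t ht => fun x hx => ?_
    have hx' : ‖x‖ ≤ R := by
      have := norm_sub_norm_le x z₀
      have hd : ‖x - z₀‖ < 1 := by simpa [Metric.mem_ball, dist_eq_norm] using hx
      simp only [hRdef]; linarith
    have ht' : |t| ≤ 1 := by
      rcases Set.mem_uIoc.1 ht with h | h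
      · rw [abs_le]; constructor <;> [linarith [h.1]; linarith [h.2]]
      · rw [abs_le]; constructor <;> linarith [h.1, h.2]
    have htx : ‖(t:ℂ) * x‖ ≤ R := by
      rw [norm_mul, Complex.norm_real]
      calc |t| * ‖x‖ ≤ 1 * R := by
            apply mul_le_mul ht' hx' (norm_nonneg _) zero_le_one
        _ = R := one_mul R
    rw [norm_mul]
    have h1 : ‖(1 : ℂ) - 2*((t:ℂ)*x)^2‖ ≤ 1 + 2*R^2 := by
      calc ‖(1 : ℂ) - 2*((t:ℂ)*x)^2‖ ≤ ‖(1:ℂ)‖ + ‖2*((t:ℂ)*x)^2‖ := norm_sub_le _ _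
        _ ≤ 1 + 2*R^2 := by
            rw [norm_mul, norm_pow]
            simp only [Complex.norm_ofNat, norm_one]
            have := pow_le_pow_left₀ (norm_nonneg _) htx 2
            nlinarith
    have h2 : ‖Complex.exp (-((t:ℂ)*x)^2)‖ ≤ Real.exp (R^2) := by
      rw [Complex.norm_exp]
      apply Real.exp_le_exp.2
      have := Complex.abs_re_le_norm ((-((t:ℂ)*x)^2))
      have habs : ‖(-((t:ℂ)*x)^2)‖ ≤ R^2 := by
        rw [norm_neg, norm_pow]
        exact pow_le_pow_left₀ (by positivity) (by simpa using htx) 2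
      have := Complex.re_le_norm (-((t:ℂ)*x)^2)
      linarith
    exact mul_le_mul h1 h2 (norm_nonneg _) (by positivity)
  · exact Filter.Eventually.of_forall fun t _ x _ => myF'_deriv t x

lemma myE_comp {γ : ℝ → ℂ} {γ' : ℂ} {x : ℝ} (h : HasDerivAt γ γ' x) :
    HasDerivAt (fun x => myE (γ x)) (Complex.exp (-(γ x)^2) * γ') x := by
  have := HasDerivAt.scomp (𝕜 := ℝ) (𝕜' := ℂ) x (myE_hasDerivAt (γ x)) h
  simpa [smul_eq_mul, mul_comm, Function.comp_def] using this

lemma myE_sub (a b : ℂ) :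
    myE b - myE a = ∫ t in (0:ℝ)..1, (b - a) * Complex.exp (-(a + (t:ℂ)*(b-a))^2) := by
  have hγ : ∀ t : ℝ, HasDerivAt (fun t : ℝ => a + (t:ℂ)*(b-a)) (b-a) t := by
    intro t
    have h0 : HasDerivAt (fun t : ℝ => ((t:ℝ):ℂ)) 1 t := Complex.ofRealCLM.hasDerivAt
    simpa using (h0.mul_const (b-a)).const_add a
  have key := intervalIntegral.integral_eq_sub_of_hasDerivAt
    (a := (0:ℝ)) (b := (1:ℝ))
    (f := fun t : ℝ => myE (a + (t:ℂ)*(b-a)))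
    (f' := fun t : ℝ => Complex.exp (-(a + (t:ℂ)*(b-a))^2) * (b - a))
    (fun t _ => myE_comp (hγ t))
    (by apply Continuous.intervalIntegrable; fun_prop)
  simp only [Complex.ofReal_one, Complex.ofReal_zero, one_mul, zero_mul, add_zero] at key
  rw [show a + (b - a) = b by ring] at key
  rw [← key]
  congr 1
  ext t
  ring

lemma myE_sub_norm_le (a b : ℂ) (C : ℝ) (hC0 : 0 ≤ C)
    (hC : ∀ t ∈ Set.Icc (0:ℝ) 1, ‖Complex.exp (-(a + (t:ℂ)*(b-a))^2)‖ ≤ C) :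
    ‖myE b - myE a‖ ≤ ‖b - a‖ * C := by
  rw [myE_sub]
  have h := intervalIntegral.norm_integral_le_of_norm_le_const
    (f := fun t : ℝ => (b - a) * Complex.exp (-(a + (t:ℂ)*(b-a))^2))
    (C := ‖b - a‖ * C) (a := (0:ℝ)) (b := 1) ?_
  · simpa using h
  · intro t ht
    have ht' : t ∈ Set.Icc (0:ℝ) 1 := by
      rcases Set.mem_uIoc.1 ht with h | h
      · exact ⟨le_of_lt h.1, h.2⟩
      · constructor <;> linarith [h.1, h.2]
    rw [norm_mul]
    exact mul_le_mul_of_nonneg_left (hC t ht') (norm_nonneg _)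

lemma myE_real (r : ℝ) : myE (r:ℂ) = ∫ s in (0:ℝ)..r, Complex.exp (-((s:ℂ))^2) := by
  rcases eq_or_ne r 0 with rfl | hr
  · simp [myE]
  · have h2 := intervalIntegral.integral_comp_mul_right
      (f := fun s : ℝ => Complex.exp (-((s:ℂ))^2)) (a := (0:ℝ)) (b := (1:ℝ)) hr
    rw [zero_mul, one_mul] at h2
    have h3 : myE (r:ℂ) = (r:ℂ) * ∫ t in (0:ℝ)..1, Complex.exp (-((↑(t * r) : ℂ))^2) := by
      unfold myE
      rw [← intervalIntegral.integral_const_mul]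
      congr 1
      ext t
      push_cast
      ring_nf
    rw [h3, h2, ← Complex.real_smul, smul_smul, mul_inv_cancel₀ hr, one_smul]

lemma integral_cexp_gauss_Ioi : ∫ s in Set.Ioi (0:ℝ), Complex.exp (-((s:ℂ))^2)
    = ((Real.sqrt π / 2 : ℝ) : ℂ) := by
  have h : ∀ s : ℝ, Complex.exp (-((s:ℂ))^2) = ((Real.exp (-1 * s^2) : ℝ) : ℂ) := by
    intro s
    have harg : (-((s:ℂ))^2) = ((-1 * s^2 : ℝ) : ℂ) := by push_cast; ring
    rw [harg, ← Complex.ofReal_exp]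
  simp_rw [h]
  have hg : Integrable (fun s : ℝ => rexp (-1*s^2)) (volume.restrict (Set.Ioi 0)) :=
    (integrable_exp_neg_mul_sq one_pos).restrict
  have hcomm := Complex.ofRealCLM.integral_comp_comm hg
  simp only [Complex.ofRealCLM_apply] at hcomm
  rw [hcomm, integral_gaussian_Ioi]
  norm_num

lemma integrable_cexp_gauss : IntegrableOn (fun s : ℝ => Complex.exp (-((s:ℂ))^2)) (Set.Ioi 0) := by
  have h : ∀ s : ℝ, Complex.exp (-((s:ℂ))^2) = ((Real.exp (-1 * s^2) : ℝ) : ℂ) := by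
    intro s
    have harg : (-((s:ℂ))^2) = ((-1 * s^2 : ℝ) : ℂ) := by push_cast; ring
    rw [harg, ← Complex.ofReal_exp]
  simp_rw [h]
  apply Integrable.integrableOn
  exact (integrable_exp_neg_mul_sq one_pos).ofReal

lemma tendsto_myE_real : Tendsto (fun r : ℝ => myE (r:ℂ)) atTop
    (𝓝 ((Real.sqrt π / 2 : ℝ) : ℂ)) := by
  have h := intervalIntegral_tendsto_integral_Ioi 0 integrable_cexp_gauss tendsto_id
  rw [integral_cexp_gauss_Ioi] at h
  simpa only [myE_real, id] using h

noncomputable def ss (x : ℝ) : ℝ := Real.sqrt (x^2 + 1)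

lemma ss_pos (x : ℝ) : 0 < ss x := Real.sqrt_pos.2 (by positivity)

lemma ss_sq (x : ℝ) : ss x ^ 2 = x^2 + 1 := Real.sq_sqrt (by positivity)

lemma ss_le (x : ℝ) (hx : 0 ≤ x) : ss x ≤ x + 1 := by
  rw [ss, show x^2+1 = (x+1)^2 - 2*x by ring]
  calc Real.sqrt ((x+1)^2 - 2*x) ≤ Real.sqrt ((x+1)^2) :=
        Real.sqrt_le_sqrt (by nlinarith)
    _ = x + 1 := Real.sqrt_sq (by linarith)

lemma le_ss (x : ℝ) : x ≤ ss x := by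
  rcases le_or_gt x 0 with h | h
  · exact le_trans h (ss_pos x).le
  · calc x = Real.sqrt (x^2) := (Real.sqrt_sq h.le).symm
      _ ≤ ss x := Real.sqrt_le_sqrt (by linarith)

noncomputable def cv (x : ℝ) : ℂ := ((2*x : ℝ) : ℂ) + ((ss x : ℝ) : ℂ) * Complex.I

noncomputable def cw (x : ℝ) : ℂ := ((2 * ss x : ℝ) : ℂ) - ((x : ℝ) : ℂ) * Complex.I

lemma aux_tendsto_zero : Tendsto (fun x : ℝ => Real.exp 1 * ((x+1) * Real.exp (-x)))
    atTop (𝓝 0) := by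
  have h1 : Tendsto (fun x : ℝ => (x+1) * Real.exp (-x)) atTop (𝓝 0) := by
    have ha := Real.tendsto_pow_mul_exp_neg_atTop_nhds_zero 1
    have hb : Tendsto (fun x : ℝ => Real.exp (-x)) atTop (𝓝 0) := by
      simpa using Real.tendsto_exp_comp_nhds_zero.2 tendsto_neg_atTop_atBot
    have := ha.add hb
    simp only [add_zero] at this
    apply this.congr
    intro x; ring
  simpa using h1.const_mul (Real.exp 1)

lemma tail_v : Tendsto (fun x : ℝ => myE (cv x)) atTop (𝓝 ((Real.sqrt π / 2 : ℝ) : ℂ)) := by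
  have hdiff : Tendsto (fun x : ℝ => myE (cv x) - myE ((2*x : ℝ) : ℂ)) atTop (𝓝 0) := by
    apply squeeze_zero_norm' ?_ aux_tendsto_zero
    filter_upwards [eventually_ge_atTop (1:ℝ)] with x hx
    have hsub : cv x - ((2*x:ℝ):ℂ) = ((ss x : ℝ):ℂ) * Complex.I := by
      rw [cv]; ring
    have step := myE_sub_norm_le ((2*x:ℝ):ℂ) (cv x) (Real.exp (1 - 3*x^2)) (by positivity) ?_
    · refine le_trans step ?_
      rw [hsub, norm_mul, Complex.norm_I, mul_one, Complex.norm_real,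
        Real.norm_eq_abs, abs_of_pos (ss_pos x)]
      have h1 : ss x ≤ x + 1 := ss_le x (by linarith)
      have h2 : Real.exp (1 - 3*x^2) ≤ Real.exp 1 * Real.exp (-x) := by
        rw [← Real.exp_add]
        apply Real.exp_le_exp.2
        nlinarith
      calc ss x * Real.exp (1 - 3*x^2) ≤ (x+1) * (Real.exp 1 * Real.exp (-x)) := by
            apply mul_le_mul h1 h2 (by positivity) (by linarith)
        _ = Real.exp 1 * ((x+1) * Real.exp (-x)) := by ring
    · intro t ht
      rw [hsub]
      set p : ℂ := ((2*x:ℝ):ℂ) + (t:ℂ) * (((ss x : ℝ):ℂ) * Complex.I) with hp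
      have hre : (-(p^2)).re = -((2*x)^2 - (t * ss x)^2) := by
        simp only [hp, pow_two, Complex.neg_re, Complex.mul_re, Complex.add_re, Complex.add_im,
          Complex.mul_im, Complex.ofReal_re, Complex.ofReal_im, Complex.I_re, Complex.I_im]
        ring
      rw [Complex.norm_exp, hre]
      apply Real.exp_le_exp.2
      have hss := ss_sq x
      have ht0 := ht.1
      have ht1 := ht.2
      have htsq : t^2 ≤ 1 := by nlinarith
      have key : (t * ss x)^2 ≤ x^2 + 1 := by
        rw [mul_pow]
        calc t^2 * ss x^2 ≤ 1 * ss x^2 := by nlinarith [sq_nonneg (ss x)]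
          _ = x^2 + 1 := by rw [one_mul, hss]
      linarith
  have hmain : Tendsto (fun x : ℝ => myE ((2*x : ℝ) : ℂ)) atTop
      (𝓝 ((Real.sqrt π / 2 : ℝ) : ℂ)) := by
    apply tendsto_myE_real.comp
    exact Tendsto.const_mul_atTop two_pos tendsto_id
  have := hdiff.add hmain
  simp only [zero_add] at this
  apply this.congr
  intro x; ring

lemma tail_w : Tendsto (fun x : ℝ => myE (cw x)) atTop (𝓝 ((Real.sqrt π / 2 : ℝ) : ℂ)) := by
  have hdiff : Tendsto (fun x : ℝ => myE (cw x) - myE ((2 * ss x : ℝ) : ℂ)) atTop (𝓝 0) := by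
    apply squeeze_zero_norm' ?_ aux_tendsto_zero
    filter_upwards [eventually_ge_atTop (1:ℝ)] with x hx
    have hsub : cw x - ((2 * ss x:ℝ):ℂ) = -(((x : ℝ):ℂ) * Complex.I) := by
      rw [cw]; ring
    have step := myE_sub_norm_le ((2*ss x:ℝ):ℂ) (cw x) (Real.exp (-(3*x^2+4))) (by positivity) ?_
    · refine le_trans step ?_
      rw [hsub, norm_neg, norm_mul, Complex.norm_I, mul_one, Complex.norm_real,
        Real.norm_eq_abs, abs_of_pos (by linarith : (0:ℝ) < x)]
      have h2 : Real.exp (-(3*x^2+4)) ≤ Real.exp 1 * Real.exp (-x) := by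
        rw [← Real.exp_add]
        apply Real.exp_le_exp.2
        nlinarith
      calc x * Real.exp (-(3*x^2+4)) ≤ (x+1) * (Real.exp 1 * Real.exp (-x)) := by
            apply mul_le_mul (by linarith) h2 (by positivity) (by linarith)
        _ = Real.exp 1 * ((x+1) * Real.exp (-x)) := by ring
    · intro t ht
      rw [hsub]
      set p : ℂ := ((2*ss x:ℝ):ℂ) + (t:ℂ) * (-(((x : ℝ):ℂ) * Complex.I)) with hp
      have hre : (-(p^2)).re = -((2*ss x)^2 - (t * x)^2) := by
        simp only [hp, pow_two, Complex.neg_re, Complex.neg_im, Complex.mul_re, Complex.add_re,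
          Complex.add_im, Complex.mul_im, Complex.ofReal_re, Complex.ofReal_im, Complex.I_re,
          Complex.I_im]
        ring
      rw [Complex.norm_exp, hre]
      apply Real.exp_le_exp.2
      have hss := ss_sq x
      have ht0 := ht.1
      have ht1 := ht.2
      have htsq : t^2 ≤ 1 := by nlinarith
      have key : (t * x)^2 ≤ x^2 := by
        rw [mul_pow]
        nlinarith [sq_nonneg x]
      have h4 : (2 * ss x)^2 = 4*x^2 + 4 := by
        rw [mul_pow, hss]; ring
      linarith
  have hmain : Tendsto (fun x : ℝ => myE ((2 * ss x : ℝ) : ℂ)) atTop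
      (𝓝 ((Real.sqrt π / 2 : ℝ) : ℂ)) := by
    apply tendsto_myE_real.comp
    apply tendsto_atTop_mono (fun x => ?_) tendsto_id
    have := le_ss x
    have := ss_pos x
    simp only [id]
    linarith
  have := hdiff.add hmain
  simp only [zero_add] at this
  apply this.congr
  intro x; ring

lemma cv_zero : cv 0 = Complex.I := by
  simp [cv, ss]

lemma cw_zero : cw 0 = ((2:ℝ):ℂ) := by
  simp [cw, ss]

lemma myE_I_re : (myE Complex.I).re = 0 := by
  have h : ∀ t : ℝ, Complex.I * Complex.exp (-((t:ℂ) * Complex.I)^2)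
      = Complex.I * ((Real.exp (t^2) : ℝ) : ℂ) := by
    intro t
    congr 1
    have harg : (-((t:ℂ) * Complex.I)^2) = ((t^2 : ℝ) : ℂ) := by
      push_cast
      rw [mul_pow, Complex.I_sq]
      ring
    rw [harg, ← Complex.ofReal_exp]
  unfold myE
  simp_rw [h]
  rw [intervalIntegral.integral_const_mul]
  have hInt : IntervalIntegrable (fun t : ℝ => Real.exp (t^2)) volume 0 1 := by
    apply Continuous.intervalIntegrable; fun_prop
  have hcomm := Complex.ofRealCLM.intervalIntegral_comp_comm hInt
  simp only [Complex.ofRealCLM_apply] at hcomm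
  rw [hcomm]
  simp

lemma myE_two_im : (myE ((2:ℝ):ℂ)).im = 0 := by
  rw [myE_real]
  have h : ∀ s : ℝ, Complex.exp (-((s:ℂ))^2) = ((Real.exp (-s^2) : ℝ) : ℂ) := by
    intro s
    have harg : (-((s:ℂ))^2) = ((-s^2 : ℝ) : ℂ) := by push_cast; ring
    rw [harg, ← Complex.ofReal_exp]
  simp_rw [h]
  have hInt : IntervalIntegrable (fun t : ℝ => Real.exp (-t^2)) volume 0 2 := by
    apply Continuous.intervalIntegrable; fun_prop
  have hcomm := Complex.ofRealCLM.intervalIntegral_comp_comm hInt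
  simp only [Complex.ofRealCLM_apply] at hcomm
  rw [hcomm]
  simp

lemma ss_hasDerivAt (x : ℝ) : HasDerivAt ss (x / ss x) x := by
  have h1 : HasDerivAt (fun x : ℝ => x^2 + 1) (2*x) x := by
    simpa using (hasDerivAt_pow 2 x).add_const 1
  have h2 := (Real.hasDerivAt_sqrt (show x^2+1 ≠ 0 by positivity)).comp x h1
  refine HasDerivAt.congr_deriv h2 ?_
  rw [ss]
  field_simp

noncomputable def phi (x : ℝ) : ℝ :=
  (2 * (Real.exp 1)⁻¹ * (myE (cv x)).re - Real.exp 4 * (myE (cw x)).im) / 5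

lemma phi_hasDerivAt (x : ℝ) :
    HasDerivAt phi (Real.cos (4 * x * Real.sqrt (x^2+1)) * Real.exp (-3 * x^2)) x := by
  have hssne : ss x ≠ 0 := (ss_pos x).ne'
  -- curve derivatives
  have hv' : HasDerivAt cv (((2:ℝ):ℂ) + ((x / ss x : ℝ):ℂ) * Complex.I) x := by
    have h1 : HasDerivAt (fun x : ℝ => ((2*x : ℝ):ℂ)) ((2:ℝ):ℂ) x := by
      apply HasDerivAt.ofReal_comp
      simpa using (hasDerivAt_id x).const_mul (2:ℝ)
    have h2 : HasDerivAt (fun x : ℝ => ((ss x : ℝ):ℂ) * Complex.I)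
        (((x / ss x : ℝ):ℂ) * Complex.I) x :=
      ((ss_hasDerivAt x).ofReal_comp).mul_const Complex.I
    exact h1.add h2
  have hw' : HasDerivAt cw (((2*(x / ss x) : ℝ):ℂ) - Complex.I) x := by
    have h1 : HasDerivAt (fun x : ℝ => ((2 * ss x : ℝ):ℂ)) ((2*(x / ss x) : ℝ):ℂ) x := by
      apply HasDerivAt.ofReal_comp
      simpa using (ss_hasDerivAt x).const_mul (2:ℝ)
    have h2 : HasDerivAt (fun x : ℝ => ((x : ℝ):ℂ) * Complex.I) (Complex.I) x := by
      simpa using ((hasDerivAt_id x).ofReal_comp).mul_const Complex.I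
    exact h1.sub h2
  have hv := myE_comp hv'
  have hw := myE_comp hw'
  have hvre := Complex.reCLM.hasFDerivAt.comp_hasDerivAt x hv
  have hwim := Complex.imCLM.hasFDerivAt.comp_hasDerivAt x hw
  simp only [Function.comp_def, Complex.reCLM_apply, Complex.imCLM_apply] at hvre hwim
  have hphi := ((hvre.const_mul (2 * (Real.exp 1)⁻¹)).sub
    (hwim.const_mul (Real.exp 4))).div_const 5
  have hfun : (fun x => (2 * (Real.exp 1)⁻¹ * (myE (cv x)).re
      - Real.exp 4 * (myE (cw x)).im) / 5) = phi := rfl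
  change HasDerivAt phi _ x at hphi
  convert hphi using 1
  -- value computation
  have hrev : (-(cv x)^2).re = 1 - 3*x^2 := by
    have := ss_sq x
    simp only [cv, pow_two, Complex.neg_re, Complex.mul_re, Complex.add_re, Complex.add_im,
      Complex.mul_im, Complex.ofReal_re, Complex.ofReal_im, Complex.I_re, Complex.I_im]
    nlinarith
  have himv : (-(cv x)^2).im = -(4*x*ss x) := by
    simp only [cv, pow_two, Complex.neg_im, Complex.mul_im, Complex.add_re, Complex.add_im,
      Complex.mul_re, Complex.ofReal_re, Complex.ofReal_im, Complex.I_re, Complex.I_im]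
    ring
  have hrew : (-(cw x)^2).re = -(3*x^2 + 4) := by
    have := ss_sq x
    simp only [cw, pow_two, Complex.neg_re, Complex.sub_re, Complex.sub_im, Complex.mul_re,
      Complex.mul_im, Complex.ofReal_re, Complex.ofReal_im, Complex.I_re, Complex.I_im]
    nlinarith
  have himw : (-(cw x)^2).im = 4*x*ss x := by
    simp only [cw, pow_two, Complex.neg_im, Complex.sub_re, Complex.sub_im, Complex.mul_re,
      Complex.mul_im, Complex.ofReal_re, Complex.ofReal_im, Complex.I_re, Complex.I_im]
    ring
  rw [Complex.mul_re, Complex.mul_im, Complex.exp_re, Complex.exp_im, Complex.exp_re,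
    Complex.exp_im, hrev, himv, hrew, himw]
  simp only [Complex.add_re, Complex.add_im, Complex.sub_re, Complex.sub_im, Complex.mul_re,
    Complex.mul_im, Complex.ofReal_re, Complex.ofReal_im, Complex.I_re, Complex.I_im,
    Real.cos_neg, Real.sin_neg]
  have hss : Real.sqrt (x^2+1) = ss x := rfl
  rw [hss]
  rw [show (1 - 3*x^2) = 1 + (-3*x^2) by ring, Real.exp_add,
    show (-(3*x^2 + 4)) = (-3*x^2) + (-4) by ring, Real.exp_add]
  rw [Real.exp_neg]
  field_simp
  ring

theorem stmt1 :
    ∫ x in Set.Ioi (0:ℝ), Real.cos (4 * x * Real.sqrt (x^2 + 1)) * Real.exp (-3 * x^2)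
      = Real.sqrt π / (5 * Real.exp 1) := by
  have hint : IntegrableOn
      (fun x => Real.cos (4 * x * Real.sqrt (x^2 + 1)) * Real.exp (-3 * x^2))
      (Set.Ioi (0:ℝ)) := by
    have hg : IntegrableOn (fun x : ℝ => Real.exp (-3 * x^2)) (Set.Ioi 0) :=
      (integrable_exp_neg_mul_sq (by norm_num : (0:ℝ) < 3)).integrableOn
    apply hg.mono' ((Continuous.aestronglyMeasurable (by fun_prop)))
    filter_upwards with x
    rw [Real.norm_eq_abs, abs_mul, Real.abs_exp]
    calc |Real.cos (4 * x * Real.sqrt (x^2+1))| * Real.exp (-3*x^2)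
        ≤ 1 * Real.exp (-3*x^2) :=
          mul_le_mul_of_nonneg_right (Real.abs_cos_le_one _) (Real.exp_pos _).le
      _ = Real.exp (-3*x^2) := one_mul _
  have htend : Tendsto phi atTop (𝓝 (Real.sqrt π / (5 * Real.exp 1))) := by
    have hre : Tendsto (fun x : ℝ => (myE (cv x)).re) atTop (𝓝 (Real.sqrt π / 2)) := by
      have := (Complex.continuous_re.tendsto _).comp tail_v
      simpa [Function.comp_def] using this
    have him : Tendsto (fun x : ℝ => (myE (cw x)).im) atTop (𝓝 0) := by
      have := (Complex.continuous_im.tendsto _).comp tail_w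
      simpa [Function.comp_def] using this
    have := ((hre.const_mul (2 * (Real.exp 1)⁻¹)).sub (him.const_mul (Real.exp 4))).div_const 5
    convert this using 2
    · rfl
    rw [mul_zero, sub_zero]
    field_simp
  have key := MeasureTheory.integral_Ioi_of_hasDerivAt_of_tendsto' (a := (0:ℝ))
    (f := phi)
    (f' := fun x => Real.cos (4 * x * Real.sqrt (x^2 + 1)) * Real.exp (-3 * x^2))
    (fun x _ => phi_hasDerivAt x) hint htend
  rw [key]
  have hphi0 : phi 0 = 0 := by
    rw [phi, cv_zero, cw_zero, myE_I_re, myE_two_im]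
    ring
  rw [hphi0, sub_zero]
end

section
/- The integral of x²·cos(4x·√(x²+1))·e^{-3x²} over x from 0 to ∞ equals −9√π/(250e). -/
open Real MeasureTheory Set Filter Topology

noncomputable section

namespace SG

def σ (v : ℂ) : ℂ := Complex.exp (Complex.log (v ^ 2 + 5) * (1 / 2))

def Z (v : ℂ) : ℂ := (2 * v + Complex.I * σ v) / 5
def Zd (v : ℂ) : ℂ := (2 + Complex.I * (v / σ v)) / 5
def Zdd (v : ℂ) : ℂ := Complex.I / σ v ^ 3
def G (v : ℂ) : ℂ := Z v ^ 2 * Zd v * Complex.exp (-v ^ 2)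
def Gd (v : ℂ) : ℂ :=
  (2 * Z v * Zd v ^ 2 + Z v ^ 2 * Zdd v - Z v ^ 2 * Zd v * (2 * v)) * Complex.exp (-v ^ 2)

lemma exp_half_re_pos {W : ℂ} (hW : 0 < W.re) :
    0 < (Complex.exp (Complex.log W * (1 / 2))).re := by
  rw [Complex.exp_re]
  have him : (Complex.log W * (1 / 2)).im = W.arg / 2 := by
    simp [Complex.mul_im, Complex.log_im]
    ring
  have harg : |W.arg| < π / 2 :=
    Complex.abs_arg_lt_pi_div_two_iff.2 (Or.inl hW)
  have hc : 0 < Real.cos ((Complex.log W * (1 / 2)).im) := by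
    rw [him]
    apply Real.cos_pos_of_mem_Ioo
    constructor
    · nlinarith [abs_lt.1 harg, Real.pi_pos]
    · nlinarith [abs_lt.1 harg, Real.pi_pos]
  positivity

lemma sq_exp_half {W : ℂ} (hW : W ≠ 0) :
    (Complex.exp (Complex.log W * (1 / 2))) ^ 2 = W := by
  rw [sq, ← Complex.exp_add]
  rw [show Complex.log W * (1 / 2) + Complex.log W * (1 / 2) = Complex.log W by ring]
  exact Complex.exp_log hW

lemma exp_half_eq {W c : ℂ} (hW : 0 < W.re) (hc2 : c ^ 2 = W) (hcre : 0 < c.re) :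
    Complex.exp (Complex.log W * (1 / 2)) = c := by
  have hW0 : W ≠ 0 := fun h => by simp [h] at hW
  have h1 : (Complex.exp (Complex.log W * (1 / 2))) ^ 2 = c ^ 2 := by
    rw [sq_exp_half hW0, hc2]
  have h3 : (Complex.exp (Complex.log W * (1 / 2)) - c) *
      (Complex.exp (Complex.log W * (1 / 2)) + c) = 0 := by linear_combination h1
  rcases mul_eq_zero.1 h3 with h | h
  · exact sub_eq_zero.1 h
  · exfalso
    have hre := exp_half_re_pos hW
    have : (Complex.exp (Complex.log W * (1 / 2))).re = -c.re := by
      have := eq_neg_of_add_eq_zero_left h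
      rw [this, Complex.neg_re]
    linarith

lemma σ_sq {v : ℂ} (hv : 0 < (v ^ 2 + 5).re) : σ v ^ 2 = v ^ 2 + 5 :=
  sq_exp_half (fun h => by simp [h] at hv)

lemma σ_ne {v : ℂ} : σ v ≠ 0 := Complex.exp_ne_zero _

lemma σ_re_pos {v : ℂ} (hv : 0 < (v ^ 2 + 5).re) : 0 < (σ v).re := exp_half_re_pos hv

lemma σ_eq {v c : ℂ} (hv : 0 < (v ^ 2 + 5).re) (hc2 : c ^ 2 = v ^ 2 + 5)
    (hcre : 0 < c.re) : σ v = c := exp_half_eq hv hc2 hcre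

lemma hasDerivAt_σ {v : ℂ} (hv : 0 < (v ^ 2 + 5).re) :
    HasDerivAt σ (v / σ v) v := by
  have hsp : v ^ 2 + 5 ∈ Complex.slitPlane := Or.inl hv
  have h1 : HasDerivAt (fun v : ℂ => v ^ 2 + 5) (2 * v) v := by
    simpa using ((hasDerivAt_pow 2 v).add_const 5)
  have h2 : HasDerivAt (fun v : ℂ => Complex.log (v ^ 2 + 5))
      ((v ^ 2 + 5)⁻¹ * (2 * v)) v :=
    by have := (Complex.hasDerivAt_log hsp).comp v h1; exact this
  have h3 := ((h2.mul_const (1 / 2)).cexp)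
  refine h3.congr_deriv (Eq.symm ?_)
  have h4 : σ v ^ 2 = v ^ 2 + 5 := σ_sq hv
  have h5 : σ v ≠ 0 := σ_ne
  have h6 : (v ^ 2 + 5) ≠ 0 := fun h => by simp [h] at hv
  rw [show Complex.exp (Complex.log (v ^ 2 + 5) * (1 / 2)) = σ v from rfl]
  field_simp
  linear_combination (-v) * h4

lemma hasDerivAt_Z {v : ℂ} (hv : 0 < (v ^ 2 + 5).re) :
    HasDerivAt Z (Zd v) v := by
  have h1 : HasDerivAt (fun v : ℂ => 2 * v + Complex.I * σ v)
      (2 + Complex.I * (v / σ v)) v := by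
    have := ((hasDerivAt_id v).const_mul (2 : ℂ)).add
      (((hasDerivAt_σ hv).const_mul Complex.I))
    simpa [mul_comm, Pi.add_def] using this
  exact h1.div_const 5

lemma hasDerivAt_Zd {v : ℂ} (hv : 0 < (v ^ 2 + 5).re) :
    HasDerivAt Zd (Zdd v) v := by
  have hσ := hasDerivAt_σ hv
  have h5 : σ v ≠ 0 := σ_ne
  have h1 : HasDerivAt (fun v : ℂ => v / σ v)
      ((1 * σ v - v * (v / σ v)) / σ v ^ 2) v := (hasDerivAt_id v).div hσ h5
  have h2 := ((h1.const_mul Complex.I).const_add (2 : ℂ)).div_const (5 : ℂ)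
  refine h2.congr_deriv (Eq.symm ?_)
  have h4 : σ v ^ 2 = v ^ 2 + 5 := σ_sq hv
  rw [Zdd]
  field_simp
  ring_nf
  linear_combination (-1 : ℂ) * h4

lemma hasDerivAt_G {v : ℂ} (hv : 0 < (v ^ 2 + 5).re) :
    HasDerivAt G (Gd v) v := by
  have hZ := hasDerivAt_Z hv
  have hZd := hasDerivAt_Zd hv
  have hsq : HasDerivAt (fun v : ℂ => Z v ^ 2) (2 * Z v * Zd v) v := by
    simpa [mul_comm, mul_assoc, Pi.pow_def] using (hZ.pow 2)
  have hexp : HasDerivAt (fun v : ℂ => Complex.exp (-v ^ 2))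
      (-(2 * v) * Complex.exp (-v ^ 2)) v := by
    have h1 : HasDerivAt (fun v : ℂ => -v ^ 2) (-(2 * v)) v := by
      simpa [Pi.neg_def] using (hasDerivAt_pow 2 v).neg
    simpa [mul_comm] using h1.cexp
  have := (hsq.mul hZd).mul hexp
  refine this.congr_deriv (Eq.symm ?_)
  simp only [G, Gd, Pi.mul_apply]
  ring

def q (x : ℝ) : ℝ := Real.sqrt (x ^ 2 + 1)

lemma q_pos (x : ℝ) : 0 < q x := Real.sqrt_pos.2 (by positivity)

lemma q_sq (x : ℝ) : q x ^ 2 = x ^ 2 + 1 := Real.sq_sqrt (by positivity)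

lemma abs_le_q (x : ℝ) : |x| ≤ q x := by
  rw [← Real.sqrt_sq_eq_abs]
  exact Real.sqrt_le_sqrt (by nlinarith)

lemma one_le_q (x : ℝ) : 1 ≤ q x := by
  rw [show (1:ℝ) = Real.sqrt 1 by simp [Real.sqrt_one]]
  exact Real.sqrt_le_sqrt (by nlinarith)

lemma sq_div_q_le_one (x : ℝ) : |x / q x| ≤ 1 := by
  rw [abs_div, abs_of_pos (q_pos x), div_le_one (q_pos x)]
  exact abs_le_q x

lemma hasDerivAt_q (x : ℝ) : HasDerivAt q (x / q x) x := by
  have h1 : HasDerivAt (fun x : ℝ => x ^ 2 + 1) (2 * x) x := by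
    simpa using (hasDerivAt_pow 2 x).add_const 1
  have h2 := (Real.hasDerivAt_sqrt (by positivity : (x:ℝ) ^ 2 + 1 ≠ 0)).comp x h1
  refine h2.congr_deriv (Eq.symm ?_)
  have := q_pos x
  rw [show Real.sqrt (x ^ 2 + 1) = q x from rfl]
  field_simp

def η (θ x : ℝ) : ℂ := ((2 - θ) * x : ℝ) - ((1 - θ) * q x : ℝ) * Complex.I
def ηx (θ x : ℝ) : ℂ := ((2 - θ : ℝ) : ℂ) - (((1 - θ) * (x / q x) : ℝ) : ℂ) * Complex.I
def ηθ (x : ℝ) : ℂ := ((-x : ℝ) : ℂ) + ((q x : ℝ) : ℂ) * Complex.I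
def ηxθ (x : ℝ) : ℂ := -1 + ((x / q x : ℝ) : ℂ) * Complex.I
def F (θ x : ℝ) : ℂ := G (η θ x) * ηx θ x
def Fd (θ x : ℝ) : ℂ := Gd (η θ x) * ηθ x * ηx θ x + G (η θ x) * ηxθ x
def Ψ (θ : ℝ) : ℂ := ∫ x : ℝ, F θ x

@[simp] lemma η_re (θ x : ℝ) : (η θ x).re = (2 - θ) * x := by simp [η]
@[simp] lemma η_im (θ x : ℝ) : (η θ x).im = -((1 - θ) * q x) := by simp [η]

lemma hasDerivAt_η_θ (θ x : ℝ) : HasDerivAt (fun θ => η θ x) (ηθ x) θ := by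
  have h1 : HasDerivAt (fun θ : ℝ => (2 - θ) * x) (-x) θ := by
    simpa using ((hasDerivAt_id θ).const_sub 2).mul_const x
  have h2 : HasDerivAt (fun θ : ℝ => (1 - θ) * q x) (-(q x)) θ := by
    simpa using ((hasDerivAt_id θ).const_sub 1).mul_const (q x)
  have := (h1.ofReal_comp).sub ((h2.ofReal_comp).mul_const Complex.I)
  refine this.congr_deriv (Eq.symm ?_)
  simp [ηθ]

lemma hasDerivAt_ηx_θ (θ x : ℝ) : HasDerivAt (fun θ => ηx θ x) (ηxθ x) θ := by
  have h1 : HasDerivAt (fun θ : ℝ => (2 - θ)) (-1) θ := by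
    simpa using (hasDerivAt_id θ).const_sub 2
  have h2 : HasDerivAt (fun θ : ℝ => (1 - θ) * (x / q x)) (-(x / q x)) θ := by
    simpa using ((hasDerivAt_id θ).const_sub 1).mul_const (x / q x)
  have := (h1.ofReal_comp).sub ((h2.ofReal_comp).mul_const Complex.I)
  refine this.congr_deriv (Eq.symm ?_)
  simp [ηxθ]

lemma hasDerivAt_η_x (θ x : ℝ) : HasDerivAt (fun x => η θ x) (ηx θ x) x := by
  have h1 : HasDerivAt (fun x : ℝ => (2 - θ) * x) (2 - θ) x := by
    simpa using (hasDerivAt_id x).const_mul (2 - θ)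
  have h2 : HasDerivAt (fun x : ℝ => (1 - θ) * q x) ((1 - θ) * (x / q x)) x :=
    (hasDerivAt_q x).const_mul (1 - θ)
  exact (h1.ofReal_comp).sub ((h2.ofReal_comp).mul_const Complex.I)

lemma hasDerivAt_ηθ_x (x : ℝ) : HasDerivAt ηθ (ηxθ x) x := by
  have h1 : HasDerivAt (fun x : ℝ => -x) (-1) x := by
    simpa [Pi.neg_def] using (hasDerivAt_id x).neg
  have h2 := hasDerivAt_q x
  have := (h1.ofReal_comp).add ((h2.ofReal_comp).mul_const Complex.I)
  refine this.congr_deriv (Eq.symm ?_)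
  simp [ηxθ]

lemma normSq_η (θ x : ℝ) :
    Complex.normSq (η θ x) = (2 - θ) ^ 2 * x ^ 2 + (1 - θ) ^ 2 * (x ^ 2 + 1) := by
  rw [Complex.normSq_apply, η_re, η_im, ← q_sq x]
  ring

lemma re_η_sq (θ x : ℝ) :
    ((η θ x) ^ 2).re = (2 - θ) ^ 2 * x ^ 2 - (1 - θ) ^ 2 * (x ^ 2 + 1) := by
  rw [pow_two, Complex.mul_re, η_re, η_im, ← q_sq x]
  ring

variable {θ x : ℝ}

def Complex.abs : AbsoluteValue ℂ ℝ := NormedField.toAbsoluteValue ℂ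
lemma Complex.abs_apply' (z : ℂ) : Complex.abs z = ‖z‖ := rfl
lemma Complex.norm_eq_abs (z : ℂ) : ‖z‖ = Complex.abs z := rfl
lemma Complex.abs_I : Complex.abs Complex.I = 1 := by simp [Complex.abs_apply']
lemma Complex.abs_two : Complex.abs 2 = 2 := by simp [Complex.abs_apply']
lemma Complex.abs_ofNat (n : ℕ) [n.AtLeastTwo] :
    Complex.abs (no_index (OfNat.ofNat n : ℂ)) = OfNat.ofNat n := by simp [Complex.abs_apply']
lemma Complex.abs_ofReal (r : ℝ) : Complex.abs (r : ℂ) = |r| := by simp [Complex.abs_apply']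
lemma Complex.sq_abs (z : ℂ) : Complex.abs z ^ 2 = Complex.normSq z := by
  simp [Complex.abs_apply', Complex.sq_norm]
lemma Complex.abs_exp (z : ℂ) : Complex.abs (Complex.exp z) = Real.exp z.re := by
  simp [Complex.abs_apply', Complex.norm_exp]
lemma Complex.re_le_abs (z : ℂ) : z.re ≤ Complex.abs z := Complex.re_le_norm z

lemma coef_bounds (hθ1 : -(1/4) ≤ θ) (hθ2 : θ ≤ 5/4) :
    (2 - θ) ^ 2 ≤ 81/16 ∧ (1 - θ) ^ 2 ≤ 25/16 := by
  constructor <;> nlinarith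

lemma re_η_sq_ge (hθ1 : -(1/4) ≤ θ) (hθ2 : θ ≤ 5/4) :
    x ^ 2 / 2 - 2 ≤ ((η θ x) ^ 2).re := by
  rw [re_η_sq]
  nlinarith [sq_nonneg x, sq_nonneg (1 - θ), sq_nonneg (θ - 1), sq_nonneg (2 - θ)]

lemma dom_η (hθ1 : -(1/4) ≤ θ) (hθ2 : θ ≤ 5/4) :
    0 < ((η θ x) ^ 2 + 5).re := by
  have := re_η_sq_ge (x := x) hθ1 hθ2
  simp only [Complex.add_re]
  norm_num
  nlinarith [sq_nonneg x]

lemma normSq_η_le (hθ1 : -(1/4) ≤ θ) (hθ2 : θ ≤ 5/4) :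
    Complex.normSq (η θ x) ≤ 9 * (x ^ 2 + 1) := by
  obtain ⟨h1, h2⟩ := coef_bounds hθ1 hθ2
  have h3 := mul_le_mul_of_nonneg_right h1 (sq_nonneg x)
  have h4 := mul_le_mul_of_nonneg_right h2 (by positivity : (0:ℝ) ≤ x ^ 2 + 1)
  rw [normSq_η]
  nlinarith [sq_nonneg x]

lemma abs_η_le (hθ1 : -(1/4) ≤ θ) (hθ2 : θ ≤ 5/4) :
    Complex.abs (η θ x) ≤ 3 * q x := by
  apply le_of_pow_le_pow_left₀ two_ne_zero (by nlinarith [q_pos x] : (0:ℝ) ≤ 3 * q x)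
  rw [Complex.sq_abs, mul_pow, q_sq]
  have := normSq_η_le (x := x) hθ1 hθ2
  nlinarith

lemma abs_σ_sq (hθ1 : -(1/4) ≤ θ) (hθ2 : θ ≤ 5/4) :
    Complex.abs (σ (η θ x)) ^ 2 = Complex.abs ((η θ x) ^ 2 + 5) := by
  rw [← map_pow, σ_sq (dom_η hθ1 hθ2)]

lemma abs_σ_sq_ge (hθ1 : -(1/4) ≤ θ) (hθ2 : θ ≤ 5/4) :
    x ^ 2 / 2 + 3 ≤ Complex.abs (σ (η θ x)) ^ 2 := by
  rw [abs_σ_sq hθ1 hθ2]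
  have h1 := Complex.re_le_abs ((η θ x) ^ 2 + 5)
  have h2 := re_η_sq_ge (x := x) hθ1 hθ2
  simp only [Complex.add_re] at h1
  norm_num at h1
  linarith

lemma one_le_abs_σ (hθ1 : -(1/4) ≤ θ) (hθ2 : θ ≤ 5/4) :
    1 ≤ Complex.abs (σ (η θ x)) := by
  apply le_of_pow_le_pow_left₀ two_ne_zero (by positivity) (n := 2)
  have := abs_σ_sq_ge (x := x) hθ1 hθ2
  nlinarith [sq_nonneg x]

lemma abs_σ_le (hθ1 : -(1/4) ≤ θ) (hθ2 : θ ≤ 5/4) :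
    Complex.abs (σ (η θ x)) ≤ 4 * q x := by
  apply le_of_pow_le_pow_left₀ two_ne_zero (by nlinarith [q_pos x] : (0:ℝ) ≤ 4 * q x)
  rw [abs_σ_sq hθ1 hθ2]
  calc Complex.abs ((η θ x) ^ 2 + 5)
      ≤ Complex.abs (η θ x) ^ 2 + 5 := by
        have h9 := Complex.abs.add_le ((η θ x) ^ 2) 5
        rw [map_pow, show Complex.abs (5 : ℂ) = 5 by norm_num [Complex.abs_ofNat]] at h9
        exact h9
    _ ≤ (4 * q x) ^ 2 := by
        rw [Complex.sq_abs, mul_pow, q_sq]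
        have := normSq_η_le (x := x) hθ1 hθ2
        nlinarith [sq_nonneg x]

lemma abs_Z_le (hθ1 : -(1/4) ≤ θ) (hθ2 : θ ≤ 5/4) :
    Complex.abs (Z (η θ x)) ≤ 2 * q x := by
  rw [Z, map_div₀]
  have h2 := abs_η_le (x := x) hθ1 hθ2
  have h3 := abs_σ_le (x := x) hθ1 hθ2
  have h5 : Complex.abs (5 : ℂ) = 5 := by norm_num [Complex.abs_ofNat]
  rw [h5, div_le_iff₀ (by norm_num : (0:ℝ) < 5)]
  calc Complex.abs (2 * η θ x + Complex.I * σ (η θ x))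
      ≤ 2 * Complex.abs (η θ x) + Complex.abs (σ (η θ x)) := by
        simpa [map_mul, Complex.abs_two, Complex.abs_I] using
          Complex.abs.add_le (2 * η θ x) (Complex.I * σ (η θ x))
    _ ≤ 2 * (3 * q x) + 4 * q x := by linarith
    _ = 2 * q x * 5 := by ring

lemma abs_Zd_le (hθ1 : -(1/4) ≤ θ) (hθ2 : θ ≤ 5/4) :
    Complex.abs (Zd (η θ x)) ≤ 2 := by
  rw [Zd, map_div₀]
  have h5 : Complex.abs (5 : ℂ) = 5 := by norm_num [Complex.abs_ofNat]
  rw [h5, div_le_iff₀ (by norm_num)]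
  have hσpos : (0:ℝ) < Complex.abs (σ (η θ x)) :=
    lt_of_lt_of_le zero_lt_one (one_le_abs_σ hθ1 hθ2)
  have hq : Complex.abs (η θ x / σ (η θ x)) ≤ 5 := by
    rw [map_div₀, div_le_iff₀ hσpos]
    apply le_of_pow_le_pow_left₀ two_ne_zero (by positivity)
    rw [mul_pow, Complex.sq_abs]
    have h6 := abs_σ_sq_ge (x := x) hθ1 hθ2
    have h7 := normSq_η_le (x := x) hθ1 hθ2
    nlinarith [sq_nonneg x]
  calc Complex.abs (2 + Complex.I * (η θ x / σ (η θ x)))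
      ≤ 2 + Complex.abs (η θ x / σ (η θ x)) := by
        simpa [map_mul, Complex.abs_two, Complex.abs_I] using
          Complex.abs.add_le 2 (Complex.I * (η θ x / σ (η θ x)))
    _ ≤ 2 + 5 := by linarith
    _ ≤ 2 * 5 := by norm_num

lemma abs_Zdd_le (hθ1 : -(1/4) ≤ θ) (hθ2 : θ ≤ 5/4) :
    Complex.abs (Zdd (η θ x)) ≤ 1 := by
  rw [Zdd, map_div₀, Complex.abs_I, map_pow]
  have h1 := one_le_abs_σ (x := x) hθ1 hθ2
  rw [div_le_one (by positivity)]
  calc (1:ℝ) = 1 ^ 3 := by norm_num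
    _ ≤ Complex.abs (σ (η θ x)) ^ 3 := by
        apply pow_le_pow_left₀ (by norm_num) h1

lemma abs_exp_le (hθ1 : -(1/4) ≤ θ) (hθ2 : θ ≤ 5/4) :
    Complex.abs (Complex.exp (-(η θ x) ^ 2)) ≤ Real.exp 2 * Real.exp (-(x ^ 2 / 2)) := by
  rw [Complex.abs_exp, ← Real.exp_add]
  apply Real.exp_le_exp.2
  have := re_η_sq_ge (x := x) hθ1 hθ2
  simp only [Complex.neg_re]
  linarith

lemma abs_ηx_le (hθ1 : -(1/4) ≤ θ) (hθ2 : θ ≤ 5/4) :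
    Complex.abs (ηx θ x) ≤ 4 := by
  rw [ηx]
  have h1 : Complex.abs (((2 - θ : ℝ) : ℂ) - (((1 - θ) * (x / q x) : ℝ) : ℂ) * Complex.I)
      ≤ |2 - θ| + |(1 - θ) * (x / q x)| := by
    refine (Complex.abs.sub_le_add _ _).trans ?_
    rw [map_mul, Complex.abs_I, mul_one, Complex.abs_ofReal, Complex.abs_ofReal]
  refine h1.trans ?_
  have h2 := sq_div_q_le_one x
  rw [abs_mul]
  have h4 : |2 - θ| ≤ 9/4 := by rw [abs_le]; constructor <;> linarith
  have h3 : |1 - θ| ≤ 5/4 := by rw [abs_le]; constructor <;> linarith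
  nlinarith [abs_nonneg (1 - θ), abs_nonneg (x / q x)]

lemma abs_ηθ_le (x : ℝ) : Complex.abs (ηθ x) ≤ 2 * q x := by
  rw [ηθ]
  calc Complex.abs _ ≤ Complex.abs ((-x : ℝ) : ℂ) + Complex.abs (((q x : ℝ) : ℂ) * Complex.I) :=
        Complex.abs.add_le _ _
    _ ≤ |x| + q x := by
        simp [map_mul, Complex.abs_I, Complex.abs_ofReal, abs_of_pos (q_pos x)]
    _ ≤ 2 * q x := by have := abs_le_q x; linarith

lemma abs_ηxθ_le (x : ℝ) : Complex.abs (ηxθ x) ≤ 2 := by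
  rw [ηxθ]
  calc Complex.abs _ ≤ Complex.abs (-1 : ℂ) + Complex.abs (((x / q x : ℝ) : ℂ) * Complex.I) :=
        Complex.abs.add_le _ _
    _ ≤ 1 + 1 := by
        have h2 := sq_div_q_le_one x
        rw [map_mul, Complex.abs_I, mul_one, Complex.abs_ofReal]
        simp only [map_neg_eq_map, map_one]
        linarith
    _ = 2 := by norm_num

def B (x : ℝ) : ℝ := 600 * Real.exp 2 * ((x ^ 2 + 1) ^ 3 * Real.exp (-(x ^ 2 / 2)))

lemma q_le (x : ℝ) : q x ≤ x ^ 2 + 1 := by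
  have h1 := one_le_q x
  have h2 := q_sq x
  nlinarith

lemma cube_ge (x : ℝ) : x ^ 2 + 1 ≤ (x ^ 2 + 1) ^ 3 := by
  have h := sq_nonneg x
  nlinarith [mul_nonneg h h, mul_nonneg (mul_nonneg h h) h]

lemma sq_le_cube (x : ℝ) : (x ^ 2 + 1) ^ 2 ≤ (x ^ 2 + 1) ^ 3 := by
  have h := sq_nonneg x
  nlinarith [mul_nonneg h h, mul_nonneg (mul_nonneg h h) h]

lemma abs_G_le (hθ1 : -(1/4) ≤ θ) (hθ2 : θ ≤ 5/4) :
    Complex.abs (G (η θ x)) ≤ 8 * (x ^ 2 + 1) * (Real.exp 2 * Real.exp (-(x ^ 2 / 2))) := by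
  rw [G, map_mul, map_mul, map_pow]
  have h1 := abs_Z_le (x := x) hθ1 hθ2
  have h2 := abs_Zd_le (x := x) hθ1 hθ2
  have h3 := abs_exp_le (x := x) hθ1 hθ2
  calc Complex.abs (Z (η θ x)) ^ 2 * Complex.abs (Zd (η θ x)) *
        Complex.abs (Complex.exp (-(η θ x) ^ 2))
      ≤ (2 * q x) ^ 2 * 2 * (Real.exp 2 * Real.exp (-(x ^ 2 / 2))) := by
        gcongr <;> first
          | exact Complex.abs.nonneg _
          | positivity
          | (simp only [q]; positivity)
    _ = 8 * (x ^ 2 + 1) * (Real.exp 2 * Real.exp (-(x ^ 2 / 2))) := by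
        rw [mul_pow, q_sq]; ring

lemma abs_Gd_le (hθ1 : -(1/4) ≤ θ) (hθ2 : θ ≤ 5/4) :
    Complex.abs (Gd (η θ x)) ≤
      68 * (x ^ 2 + 1) ^ 2 * (Real.exp 2 * Real.exp (-(x ^ 2 / 2))) := by
  rw [Gd, map_mul]
  have h1 := abs_Z_le (x := x) hθ1 hθ2
  have h2 := abs_Zd_le (x := x) hθ1 hθ2
  have h3 := abs_Zdd_le (x := x) hθ1 hθ2
  have h4 := abs_exp_le (x := x) hθ1 hθ2
  have h5 := abs_η_le (x := x) hθ1 hθ2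
  have hqp := q_pos x
  have hq1 := one_le_q x
  have htri : Complex.abs (2 * Z (η θ x) * Zd (η θ x) ^ 2 + Z (η θ x) ^ 2 * Zdd (η θ x)
        - Z (η θ x) ^ 2 * Zd (η θ x) * (2 * η θ x))
      ≤ 2 * Complex.abs (Z (η θ x)) * Complex.abs (Zd (η θ x)) ^ 2
        + Complex.abs (Z (η θ x)) ^ 2 * Complex.abs (Zdd (η θ x))
        + Complex.abs (Z (η θ x)) ^ 2 * Complex.abs (Zd (η θ x)) *
            (2 * Complex.abs (η θ x)) := by
    refine (Complex.abs.sub_le_add _ _).trans ?_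
    have := Complex.abs.add_le (2 * Z (η θ x) * Zd (η θ x) ^ 2) (Z (η θ x) ^ 2 * Zdd (η θ x))
    simp only [map_mul, map_pow, Complex.abs_two] at this ⊢
    linarith
  have hmain : Complex.abs (2 * Z (η θ x) * Zd (η θ x) ^ 2 + Z (η θ x) ^ 2 * Zdd (η θ x)
        - Z (η θ x) ^ 2 * Zd (η θ x) * (2 * η θ x)) ≤ 68 * (x ^ 2 + 1) ^ 2 := by
    refine htri.trans ?_
    have c1 : 2 * Complex.abs (Z (η θ x)) * Complex.abs (Zd (η θ x)) ^ 2
        ≤ 2 * (2 * q x) * 2 ^ 2 := by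
      gcongr <;> first | exact Complex.abs.nonneg _ | positivity | (simp only [q]; positivity)
    have c2 : Complex.abs (Z (η θ x)) ^ 2 * Complex.abs (Zdd (η θ x))
        ≤ (2 * q x) ^ 2 * 1 := by
      gcongr <;> first | exact Complex.abs.nonneg _ | positivity | (simp only [q]; positivity)
    have c3 : Complex.abs (Z (η θ x)) ^ 2 * Complex.abs (Zd (η θ x)) *
          (2 * Complex.abs (η θ x)) ≤ (2 * q x) ^ 2 * 2 * (2 * (3 * q x)) := by
      gcongr <;> first | exact Complex.abs.nonneg _ | positivity | (simp only [q]; positivity)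
    have hq2 := q_sq x
    have hqle := q_le x
    nlinarith [sq_nonneg x, sq_nonneg (q x)]
  calc Complex.abs _ * Complex.abs (Complex.exp (-(η θ x) ^ 2))
      ≤ (68 * (x ^ 2 + 1) ^ 2) * (Real.exp 2 * Real.exp (-(x ^ 2 / 2))) := by
        gcongr <;> first | exact Complex.abs.nonneg _ | positivity | (simp only [q]; positivity)
    _ = _ := by ring

lemma bound_F (hθ1 : -(1/4) ≤ θ) (hθ2 : θ ≤ 5/4) : ‖F θ x‖ ≤ B x := by
  rw [Complex.norm_eq_abs, F, map_mul, B]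
  have h1 := abs_G_le (x := x) hθ1 hθ2
  have h2 := abs_ηx_le (x := x) hθ1 hθ2
  have h3 : Complex.abs (G (η θ x)) * Complex.abs (ηx θ x)
      ≤ (8 * (x ^ 2 + 1) * (Real.exp 2 * Real.exp (-(x ^ 2 / 2)))) * 4 := by
    gcongr <;> first | exact Complex.abs.nonneg _ | positivity | (simp only [q]; positivity)
  refine h3.trans ?_
  have h4 := cube_ge x
  have h5 : (0:ℝ) ≤ Real.exp 2 * Real.exp (-(x ^ 2 / 2)) := by positivity
  calc 8 * (x ^ 2 + 1) * (Real.exp 2 * Real.exp (-(x ^ 2 / 2))) * 4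
      = (32 * (x ^ 2 + 1)) * (Real.exp 2 * Real.exp (-(x ^ 2 / 2))) := by ring
    _ ≤ (600 * (x ^ 2 + 1) ^ 3) * (Real.exp 2 * Real.exp (-(x ^ 2 / 2))) := by
        apply mul_le_mul_of_nonneg_right _ h5
        nlinarith [cube_ge x, sq_nonneg x]
    _ = 600 * Real.exp 2 * ((x ^ 2 + 1) ^ 3 * Real.exp (-(x ^ 2 / 2))) := by ring

lemma bound_H (hθ1 : -(1/4) ≤ θ) (hθ2 : θ ≤ 5/4) : ‖G (η θ x) * ηθ x‖ ≤ B x := by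
  rw [Complex.norm_eq_abs, map_mul, B]
  have h1 := abs_G_le (x := x) hθ1 hθ2
  have h2 := abs_ηθ_le x
  have h3 : Complex.abs (G (η θ x)) * Complex.abs (ηθ x)
      ≤ (8 * (x ^ 2 + 1) * (Real.exp 2 * Real.exp (-(x ^ 2 / 2)))) * (2 * q x) := by
    gcongr <;> first | exact Complex.abs.nonneg _ | positivity | (simp only [q]; positivity)
  refine h3.trans ?_
  have h5 : (0:ℝ) ≤ Real.exp 2 * Real.exp (-(x ^ 2 / 2)) := by positivity
  calc 8 * (x ^ 2 + 1) * (Real.exp 2 * Real.exp (-(x ^ 2 / 2))) * (2 * q x)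
      = (16 * (x ^ 2 + 1) * q x) * (Real.exp 2 * Real.exp (-(x ^ 2 / 2))) := by ring
    _ ≤ (600 * (x ^ 2 + 1) ^ 3) * (Real.exp 2 * Real.exp (-(x ^ 2 / 2))) := by
        apply mul_le_mul_of_nonneg_right _ h5
        have h6 := q_le x
        have h7 := q_pos x
        nlinarith [cube_ge x, sq_le_cube x, sq_nonneg x,
          mul_le_mul_of_nonneg_left (q_le x) (show (0:ℝ) ≤ 16 * (x ^ 2 + 1) by positivity)]
    _ = 600 * Real.exp 2 * ((x ^ 2 + 1) ^ 3 * Real.exp (-(x ^ 2 / 2))) := by ring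

lemma bound_Fd (hθ1 : -(1/4) ≤ θ) (hθ2 : θ ≤ 5/4) : ‖Fd θ x‖ ≤ B x := by
  rw [Complex.norm_eq_abs, Fd]
  have h1 := abs_Gd_le (x := x) hθ1 hθ2
  have h2 := abs_G_le (x := x) hθ1 hθ2
  have h3 := abs_ηθ_le x
  have h4 := abs_ηx_le (x := x) hθ1 hθ2
  have h5 := abs_ηxθ_le x
  have htri := Complex.abs.add_le (Gd (η θ x) * ηθ x * ηx θ x) (G (η θ x) * ηxθ x)
  simp only [map_mul] at htri
  refine htri.trans ?_
  have c1 : Complex.abs (Gd (η θ x)) * Complex.abs (ηθ x) * Complex.abs (ηx θ x)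
      ≤ (68 * (x ^ 2 + 1) ^ 2 * (Real.exp 2 * Real.exp (-(x ^ 2 / 2)))) * (2 * q x) * 4 := by
    gcongr <;> first | exact Complex.abs.nonneg _ | positivity | (simp only [q]; positivity)
  have c2 : Complex.abs (G (η θ x)) * Complex.abs (ηxθ x)
      ≤ (8 * (x ^ 2 + 1) * (Real.exp 2 * Real.exp (-(x ^ 2 / 2)))) * 2 := by
    gcongr <;> first | exact Complex.abs.nonneg _ | positivity | (simp only [q]; positivity)
  rw [B]
  have h5' : (0:ℝ) ≤ Real.exp 2 * Real.exp (-(x ^ 2 / 2)) := by positivity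
  calc Complex.abs (Gd (η θ x)) * Complex.abs (ηθ x) * Complex.abs (ηx θ x)
        + Complex.abs (G (η θ x)) * Complex.abs (ηxθ x)
      ≤ 68 * (x ^ 2 + 1) ^ 2 * (Real.exp 2 * Real.exp (-(x ^ 2 / 2))) * (2 * q x) * 4
        + 8 * (x ^ 2 + 1) * (Real.exp 2 * Real.exp (-(x ^ 2 / 2))) * 2 := add_le_add c1 c2
    _ = (544 * (x ^ 2 + 1) ^ 2 * q x + 16 * (x ^ 2 + 1)) *
        (Real.exp 2 * Real.exp (-(x ^ 2 / 2))) := by ring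
    _ ≤ (600 * (x ^ 2 + 1) ^ 3) * (Real.exp 2 * Real.exp (-(x ^ 2 / 2))) := by
        apply mul_le_mul_of_nonneg_right _ h5'
        have h9 := mul_le_mul_of_nonneg_left (q_le x)
          (show (0:ℝ) ≤ 544 * (x ^ 2 + 1) ^ 2 by positivity)
        nlinarith [cube_ge x, sq_le_cube x, sq_nonneg x]
    _ = 600 * Real.exp 2 * ((x ^ 2 + 1) ^ 3 * Real.exp (-(x ^ 2 / 2))) := by ring

lemma poly_le (x : ℝ) :
    (x ^ 2 + 1) ^ 3 * Real.exp (-(x ^ 2 / 2)) ≤ 1728 * Real.exp (-(x ^ 2 / 4)) := by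
  have h1 : x ^ 2 + 1 ≤ 12 * Real.exp (x ^ 2 / 12) := by
    nlinarith [Real.add_one_le_exp (x ^ 2 / 12)]
  have h2 : (x ^ 2 + 1) ^ 3 ≤ 1728 * Real.exp (x ^ 2 / 4) := by
    calc (x ^ 2 + 1) ^ 3 ≤ (12 * Real.exp (x ^ 2 / 12)) ^ 3 := by
          apply pow_le_pow_left₀ (by positivity) h1
      _ = 1728 * Real.exp (x ^ 2 / 4) := by
          rw [mul_pow, ← Real.exp_nat_mul]
          norm_num
          rw [show (3:ℝ) * (x ^ 2 / 12) = x ^ 2 / 4 by ring]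
  calc (x ^ 2 + 1) ^ 3 * Real.exp (-(x ^ 2 / 2))
      ≤ (1728 * Real.exp (x ^ 2 / 4)) * Real.exp (-(x ^ 2 / 2)) := by
        apply mul_le_mul_of_nonneg_right h2 (by positivity)
    _ = 1728 * Real.exp (-(x ^ 2 / 4)) := by
        rw [mul_assoc, ← Real.exp_add]
        ring_nf

lemma B_le (x : ℝ) : B x ≤ 600 * Real.exp 2 * 1728 * Real.exp (-(x ^ 2 / 4)) := by
  rw [B]
  have := poly_le x
  nlinarith [Real.exp_pos (2:ℝ)]

lemma B_nonneg (x : ℝ) : 0 ≤ B x := by rw [B]; positivity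

lemma B_continuous : Continuous B := by
  apply Continuous.mul continuous_const
  apply Continuous.mul (by continuity)
  exact Real.continuous_exp.comp (by continuity)

lemma exp_quarter_integrable : Integrable (fun x : ℝ => Real.exp (-(x ^ 2 / 4))) := by
  have heq : (fun x : ℝ => Real.exp (-(x ^ 2 / 4)))
      = (fun x : ℝ => Real.exp (-(1/4 : ℝ) * x ^ 2)) := by
    funext x
    rw [show -(x ^ 2 / 4) = -(1/4 : ℝ) * x ^ 2 by ring]
  rw [heq]
  exact integrable_exp_neg_mul_sq (by norm_num)

lemma B_integrable : Integrable B := by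
  refine Integrable.mono' ((exp_quarter_integrable).const_mul (600 * Real.exp 2 * 1728))
    (B_continuous.aestronglyMeasurable) ?_
  filter_upwards with x
  rw [Real.norm_eq_abs, abs_of_nonneg (B_nonneg x)]
  have := B_le x
  linarith [this]

lemma sq_tendsto_atTop : Tendsto (fun x : ℝ => x ^ 2) atTop atTop :=
  tendsto_pow_atTop two_ne_zero

lemma sq_tendsto_atBot : Tendsto (fun x : ℝ => x ^ 2) atBot atTop := by
  have h := sq_tendsto_atTop.comp (tendsto_neg_atBot_atTop (G := ℝ))
  refine h.congr fun x => ?_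
  simp only [Function.comp_apply]
  exact neg_sq x

lemma exp_quarter_tendsto (c : ℝ) (l : Filter ℝ) (h : Tendsto (fun x : ℝ => x ^ 2) l atTop) :
    Tendsto (fun x : ℝ => c * Real.exp (-(x ^ 2 / 4))) l (𝓝 0) := by
  have h1 : Tendsto (fun x : ℝ => -(x ^ 2 / 4)) l atBot := by
    apply tendsto_neg_atTop_atBot.comp
    exact (h.atTop_div_const (by norm_num))
  have h2 := Real.tendsto_exp_atBot.comp h1
  simpa using h2.const_mul c

lemma B_tendsto (l : Filter ℝ) (h : Tendsto (fun x : ℝ => x ^ 2) l atTop) :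
    Tendsto B l (𝓝 0) :=
  squeeze_zero B_nonneg B_le (exp_quarter_tendsto _ l h)

lemma hasDerivAt_F_θ (hθ1 : -(1/4) ≤ θ) (hθ2 : θ ≤ 5/4) :
    HasDerivAt (fun θ => F θ x) (Fd θ x) θ := by
  have hG := hasDerivAt_G (dom_η (x := x) hθ1 hθ2)
  have h1 : HasDerivAt (fun θ => G (η θ x)) (ηθ x • Gd (η θ x)) θ :=
    by have := HasDerivAt.scomp θ hG (hasDerivAt_η_θ θ x); exact this
  have h2 := h1.mul (hasDerivAt_ηx_θ θ x)
  refine h2.congr_deriv (Eq.symm ?_)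
  rw [Fd]
  simp only [smul_eq_mul]
  ring

lemma hasDerivAt_H_x (hθ1 : -(1/4) ≤ θ) (hθ2 : θ ≤ 5/4) (x : ℝ) :
    HasDerivAt (fun x => G (η θ x) * ηθ x) (Fd θ x) x := by
  have hG := hasDerivAt_G (dom_η (x := x) hθ1 hθ2)
  have h1 : HasDerivAt (fun x => G (η θ x)) (ηx θ x • Gd (η θ x)) x :=
    by have := HasDerivAt.scomp x hG (hasDerivAt_η_x θ x); exact this
  have h2 := h1.mul (hasDerivAt_ηθ_x x)
  refine h2.congr_deriv (Eq.symm ?_)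
  rw [Fd]
  simp only [smul_eq_mul]
  ring

lemma continuous_q : Continuous q := by
  apply Real.continuous_sqrt.comp
  continuity

lemma continuous_xdivq : Continuous (fun x : ℝ => x / q x) :=
  continuous_id.div continuous_q fun x => ne_of_gt (q_pos x)

lemma continuous_η_x (θ : ℝ) : Continuous (fun x => η θ x) := by
  apply Continuous.sub
  · exact Complex.continuous_ofReal.comp (by continuity)
  · exact (Complex.continuous_ofReal.comp (continuous_const.mul continuous_q : Continuous fun x => (1 - θ) * q x)).mul continuous_const

lemma continuous_ηx_x (θ : ℝ) : Continuous (fun x => ηx θ x) := by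
  apply Continuous.sub continuous_const
  exact (Complex.continuous_ofReal.comp (continuous_const.mul continuous_xdivq : Continuous fun x => (1 - θ) * (x / q x))).mul continuous_const

lemma continuous_ηθ_x : Continuous ηθ := by
  apply Continuous.add
  · exact Complex.continuous_ofReal.comp (by continuity)
  · exact (Complex.continuous_ofReal.comp continuous_q).mul continuous_const

lemma continuous_ηxθ_x : Continuous ηxθ := by
  apply Continuous.add continuous_const
  exact (Complex.continuous_ofReal.comp continuous_xdivq).mul continuous_const

lemma continuousAt_σ {v : ℂ} (hv : 0 < (v ^ 2 + 5).re) : ContinuousAt σ v :=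
  (hasDerivAt_σ hv).continuousAt

lemma continuousAt_Gd {v : ℂ} (hv : 0 < (v ^ 2 + 5).re) : ContinuousAt Gd v := by
  have hσ := continuousAt_σ hv
  have hZ := (hasDerivAt_Z hv).continuousAt
  have hZd := (hasDerivAt_Zd hv).continuousAt
  have hZdd : ContinuousAt Zdd v :=
    continuousAt_const.div (hσ.pow 3) (pow_ne_zero 3 σ_ne)
  have hexp : ContinuousAt (fun v : ℂ => Complex.exp (-v ^ 2)) v := by
    apply Continuous.continuousAt
    exact Complex.continuous_exp.comp (by continuity)
  exact ((((hZ.const_mul 2).mul (hZd.pow 2)).add ((hZ.pow 2).mul hZdd)).sub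
    (((hZ.pow 2).mul hZd).mul (continuousAt_id.const_mul 2))).mul hexp

lemma continuous_F_x (hθ1 : -(1/4) ≤ θ) (hθ2 : θ ≤ 5/4) : Continuous (F θ) := by
  rw [continuous_iff_continuousAt]
  intro x
  have hG : ContinuousAt G (η θ x) := (hasDerivAt_G (dom_η hθ1 hθ2)).continuousAt
  exact (hG.comp (continuous_η_x θ).continuousAt).mul (continuous_ηx_x θ).continuousAt

lemma continuous_Fd_x (hθ1 : -(1/4) ≤ θ) (hθ2 : θ ≤ 5/4) : Continuous (Fd θ) := by
  rw [continuous_iff_continuousAt]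
  intro x
  have hG : ContinuousAt G (η θ x) := (hasDerivAt_G (dom_η hθ1 hθ2)).continuousAt
  have hGd : ContinuousAt Gd (η θ x) := continuousAt_Gd (dom_η hθ1 hθ2)
  exact (((hGd.comp (continuous_η_x θ).continuousAt).mul
    continuous_ηθ_x.continuousAt).mul (continuous_ηx_x θ).continuousAt).add
    ((hG.comp (continuous_η_x θ).continuousAt).mul continuous_ηxθ_x.continuousAt)

lemma continuous_H_x (hθ1 : -(1/4) ≤ θ) (hθ2 : θ ≤ 5/4) :
    Continuous (fun x => G (η θ x) * ηθ x) := by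
  rw [continuous_iff_continuousAt]
  intro x
  have hG : ContinuousAt G (η θ x) := (hasDerivAt_G (dom_η hθ1 hθ2)).continuousAt
  exact (hG.comp (continuous_η_x θ).continuousAt).mul continuous_ηθ_x.continuousAt

lemma integrable_F (hθ1 : -(1/4) ≤ θ) (hθ2 : θ ≤ 5/4) : Integrable (F θ) :=
  Integrable.mono' B_integrable (continuous_F_x hθ1 hθ2).aestronglyMeasurable
    (ae_of_all _ fun _ => bound_F hθ1 hθ2)

lemma integrable_Fd (hθ1 : -(1/4) ≤ θ) (hθ2 : θ ≤ 5/4) : Integrable (Fd θ) :=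
  Integrable.mono' B_integrable (continuous_Fd_x hθ1 hθ2).aestronglyMeasurable
    (ae_of_all _ fun _ => bound_Fd hθ1 hθ2)

lemma tendsto_H_top (hθ1 : -(1/4) ≤ θ) (hθ2 : θ ≤ 5/4) :
    Tendsto (fun x => G (η θ x) * ηθ x) atTop (𝓝 0) :=
  squeeze_zero_norm (fun _ => bound_H hθ1 hθ2) (B_tendsto atTop sq_tendsto_atTop)

lemma tendsto_H_bot (hθ1 : -(1/4) ≤ θ) (hθ2 : θ ≤ 5/4) :
    Tendsto (fun x => G (η θ x) * ηθ x) atBot (𝓝 0) :=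
  squeeze_zero_norm (fun _ => bound_H hθ1 hθ2) (B_tendsto atBot sq_tendsto_atBot)

lemma integral_Fd_zero (hθ1 : -(1/4) ≤ θ) (hθ2 : θ ≤ 5/4) : ∫ x : ℝ, Fd θ x = 0 := by
  have hIoi : ∫ x in Ioi (0:ℝ), Fd θ x = 0 - G (η θ 0) * ηθ 0 :=
    integral_Ioi_of_hasDerivAt_of_tendsto' (fun x _ => hasDerivAt_H_x hθ1 hθ2 x)
      ((integrable_Fd hθ1 hθ2).integrableOn) (tendsto_H_top hθ1 hθ2)
  have hIic : ∫ x in Iic (0:ℝ), Fd θ x = G (η θ 0) * ηθ 0 - 0 :=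
    integral_Iic_of_hasDerivAt_of_tendsto' (fun x _ => hasDerivAt_H_x hθ1 hθ2 x)
      ((integrable_Fd hθ1 hθ2).integrableOn) (tendsto_H_bot hθ1 hθ2)
  have hsplit := intervalIntegral.integral_Iic_add_Ioi (b := (0:ℝ))
    ((integrable_Fd hθ1 hθ2).integrableOn) ((integrable_Fd hθ1 hθ2).integrableOn)
  rw [← hsplit, hIoi, hIic]
  ring

lemma ball_subset_S {θ₀ θ : ℝ} (h1 : 0 ≤ θ₀) (h2 : θ₀ ≤ 1)
    (hθ : θ ∈ Metric.ball θ₀ (1/4)) : -(1/4) ≤ θ ∧ θ ≤ 5/4 := by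
  rw [Metric.mem_ball, Real.dist_eq, abs_lt] at hθ
  constructor <;> linarith [hθ.1, hθ.2]

lemma hasDerivAt_Ψ {θ₀ : ℝ} (h1 : 0 ≤ θ₀) (h2 : θ₀ ≤ 1) : HasDerivAt Ψ 0 θ₀ := by
  have hS1 : -(1/4) ≤ θ₀ := by linarith
  have hS2 : θ₀ ≤ 5/4 := by linarith
  have key := hasDerivAt_integral_of_dominated_loc_of_deriv_le
    (F := F) (F' := Fd) (bound := B) (μ := volume) (x₀ := θ₀) (s := Metric.ball θ₀ (1/4))
    (Metric.ball_mem_nhds θ₀ (by norm_num))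
    (by
      filter_upwards [Metric.ball_mem_nhds θ₀ (by norm_num : (0:ℝ) < 1/4)] with θ hθ
      obtain ⟨hA, hB⟩ := ball_subset_S h1 h2 hθ
      exact (continuous_F_x hA hB).aestronglyMeasurable)
    (integrable_F hS1 hS2)
    ((continuous_Fd_x hS1 hS2).aestronglyMeasurable)
    (ae_of_all _ fun x θ hθ => by
      obtain ⟨hA, hB⟩ := ball_subset_S h1 h2 hθ
      exact bound_Fd hA hB)
    B_integrable
    (ae_of_all _ fun x θ hθ => by
      obtain ⟨hA, hB⟩ := ball_subset_S h1 h2 hθ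
      exact hasDerivAt_F_θ hA hB)
  have hd := key.2
  rw [integral_Fd_zero hS1 hS2] at hd
  exact hd

lemma Ψ_one_eq_zero' : Ψ 1 = Ψ 0 := by
  have hcont : ContinuousOn Ψ (Icc 0 1) := fun t ht =>
    ((hasDerivAt_Ψ ht.1 ht.2).continuousAt).continuousWithinAt
  have hder : ∀ t ∈ Ico (0:ℝ) 1, HasDerivWithinAt Ψ 0 (Ici t) t := fun t ht =>
    (hasDerivAt_Ψ ht.1 ht.2.le).hasDerivWithinAt
  exact constant_of_has_deriv_right_zero hcont hder 1 (by norm_num)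

lemma ofReal_sq_add_five_re (x : ℝ) : (((x:ℂ)) ^ 2 + 5).re = x ^ 2 + 5 := by
  simp [Complex.add_re, Complex.sq_abs]
  norm_cast

lemma σ_ofReal (x : ℝ) : σ ((x : ℂ)) = ((Real.sqrt (x ^ 2 + 5) : ℝ) : ℂ) := by
  have h0 : (0:ℝ) < x ^ 2 + 5 := by positivity
  apply σ_eq
  · rw [ofReal_sq_add_five_re]; exact h0
  · rw [← Complex.ofReal_pow, Real.sq_sqrt h0.le]
    push_cast
    ring
  · simp [Complex.ofReal_re]
    positivity

lemma η_zero (x : ℝ) : η 0 x = ((2 * x : ℝ) : ℂ) - ((q x : ℝ) : ℂ) * Complex.I := by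
  rw [η]; norm_num

lemma η_one (x : ℝ) : η 1 x = ((x : ℝ) : ℂ) := by
  rw [η]; norm_num

lemma ηx_one (x : ℝ) : ηx 1 x = 1 := by
  rw [ηx]; norm_num

lemma σ_η0 (x : ℝ) : σ (η 0 x) = 2 * ((q x : ℝ) : ℂ) - ((x : ℝ) : ℂ) * Complex.I := by
  have hq : ((q x : ℝ) : ℂ) ^ 2 = ((x : ℝ) : ℂ) ^ 2 + 1 := by
    rw [← Complex.ofReal_pow, q_sq]; push_cast; ring
  apply σ_eq (dom_η (by norm_num) (by norm_num))
  · rw [η_zero]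
    push_cast
    linear_combination (5 : ℂ) * hq + ((x:ℂ)^2 - ((q x : ℝ):ℂ)^2) * Complex.I_sq
  · simp [Complex.sub_re, Complex.mul_re]
    nlinarith [q_pos x]

lemma F_zero (x : ℝ) : F 0 x = ((x : ℝ) : ℂ) ^ 2 * Complex.exp (-(η 0 x) ^ 2) := by
  have hq : ((q x : ℝ) : ℂ) ^ 2 = ((x : ℝ) : ℂ) ^ 2 + 1 := by
    rw [← Complex.ofReal_pow, q_sq]; push_cast; ring
  have hqne : ((q x : ℝ) : ℂ) ≠ 0 := by
    simpa using ne_of_gt (q_pos x)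
  have hσne : (2 * ((q x : ℝ) : ℂ) - ((x : ℝ) : ℂ) * Complex.I) ≠ 0 := by
    rw [← σ_η0]; exact σ_ne
  rw [F, G]
  have h1 : Z (η 0 x) = ((x : ℝ) : ℂ) := by
    rw [Z, σ_η0, η_zero]
    rw [div_eq_iff (by norm_num : (5:ℂ) ≠ 0)]
    push_cast
    linear_combination (-(x : ℂ)) * Complex.I_sq
  have h2 : Zd (η 0 x) * ηx 0 x = 1 := by
    rw [Zd, σ_η0, η_zero, ηx]
    push_cast
    have hσne' : 2 * ((q x : ℝ) : ℂ) - Complex.I * (x : ℂ) ≠ 0 := by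
      rw [mul_comm Complex.I]; exact hσne
    field_simp
    linear_combination (-((q x : ℝ) : ℂ) * (2 * ((q x : ℝ) : ℂ) - (x : ℂ) * Complex.I)) *
      Complex.I_sq
  rw [h1]
  calc ((x : ℝ) : ℂ) ^ 2 * Zd (η 0 x) * Complex.exp (-(η 0 x) ^ 2) * ηx 0 x
      = ((x : ℝ) : ℂ) ^ 2 * Complex.exp (-(η 0 x) ^ 2) * (Zd (η 0 x) * ηx 0 x) := by ring
    _ = _ := by rw [h2, mul_one]

def f0 (x : ℝ) : ℝ := x ^ 2 * Real.cos (4 * x * Real.sqrt (x ^ 2 + 1)) * Real.exp (-3 * x ^ 2)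

lemma neg_η0_sq (x : ℝ) :
    -(η 0 x) ^ 2 = ((1 - 3 * x ^ 2 : ℝ) : ℂ) + ((4 * x * q x : ℝ) : ℂ) * Complex.I := by
  have hq : ((q x : ℝ) : ℂ) ^ 2 = ((x : ℝ) : ℂ) ^ 2 + 1 := by
    rw [← Complex.ofReal_pow, q_sq]; push_cast; ring
  rw [η_zero]
  push_cast
  linear_combination hq + (-((q x : ℝ) : ℂ) ^ 2) * Complex.I_sq

lemma re_add_mul_I (a b : ℝ) : ((a : ℂ) + (b : ℂ) * Complex.I).re = a := by simp
lemma im_add_mul_I (a b : ℝ) : ((a : ℂ) + (b : ℂ) * Complex.I).im = b := by simp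

lemma re_F_zero (x : ℝ) : (F 0 x).re = Real.exp 1 * f0 x := by
  rw [F_zero, neg_η0_sq]
  have h1 : ((x : ℝ) : ℂ) ^ 2 = ((x ^ 2 : ℝ) : ℂ) := by push_cast; ring
  rw [h1, Complex.re_ofReal_mul, Complex.exp_re]
  rw [re_add_mul_I, im_add_mul_I, f0]
  rw [show (1 - 3 * x ^ 2 : ℝ) = 1 + -3 * x ^ 2 by ring, Real.exp_add]
  rw [show Real.sqrt (x ^ 2 + 1) = q x from rfl]
  ring

lemma integrable_f0 : Integrable f0 := by
  have h := ((integrable_F (θ := 0) (by norm_num) (by norm_num)).re).const_mul (Real.exp (-1))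
  refine h.congr (ae_of_all _ fun x => ?_)
  show Real.exp (-1) * (F 0 x).re = f0 x
  rw [re_F_zero, ← mul_assoc, ← Real.exp_add]
  norm_num

lemma f0_even (x : ℝ) : f0 (-x) = f0 x := by
  rw [f0, f0]
  rw [show (-x) ^ 2 = x ^ 2 by ring]
  rw [show 4 * -x * Real.sqrt (x ^ 2 + 1) = -(4 * x * Real.sqrt (x ^ 2 + 1)) by ring]
  rw [Real.cos_neg]

lemma integral_f0 : ∫ x : ℝ, f0 x = 2 * ∫ x in Ioi (0:ℝ), f0 x := by
  have hsplit := intervalIntegral.integral_Iic_add_Ioi (b := (0:ℝ)) (f := f0) (μ := volume)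
    integrable_f0.integrableOn integrable_f0.integrableOn
  have hneg : ∫ x in Iic (0:ℝ), f0 x = ∫ x in Ioi (0:ℝ), f0 x := by
    rw [show Iic (0:ℝ) = Iic (-0 : ℝ) by norm_num, ← integral_comp_neg_Ioi]
    congr 1
    funext x
    exact f0_even x
  rw [← hsplit, hneg]
  ring

lemma re_Ψ_zero : (Ψ 0).re = Real.exp 1 * (2 * ∫ x in Ioi (0:ℝ), f0 x) := by
  have hF := integrable_F (θ := 0) (by norm_num) (by norm_num)
  have h1 : ∫ x : ℝ, (F 0 x).re = (Ψ 0).re := by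
    have := integral_re (μ := volume) (f := F 0) hF
    simpa [Ψ] using this
  rw [← h1]
  have h2 : ∫ x : ℝ, (F 0 x).re = ∫ x : ℝ, Real.exp 1 * f0 x := by
    congr 1
    funext x
    exact re_F_zero x
  rw [h2, integral_const_mul, integral_f0]

lemma F_one (x : ℝ) :
    F 1 x = Z ((x : ℝ) : ℂ) ^ 2 * Zd ((x : ℝ) : ℂ) * Complex.exp (-((x : ℝ) : ℂ) ^ 2) := by
  rw [F, η_one, ηx_one, mul_one, G]

lemma Z_sq_Zd (x : ℝ) :
    Z ((x : ℝ) : ℂ) ^ 2 * Zd ((x : ℝ) : ℂ)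
      = (((2 * x ^ 2 - 10) / 125 : ℝ) : ℂ)
        + ((x * (11 * x ^ 2 + 35) / (125 * Real.sqrt (x ^ 2 + 5)) : ℝ) : ℂ) * Complex.I := by
  have h0 : (0:ℝ) < x ^ 2 + 5 := by positivity
  have hρ : (0:ℝ) < Real.sqrt (x ^ 2 + 5) := Real.sqrt_pos.2 h0
  have hρsq : ((Real.sqrt (x ^ 2 + 5) : ℝ) : ℂ) ^ 2 = ((x : ℝ) : ℂ) ^ 2 + 5 := by
    rw [← Complex.ofReal_pow, Real.sq_sqrt h0.le]; push_cast; ring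
  have hρne : ((Real.sqrt (x ^ 2 + 5) : ℝ) : ℂ) ≠ 0 := by
    simpa using ne_of_gt hρ
  rw [Z, Zd, σ_ofReal]
  push_cast
  field_simp
  linear_combination (125 *
      (4 * ((x : ℝ) : ℂ) ^ 2 * ((Real.sqrt (x ^ 2 + 5) : ℝ) : ℂ)
        + 2 * ((Real.sqrt (x ^ 2 + 5) : ℝ) : ℂ) ^ 3
        + ((x : ℝ) : ℂ) * ((Real.sqrt (x ^ 2 + 5) : ℝ) : ℂ) ^ 2 * Complex.I)) * Complex.I_sq
    + (125 *
      (7 * ((x : ℝ) : ℂ) * Complex.I - 2 * ((Real.sqrt (x ^ 2 + 5) : ℝ) : ℂ))) * hρsq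

lemma re_F_one (x : ℝ) : (F 1 x).re = (2 * x ^ 2 - 10) / 125 * Real.exp (-x ^ 2) := by
  rw [F_one, Z_sq_Zd]
  rw [show -((x : ℝ) : ℂ) ^ 2 = ((-x ^ 2 : ℝ) : ℂ) by push_cast; ring, ← Complex.ofReal_exp]
  set a := (2 * x ^ 2 - 10) / 125
  set b := x * (11 * x ^ 2 + 35) / (125 * Real.sqrt (x ^ 2 + 5))
  set E := Real.exp (-x ^ 2)
  have : ((a : ℂ) + (b : ℂ) * Complex.I) * (E : ℂ)
      = ((a * E : ℝ) : ℂ) + ((b * E : ℝ) : ℂ) * Complex.I := by push_cast; ring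
  rw [this, re_add_mul_I]

lemma decay1 (x : ℝ) : (x ^ 2 + 1) * Real.exp (-x ^ 2) ≤ 1728 * Real.exp (-(x ^ 2 / 4)) := by
  have h1 : (x ^ 2 + 1) * Real.exp (-x ^ 2) ≤ (x ^ 2 + 1) ^ 3 * Real.exp (-(x ^ 2 / 2)) := by
    apply mul_le_mul (cube_ge x) _ (by positivity) (by positivity)
    apply Real.exp_le_exp.2
    nlinarith [sq_nonneg x]
  exact h1.trans (poly_le x)

lemma integrable_gauss : Integrable (fun x : ℝ => Real.exp (-x ^ 2)) := by
  have heq : (fun x : ℝ => Real.exp (-x ^ 2)) = fun x : ℝ => Real.exp (-(1:ℝ) * x ^ 2) := by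
    funext x; rw [show -x ^ 2 = -(1:ℝ) * x ^ 2 by ring]
  rw [heq]
  exact integrable_exp_neg_mul_sq one_pos

lemma integral_gauss : ∫ x : ℝ, Real.exp (-x ^ 2) = Real.sqrt π := by
  have heq : (fun x : ℝ => Real.exp (-x ^ 2)) = fun x : ℝ => Real.exp (-(1:ℝ) * x ^ 2) := by
    funext x; rw [show -x ^ 2 = -(1:ℝ) * x ^ 2 by ring]
  rw [heq, integral_gaussian, div_one]

lemma integrable_x_sq_gauss : Integrable (fun x : ℝ => x ^ 2 * Real.exp (-x ^ 2)) := by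
  refine Integrable.mono' (exp_quarter_integrable.const_mul 1728) ?_ (ae_of_all _ fun x => ?_)
  · apply Continuous.aestronglyMeasurable
    exact (continuous_pow 2).mul (Real.continuous_exp.comp (by continuity))
  · rw [Real.norm_eq_abs, abs_of_nonneg (by positivity)]
    have := decay1 x
    nlinarith [Real.exp_pos (-x ^ 2), sq_nonneg x]

lemma integrable_phi' : Integrable (fun x : ℝ => (x ^ 2 - 1/2) * Real.exp (-x ^ 2)) := by
  refine Integrable.mono' (exp_quarter_integrable.const_mul 1728) ?_ (ae_of_all _ fun x => ?_)
  · apply Continuous.aestronglyMeasurable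
    exact (by continuity : Continuous fun x : ℝ => x ^ 2 - 1/2).mul
      (Real.continuous_exp.comp (by continuity))
  · rw [Real.norm_eq_abs, abs_mul, abs_of_nonneg (le_of_lt (Real.exp_pos _))]
    have h1 : |x ^ 2 - 1/2| ≤ x ^ 2 + 1 := by
      rw [abs_le]; constructor <;> nlinarith [sq_nonneg x]
    have := decay1 x
    nlinarith [Real.exp_pos (-x ^ 2)]

lemma hasDerivAt_phi (x : ℝ) :
    HasDerivAt (fun x : ℝ => -x / 2 * Real.exp (-x ^ 2))
      ((x ^ 2 - 1/2) * Real.exp (-x ^ 2)) x := by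
  have h1 : HasDerivAt (fun x : ℝ => Real.exp (-x ^ 2)) (-(2 * x) * Real.exp (-x ^ 2)) x := by
    have h0 : HasDerivAt (fun x : ℝ => -x ^ 2) (-(2 * x)) x := by
      simpa [Pi.neg_def] using (hasDerivAt_pow 2 x).neg
    simpa [mul_comm] using h0.exp
  have h2 : HasDerivAt (fun x : ℝ => -x / 2) (-1/2) x := by
    simpa using ((hasDerivAt_id x).neg).div_const 2
  have := h2.mul h1
  refine this.congr_deriv (Eq.symm ?_)
  ring

lemma tendsto_phi_top : Tendsto (fun x : ℝ => -x / 2 * Real.exp (-x ^ 2)) atTop (𝓝 0) := by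
  refine squeeze_zero_norm (fun x => ?_) (exp_quarter_tendsto 1728 atTop sq_tendsto_atTop)
  rw [Real.norm_eq_abs, abs_mul, abs_of_nonneg (le_of_lt (Real.exp_pos _))]
  have h1 : |(-x) / 2| ≤ x ^ 2 + 1 := by
    rw [abs_div, abs_neg, abs_two]
    nlinarith [sq_abs x, sq_nonneg (|x| - 1), abs_nonneg x]
  have := decay1 x
  nlinarith [Real.exp_pos (-x ^ 2)]

lemma tendsto_phi_bot : Tendsto (fun x : ℝ => -x / 2 * Real.exp (-x ^ 2)) atBot (𝓝 0) := by
  refine squeeze_zero_norm (fun x => ?_) (exp_quarter_tendsto 1728 atBot sq_tendsto_atBot)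
  rw [Real.norm_eq_abs, abs_mul, abs_of_nonneg (le_of_lt (Real.exp_pos _))]
  have h1 : |(-x) / 2| ≤ x ^ 2 + 1 := by
    rw [abs_div, abs_neg, abs_two]
    nlinarith [sq_abs x, sq_nonneg (|x| - 1), abs_nonneg x]
  have := decay1 x
  nlinarith [Real.exp_pos (-x ^ 2)]

lemma integral_phi'_zero : ∫ x : ℝ, (x ^ 2 - 1/2) * Real.exp (-x ^ 2) = 0 := by
  have hIoi : ∫ x in Ioi (0:ℝ), (x ^ 2 - 1/2) * Real.exp (-x ^ 2)
      = 0 - (-(0:ℝ) / 2 * Real.exp (-(0:ℝ) ^ 2)) :=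
    integral_Ioi_of_hasDerivAt_of_tendsto' (fun x _ => hasDerivAt_phi x)
      integrable_phi'.integrableOn tendsto_phi_top
  have hIic : ∫ x in Iic (0:ℝ), (x ^ 2 - 1/2) * Real.exp (-x ^ 2)
      = (-(0:ℝ) / 2 * Real.exp (-(0:ℝ) ^ 2)) - 0 :=
    integral_Iic_of_hasDerivAt_of_tendsto' (fun x _ => hasDerivAt_phi x)
      integrable_phi'.integrableOn tendsto_phi_bot
  have hsplit := intervalIntegral.integral_Iic_add_Ioi (b := (0:ℝ))
    integrable_phi'.integrableOn integrable_phi'.integrableOn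
  rw [← hsplit, hIoi, hIic]
  ring

lemma integral_x_sq_gauss : ∫ x : ℝ, x ^ 2 * Real.exp (-x ^ 2) = Real.sqrt π / 2 := by
  have h1 : (fun x : ℝ => x ^ 2 * Real.exp (-x ^ 2))
      = fun x : ℝ => (x ^ 2 - 1/2) * Real.exp (-x ^ 2) + 1/2 * Real.exp (-x ^ 2) := by
    funext x; ring
  rw [h1, integral_add integrable_phi' (integrable_gauss.const_mul (1/2)),
    integral_phi'_zero, integral_const_mul, integral_gauss]
  ring

lemma re_Ψ_one : (Ψ 1).re = -(9/125) * Real.sqrt π := by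
  have hF := integrable_F (θ := 1) (by norm_num) (by norm_num)
  have h1 : ∫ x : ℝ, (F 1 x).re = (Ψ 1).re := by
    have := integral_re (μ := volume) (f := F 1) hF
    simpa [Ψ] using this
  rw [← h1]
  have h2 : ∫ x : ℝ, (F 1 x).re
      = ∫ x : ℝ, ((2/125) * (x ^ 2 * Real.exp (-x ^ 2)) - (10/125) * Real.exp (-x ^ 2)) := by
    congr 1
    funext x
    rw [re_F_one]
    ring
  rw [h2, integral_sub ((integrable_x_sq_gauss.const_mul (2/125)))
    ((integrable_gauss.const_mul (10/125))), integral_const_mul, integral_const_mul,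
    integral_x_sq_gauss, integral_gauss]
  ring

end SG

end

theorem stmt2 :
    ∫ x in Set.Ioi (0:ℝ), x^2 * Real.cos (4 * x * Real.sqrt (x^2 + 1)) * Real.exp (-3 * x^2)
      = -(9 * Real.sqrt π) / (250 * Real.exp 1) := by
  have hconst := SG.Ψ_one_eq_zero'
  have h0 := SG.re_Ψ_zero
  have h1 := SG.re_Ψ_one
  have heq : -(9/125) * Real.sqrt π
      = Real.exp 1 * (2 * ∫ x in Set.Ioi (0:ℝ), SG.f0 x) := by
    rw [← h1, ← h0, hconst]
  have hT : (∫ x in Set.Ioi (0:ℝ), SG.f0 x) = -(9 * Real.sqrt π) / (250 * Real.exp 1) := by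
    rw [eq_div_iff (by positivity : (250:ℝ) * Real.exp 1 ≠ 0)]
    linear_combination (-125 : ℝ) * heq
  have hfun : (∫ x in Set.Ioi (0:ℝ), SG.f0 x)
      = ∫ x in Set.Ioi (0:ℝ), x^2 * Real.cos (4 * x * Real.sqrt (x^2 + 1))
          * Real.exp (-3 * x^2) := by
    congr 1
  rw [← hfun, hT]
end

section
/- For real a, b, c > 0, the integral over x from 0 to ∞ of (√(√(x²+a²)+a)/√(x²+a²))·cos(cx)·e^{-b√(x²+a²)} equals √(π/2) · √(b+√(b²+c²))/√(b²+c²) · e^{-a√(b²+c²)}. -/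
open Real MeasureTheory Filter Set Metric Topology

noncomputable section

namespace Stmt4Aux

/-- the holomorphic integrand -/
def gg (z φ : ℝ) (w : ℂ) : ℂ :=
  Complex.cosh ((w - φ * Complex.I) / 2) * Complex.exp (-z * Complex.cosh w)

/-- its derivative -/
def DD (z φ : ℝ) (w : ℂ) : ℂ :=
  (Complex.sinh ((w - φ * Complex.I) / 2) / 2
    - z * Complex.sinh w * Complex.cosh ((w - φ * Complex.I) / 2))
    * Complex.exp (-z * Complex.cosh w)

lemma hasDerivAt_gg (z φ : ℝ) (w : ℂ) : HasDerivAt (gg z φ) (DD z φ w) w := by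
  have h0 : HasDerivAt (fun w : ℂ => (w - φ * Complex.I) / 2) (1 / 2) w := by
    simpa using ((hasDerivAt_id w).sub_const (φ * Complex.I)).div_const 2
  have h1 : HasDerivAt (fun w : ℂ => Complex.cosh ((w - φ * Complex.I) / 2))
      (Complex.sinh ((w - φ * Complex.I) / 2) * (1 / 2)) w :=
    (Complex.hasDerivAt_cosh _).comp w h0
  have h2 : HasDerivAt (fun w : ℂ => Complex.exp (-z * Complex.cosh w))
      (Complex.exp (-z * Complex.cosh w) * (-z * Complex.sinh w)) w := by
    have hc : HasDerivAt (fun w : ℂ => -z * Complex.cosh w) (-z * Complex.sinh w) w :=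
      (Complex.hasDerivAt_cosh w).const_mul (-z : ℂ)
    exact (Complex.hasDerivAt_exp _).comp w hc
  have := h1.mul h2
  exact this.congr_deriv (by unfold DD; ring)

lemma cosh_real_add_mul_I (x y : ℝ) :
    Complex.cosh (x + y * Complex.I)
      = (Real.cosh x * Real.cos y : ℝ) + (Real.sinh x * Real.sin y : ℝ) * Complex.I := by
  rw [Complex.cosh_add, Complex.cosh_mul_I, Complex.sinh_mul_I]
  push_cast [← Complex.ofReal_cosh, ← Complex.ofReal_sinh, ← Complex.ofReal_cos,
    ← Complex.ofReal_sin]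
  ring

lemma sinh_real_add_mul_I (x y : ℝ) :
    Complex.sinh (x + y * Complex.I)
      = (Real.sinh x * Real.cos y : ℝ) + (Real.cosh x * Real.sin y : ℝ) * Complex.I := by
  rw [Complex.sinh_add, Complex.cosh_mul_I, Complex.sinh_mul_I]
  push_cast [← Complex.ofReal_cosh, ← Complex.ofReal_sinh, ← Complex.ofReal_cos,
    ← Complex.ofReal_sin]
  ring

lemma norm_cosh_le (x y : ℝ) : ‖Complex.cosh (x + y * Complex.I)‖ ≤ Real.cosh x := by
  rw [cosh_real_add_mul_I]
  have h : ‖(((Real.cosh x * Real.cos y : ℝ)) : ℂ) + ((Real.sinh x * Real.sin y : ℝ) : ℂ) * Complex.I‖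
      = Real.sqrt ((Real.cosh x * Real.cos y) ^ 2 + (Real.sinh x * Real.sin y) ^ 2) := by
    rw [Complex.norm_def, Complex.normSq_add_mul_I]
  rw [h]
  have h1 := Real.sin_sq_add_cos_sq y
  have h2 := Real.sinh_sq x
  calc _ ≤ Real.sqrt ((Real.cosh x) ^ 2) := by
        apply Real.sqrt_le_sqrt
        nlinarith [sq_nonneg (Real.sin y), sq_nonneg (Real.cos y), sq_nonneg (Real.sinh x)]
    _ = Real.cosh x := Real.sqrt_sq (Real.cosh_pos x).le

lemma norm_sinh_le (x y : ℝ) : ‖Complex.sinh (x + y * Complex.I)‖ ≤ Real.cosh x := by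
  rw [sinh_real_add_mul_I]
  have h : ‖(((Real.sinh x * Real.cos y : ℝ)) : ℂ) + ((Real.cosh x * Real.sin y : ℝ) : ℂ) * Complex.I‖
      = Real.sqrt ((Real.sinh x * Real.cos y) ^ 2 + (Real.cosh x * Real.sin y) ^ 2) := by
    rw [Complex.norm_def, Complex.normSq_add_mul_I]
  rw [h]
  have h1 := Real.sin_sq_add_cos_sq y
  have h2 := Real.sinh_sq x
  calc _ ≤ Real.sqrt ((Real.cosh x) ^ 2) := by
        apply Real.sqrt_le_sqrt
        nlinarith [sq_nonneg (Real.sin y), sq_nonneg (Real.cos y), sq_nonneg (Real.sinh x)]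
    _ = Real.cosh x := Real.sqrt_sq (Real.cosh_pos x).le

lemma integrable_of_abs_comp {f : ℝ → ℝ} (hf : IntegrableOn (fun x => f |x|) (Ioi 0)) :
    Integrable (fun x : ℝ => f |x|) := by
  have int_Iic : IntegrableOn (fun x : ℝ ↦ f |x|) (Iic 0) := by
    rw [← Measure.map_neg_eq_self (volume : Measure ℝ)]
    have m : MeasurableEmbedding fun x : ℝ => -x := (Homeomorph.neg ℝ).measurableEmbedding
    rw [m.integrableOn_map_iff]
    simp_rw [Function.comp_def, abs_neg, neg_preimage, neg_Iic, neg_zero]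
    exact Iff.mpr integrableOn_Ici_iff_integrableOn_Ioi hf
  have := int_Iic.union hf
  rwa [Iic_union_Ioi, integrableOn_univ] at this

lemma integrable_exp_neg_abs : Integrable (fun t : ℝ => Real.exp (-|t|)) := by
  apply integrable_of_abs_comp (f := fun x => Real.exp (-x))
  apply (exp_neg_integrableOn_Ioi 0 (by norm_num : (0:ℝ) < 1)).congr_fun _ measurableSet_Ioi
  intro x hx
  simp only []
  rw [abs_of_pos hx]
  norm_num

lemma sq_div_four_le_exp {s : ℝ} (hs : 0 ≤ s) : s ^ 2 / 4 ≤ Real.exp s := by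
  have h := Real.add_one_le_exp (s / 2)
  have h2 : Real.exp (s / 2) * Real.exp (s / 2) = Real.exp s := by
    rw [← Real.exp_add]; ring_nf
  have h3 : (s / 2 + 1) * (s / 2 + 1) ≤ Real.exp (s / 2) * Real.exp (s / 2) :=
    mul_le_mul h h (by linarith) ((by linarith : (0:ℝ) ≤ s / 2 + 1).trans h)
  nlinarith

lemma integrable_master (A d : ℝ) (hd : 0 < d) :
    Integrable (fun t : ℝ => Real.exp (A * |t|) * Real.exp (-d * Real.exp |t|)) := by
  set M := |A| + 1 with hM
  have hM0 : (0:ℝ) < M := by positivity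
  have key : ∀ s : ℝ, 0 ≤ s → A * s + s - d * Real.exp s ≤ M ^ 2 / d := by
    intro s hs
    rw [le_div_iff₀ hd]
    have h1 : s ^ 2 / 4 ≤ Real.exp s := sq_div_four_le_exp hs
    have h2 : A + 1 ≤ M := by rw [hM]; have := le_abs_self A; linarith
    have h3 : (A + 1) * (s * d) ≤ M * (s * d) :=
      mul_le_mul_of_nonneg_right h2 (by positivity)
    nlinarith [sq_nonneg (d * s - 2 * M), mul_le_mul_of_nonneg_left h1
      (by positivity : (0:ℝ) ≤ d * d)]
  apply (integrable_exp_neg_abs.const_mul (Real.exp (M ^ 2 / d))).mono'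
  · apply Continuous.aestronglyMeasurable
    continuity
  · filter_upwards with t
    rw [norm_of_nonneg (by positivity), ← Real.exp_add, ← Real.exp_add]
    exact Real.exp_le_exp.2 (by have := key |t| (abs_nonneg t); linarith)

lemma cosh_le_exp_abs (t : ℝ) : Real.cosh t ≤ Real.exp |t| := by
  rw [← Real.cosh_abs, Real.cosh_eq]
  have h : Real.exp (-|t|) ≤ Real.exp |t| := Real.exp_le_exp.2 (by linarith [abs_nonneg t])
  linarith

lemma exp_abs_le_two_cosh (t : ℝ) : Real.exp |t| ≤ 2 * Real.cosh t := by
  rw [← Real.cosh_abs, Real.cosh_eq]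
  have h : (0:ℝ) < Real.exp (-|t|) := Real.exp_pos _
  linarith

/-- the master bound for all our integrands -/
lemma integrable_aux {p q k : ℝ} (hk : 0 < k) (hp : 0 ≤ p) (hq : 0 ≤ q) :
    Integrable (fun t : ℝ =>
      (p + q * Real.cosh t) * Real.cosh (t / 2) * Real.exp (-k * Real.cosh t)) := by
  apply ((integrable_master 2 (k / 2) (by positivity)).const_mul (p + q)).mono'
  · apply Continuous.aestronglyMeasurable; continuity
  · filter_upwards with t
    have h1 : Real.cosh t ≤ Real.exp |t| := cosh_le_exp_abs t
    have h2 : Real.cosh (t / 2) ≤ Real.exp |t| := by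
      calc Real.cosh (t / 2) ≤ Real.exp |t / 2| := cosh_le_exp_abs _
        _ ≤ Real.exp |t| := Real.exp_le_exp.2 (by rw [abs_div]; simp)
    have h3 : Real.exp (-k * Real.cosh t) ≤ Real.exp (-(k / 2) * Real.exp |t|) := by
      apply Real.exp_le_exp.2
      have := exp_abs_le_two_cosh t
      nlinarith
    have hc := Real.cosh_pos t
    have hc2 := Real.cosh_pos (t / 2)
    have he : (1:ℝ) ≤ Real.exp |t| := by
      rw [← Real.exp_zero]; exact Real.exp_le_exp.2 (abs_nonneg t)
    rw [norm_of_nonneg (by positivity)]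
    have h4 : (p + q * Real.cosh t) * Real.cosh (t / 2)
        ≤ (p + q) * Real.exp |t| * Real.exp |t| := by
      have h5 : p + q * Real.cosh t ≤ (p + q) * Real.exp |t| := by nlinarith
      exact mul_le_mul h5 h2 hc2.le (by positivity)
    calc (p + q * Real.cosh t) * Real.cosh (t / 2) * Real.exp (-k * Real.cosh t)
        ≤ (p + q) * Real.exp |t| * Real.exp |t| * Real.exp (-(k / 2) * Real.exp |t|) := by
          apply mul_le_mul h4 h3 (Real.exp_pos _).le (by positivity)
      _ = (p + q) * (Real.exp (2 * |t|) * Real.exp (-(k / 2) * Real.exp |t|)) := by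
          rw [show (2:ℝ) * |t| = |t| + |t| by ring, Real.exp_add]
          ring

lemma tendsto_bound_atTop {k : ℝ} (hk : 0 < k) :
    Tendsto (fun t : ℝ => Real.cosh (t / 2) * Real.exp (-k * Real.cosh t)) atTop (𝓝 0) := by
  have hmain : Tendsto (fun u : ℝ => u * Real.exp (-(k * u))) atTop (𝓝 0) := by
    have h := (tendsto_pow_mul_exp_neg_atTop_nhds_zero 1).comp
      (tendsto_id.const_mul_atTop hk)
    have h2 := h.const_mul (1 / k)
    rw [mul_zero] at h2
    convert h2 using 2 with u
    simp only [Function.comp, pow_one, id]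
    field_simp
  have hcosh : Tendsto (fun t : ℝ => Real.cosh t) atTop atTop := by
    apply tendsto_atTop_mono (fun t => ?_) ((Real.tendsto_exp_atTop).atTop_div_const two_pos)
    rw [Real.cosh_eq]
    have := (Real.exp_pos (-t)).le
    linarith
  have hb : ∀ t : ℝ, ‖Real.cosh (t / 2) * Real.exp (-k * Real.cosh t)‖
      ≤ (fun u : ℝ => u * Real.exp (-(k * u))) (Real.cosh t) := by
    intro t
    rw [norm_of_nonneg (by positivity)]
    simp only []
    have h2 : Real.cosh (t / 2) ≤ Real.cosh t := by
      apply Real.cosh_le_cosh.2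
      rw [abs_div]
      simp only [abs_two]
      linarith [abs_nonneg t]
    have h3 : -k * Real.cosh t = -(k * Real.cosh t) := by ring
    rw [h3]
    exact mul_le_mul_of_nonneg_right h2 (Real.exp_pos _).le
  exact squeeze_zero_norm hb (hmain.comp hcosh)

lemma tendsto_bound_atBot {k : ℝ} (hk : 0 < k) :
    Tendsto (fun t : ℝ => Real.cosh (t / 2) * Real.exp (-k * Real.cosh t)) atBot (𝓝 0) := by
  have h := (tendsto_bound_atTop hk).comp tendsto_neg_atBot_atTop
  convert h using 2 with t
  simp only [Function.comp]
  rw [show (-t) / 2 = -(t/2) by ring, Real.cosh_neg, Real.cosh_neg]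



section Line
variable {z φ k θ : ℝ}

lemma line_arg (t θ φ : ℝ) :
    (((t:ℂ) + θ * Complex.I) - φ * Complex.I) / 2
      = ((t/2 : ℝ) : ℂ) + ((θ - φ)/2 : ℝ) * Complex.I := by
  push_cast; ring

lemma norm_gg_le (hz : 0 < z) (hkθ : k ≤ z * Real.cos θ) (t : ℝ) :
    ‖gg z φ ((t:ℂ) + θ * Complex.I)‖ ≤ Real.cosh (t/2) * Real.exp (-k * Real.cosh t) := by
  unfold gg
  rw [norm_mul]
  have hre : (-(z:ℂ) * Complex.cosh ((t:ℂ) + θ * Complex.I)).re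
      = -z * (Real.cosh t * Real.cos θ) := by
    rw [cosh_real_add_mul_I]
    simp [Complex.mul_re, Complex.add_re, Complex.ofReal_re, Complex.ofReal_im, Complex.cos_ofReal_re]
  apply mul_le_mul ?_ ?_ (norm_nonneg _) (Real.cosh_pos _).le
  · rw [line_arg]; exact norm_cosh_le _ _
  · rw [Complex.norm_exp, hre]
    apply Real.exp_le_exp.2
    have := (Real.cosh_pos t).le
    nlinarith

lemma norm_DD_le (hz : 0 < z) (hkθ : k ≤ z * Real.cos θ) (t : ℝ) :
    ‖DD z φ ((t:ℂ) + θ * Complex.I)‖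
      ≤ (1/2 + z * Real.cosh t) * Real.cosh (t/2) * Real.exp (-k * Real.cosh t) := by
  unfold DD
  rw [norm_mul]
  have hre : (-(z:ℂ) * Complex.cosh ((t:ℂ) + θ * Complex.I)).re
      = -z * (Real.cosh t * Real.cos θ) := by
    rw [cosh_real_add_mul_I]
    simp [Complex.mul_re, Complex.add_re, Complex.ofReal_re, Complex.ofReal_im, Complex.cos_ofReal_re]
  apply mul_le_mul ?_ ?_ (norm_nonneg _) (by positivity)
  · have h1 : ‖Complex.sinh ((((t:ℂ) + θ * Complex.I) - φ * Complex.I) / 2) / 2‖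
        ≤ Real.cosh (t/2) / 2 := by
      rw [norm_div, line_arg]
      simp only [Complex.norm_ofNat]
      have := norm_sinh_le (t/2) ((θ - φ)/2)
      linarith
    have h2 : ‖(z:ℂ) * Complex.sinh ((t:ℂ) + θ * Complex.I)
          * Complex.cosh ((((t:ℂ) + θ * Complex.I) - φ * Complex.I) / 2)‖
        ≤ z * Real.cosh t * Real.cosh (t/2) := by
      rw [norm_mul, norm_mul, line_arg]
      have hz' : ‖(z:ℂ)‖ = z := by
        rw [Complex.norm_real]; exact abs_of_pos hz
      rw [hz']
      apply mul_le_mul (mul_le_mul le_rfl (norm_sinh_le _ _) (norm_nonneg _) hz.le)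
        (norm_cosh_le _ _) (norm_nonneg _) (by positivity)
    calc ‖_ - _‖ ≤ _ + _ := norm_sub_le _ _
      _ ≤ Real.cosh (t/2) / 2 + z * Real.cosh t * Real.cosh (t/2) := add_le_add h1 h2
      _ = (1/2 + z * Real.cosh t) * Real.cosh (t/2) := by ring
  · rw [Complex.norm_exp, hre]
    apply Real.exp_le_exp.2
    have := (Real.cosh_pos t).le
    nlinarith

lemma hasDerivAt_line_t (z φ θ : ℝ) (t : ℝ) :
    HasDerivAt (fun t : ℝ => gg z φ ((t:ℂ) + θ * Complex.I))
      (DD z φ ((t:ℂ) + θ * Complex.I)) t := by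
  have h : HasDerivAt (fun w : ℂ => gg z φ (w + θ * Complex.I))
      (DD z φ ((t:ℂ) + θ * Complex.I)) (t:ℂ) := by
    have := (hasDerivAt_gg z φ ((t:ℂ) + θ * Complex.I)).comp (t:ℂ)
      ((hasDerivAt_id ((t:ℂ))).add_const (θ * Complex.I))
    simpa [Function.comp_def] using this
  exact h.comp_ofReal

lemma hasDerivAt_line_theta (z φ t : ℝ) (θ : ℝ) :
    HasDerivAt (fun θ : ℝ => gg z φ ((t:ℂ) + θ * Complex.I))
      (Complex.I * DD z φ ((t:ℂ) + θ * Complex.I)) θ := by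
  have h : HasDerivAt (fun u : ℂ => gg z φ ((t:ℂ) + u * Complex.I))
      (DD z φ ((t:ℂ) + (θ:ℝ) * Complex.I) * Complex.I) (θ:ℂ) := by
    have hin : HasDerivAt (fun u : ℂ => (t:ℂ) + u * Complex.I) Complex.I (θ:ℂ) := by
      simpa using ((hasDerivAt_id ((θ:ℝ):ℂ)).mul_const Complex.I).const_add ((t:ℂ))
    have := (hasDerivAt_gg z φ ((t:ℂ) + (θ:ℝ) * Complex.I)).comp ((θ:ℝ):ℂ) hin
    simpa [Function.comp_def] using this
  have := h.comp_ofReal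
  rw [mul_comm] at this
  exact this

lemma continuous_gg (z φ : ℝ) : Continuous (gg z φ) := by
  unfold gg
  continuity

lemma continuous_DD (z φ : ℝ) : Continuous (DD z φ) := by
  unfold DD
  continuity

lemma integrable_gg_line (hz : 0 < z) (hk : 0 < k) (hkθ : k ≤ z * Real.cos θ) :
    Integrable (fun t : ℝ => gg z φ ((t:ℂ) + θ * Complex.I)) := by
  apply (integrable_aux (p := 1) (q := 0) hk zero_le_one le_rfl).mono'
  · exact ((continuous_gg z φ).comp (by continuity)).aestronglyMeasurable
  · filter_upwards with t
    have := norm_gg_le (φ := φ) hz hkθ t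
    simpa using this

lemma integrable_DD_line (hz : 0 < z) (hk : 0 < k) (hkθ : k ≤ z * Real.cos θ) :
    Integrable (fun t : ℝ => DD z φ ((t:ℂ) + θ * Complex.I)) := by
  apply (integrable_aux (p := 1/2) (q := z) hk (by norm_num) hz.le).mono'
  · exact ((continuous_DD z φ).comp (by continuity)).aestronglyMeasurable
  · filter_upwards with t
    exact norm_DD_le hz hkθ t

lemma tendsto_gg_line_atTop (hz : 0 < z) (hk : 0 < k) (hkθ : k ≤ z * Real.cos θ) :
    Tendsto (fun t : ℝ => gg z φ ((t:ℂ) + θ * Complex.I)) atTop (𝓝 0) :=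
  squeeze_zero_norm (norm_gg_le hz hkθ) (tendsto_bound_atTop hk)

lemma tendsto_gg_line_atBot (hz : 0 < z) (hk : 0 < k) (hkθ : k ≤ z * Real.cos θ) :
    Tendsto (fun t : ℝ => gg z φ ((t:ℂ) + θ * Complex.I)) atBot (𝓝 0) :=
  squeeze_zero_norm (norm_gg_le hz hkθ) (tendsto_bound_atBot hk)

lemma integral_DD_line_zero (hz : 0 < z) (hk : 0 < k) (hkθ : k ≤ z * Real.cos θ) :
    ∫ t : ℝ, DD z φ ((t:ℂ) + θ * Complex.I) = 0 := by
  have hInt := integrable_DD_line (φ := φ) hz hk hkθ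
  have h1 := integral_Ioi_of_hasDerivAt_of_tendsto' (a := 0)
    (fun x _ => hasDerivAt_line_t z φ θ x) hInt.integrableOn
    (tendsto_gg_line_atTop (φ := φ) hz hk hkθ)
  have h2 := integral_Iic_of_hasDerivAt_of_tendsto' (a := 0)
    (fun x _ => hasDerivAt_line_t z φ θ x) hInt.integrableOn
    (tendsto_gg_line_atBot (φ := φ) hz hk hkθ)
  have h3 := intervalIntegral.integral_Iic_add_Ioi (b := (0:ℝ)) hInt.integrableOn hInt.integrableOn
  rw [h1, h2] at h3
  rw [← h3]
  ring


lemma cos_anti {x y : ℝ} (hx : 0 ≤ x) (hy : y ≤ π) (hxy : x ≤ y) : Real.cos y ≤ Real.cos x := by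
  rcases eq_or_lt_of_le hxy with h | h
  · rw [h]
  · exact (Real.cos_lt_cos_of_nonneg_of_le_pi hx hy h).le

lemma FF_const (z φ ψ : ℝ) (hz : 0 < z) (hφ0 : 0 ≤ φ) (hφψ : φ < ψ) (hψ : ψ < π/2) :
    ∫ t : ℝ, gg z φ ((t:ℂ) + (φ:ℝ) * Complex.I)
      = ∫ t : ℝ, gg z φ ((t:ℂ) + ((0:ℝ):ℝ) * Complex.I) := by
  have hψ0 : 0 < ψ := lt_of_le_of_lt hφ0 hφψ
  have hcosψ : 0 < Real.cos ψ :=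
    Real.cos_pos_of_mem_Ioo ⟨by linarith [Real.pi_pos], hψ⟩
  set k := z * Real.cos ψ with hkdef
  have hk0 : 0 < k := mul_pos hz hcosψ
  have hcos : ∀ θ : ℝ, |θ| ≤ ψ → k ≤ z * Real.cos θ := by
    intro θ hθ
    apply mul_le_mul_of_nonneg_left _ hz.le
    rw [← Real.cos_abs θ]
    exact cos_anti (abs_nonneg θ) (by linarith [Real.pi_pos]) hθ
  set F : ℝ → ℂ := fun θ => ∫ t : ℝ, gg z φ ((t:ℂ) + θ * Complex.I) with hF
  have key : ∀ θ₀ ∈ Icc 0 φ, HasDerivAt F 0 θ₀ := by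
    intro θ₀ hθ₀
    obtain ⟨hθ₀0, hθ₀φ⟩ := hθ₀
    set ε := ψ - φ with hε
    have hε0 : 0 < ε := by linarith
    have hball : ∀ θ ∈ ball θ₀ ε, |θ| ≤ ψ := by
      intro θ hθ
      rw [mem_ball, Real.dist_eq, abs_lt] at hθ
      rw [abs_le]
      constructor <;> [linarith; linarith]
    have hθ₀ψ : |θ₀| ≤ ψ := by rw [abs_le]; constructor <;> linarith
    have main := hasDerivAt_integral_of_dominated_loc_of_deriv_le
      (F := fun (θ : ℝ) (t : ℝ) => gg z φ ((t:ℂ) + θ * Complex.I))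
      (F' := fun (θ : ℝ) (t : ℝ) => Complex.I * DD z φ ((t:ℂ) + θ * Complex.I))
      (x₀ := θ₀) (s := ball θ₀ ε)
      (bound := fun t => (1/2 + z * Real.cosh t) * Real.cosh (t/2)
        * Real.exp (-k * Real.cosh t))
      (ball_mem_nhds θ₀ hε0)
      (Eventually.of_forall fun θ =>
        ((continuous_gg z φ).comp (by continuity)).aestronglyMeasurable)
      (integrable_gg_line hz hk0 (hcos θ₀ hθ₀ψ))
      ((continuous_const.mul ((continuous_DD z φ).comp (by continuity : Continuous fun t : ℝ =>
        (t:ℂ) + θ₀ * Complex.I))).aestronglyMeasurable)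
      (Eventually.of_forall fun t => fun θ hθ => by
        rw [norm_mul, Complex.norm_I, one_mul]
        exact norm_DD_le hz (hcos θ (hball θ hθ)) t)
      (integrable_aux (p := 1/2) (q := z) hk0 (by norm_num) hz.le)
      (Eventually.of_forall fun t => fun θ hθ => hasDerivAt_line_theta z φ t θ)
    obtain ⟨-, hder⟩ := main
    have hzero : (∫ t : ℝ, Complex.I * DD z φ ((t:ℂ) + θ₀ * Complex.I)) = 0 := by
      rw [integral_const_mul, integral_DD_line_zero hz hk0 (hcos θ₀ hθ₀ψ), mul_zero]
    rw [hzero] at hder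
    exact hder
  have hcont : ContinuousOn F (Icc 0 φ) := fun x hx =>
    (key x hx).continuousAt.continuousWithinAt
  have hconst := constant_of_has_deriv_right_zero hcont
    (fun x hx => ((key x ⟨hx.1, hx.2.le⟩).hasDerivWithinAt))
  have := hconst φ (right_mem_Icc.2 hφ0)
  simpa [hF] using this


lemma G1 (z : ℝ) (hz : 0 < z) :
    ∫ t : ℝ, Real.cosh (t/2) * Real.exp (-z * Real.cosh t)
      = 2 * Real.sqrt (π / (2*z)) * Real.exp (-z) := by
  set c := Real.sqrt (2*z) with hc
  have hc0 : 0 < c := Real.sqrt_pos.2 (by linarith)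
  have hc2 : c^2 = 2*z := Real.sq_sqrt (by linarith)
  set f : ℝ → ℝ := fun t => c * Real.sinh (t/2) with hf
  set f' : ℝ → ℝ := fun t => c * (Real.cosh (t/2) * (1/2)) with hf'
  have hderiv : ∀ t : ℝ, HasDerivAt f (f' t) t := by
    intro t
    have h1 : HasDerivAt (fun t : ℝ => t/2) (1/2) t := by
      simpa using (hasDerivAt_id t).div_const 2
    have h2 := (Real.hasDerivAt_sinh (t/2)).comp t h1
    exact h2.const_mul c
  have hinj : InjOn f univ := by
    have hm : StrictMono f := by
      intro s t hst
      have := Real.sinh_strictMono (show s/2 < t/2 by linarith)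
      exact (mul_lt_mul_iff_right₀ hc0).2 this
    exact hm.injective.injOn
  have hsurj : f '' univ = univ := by
    rw [Set.image_univ, Set.range_eq_univ]
    intro y
    refine ⟨2 * Real.arsinh (y / c), ?_⟩
    rw [hf]
    simp only []
    rw [show 2 * Real.arsinh (y / c) / 2 = Real.arsinh (y / c) by ring, Real.sinh_arsinh]
    field_simp
  have key := integral_image_eq_integral_abs_deriv_smul MeasurableSet.univ
    (fun x _ => (hderiv x).hasDerivWithinAt) hinj (fun x => Real.exp (-x^2))
  rw [hsurj] at key
  simp only [Measure.restrict_univ] at key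
  have hgauss : ∫ x : ℝ, Real.exp (-x^2) = Real.sqrt π := by
    have h := integral_gaussian 1
    simp only [one_mul, neg_mul, div_one] at h
    rw [← h]
  have hpt : ∀ x : ℝ, |f' x| • Real.exp (-(f x)^2)
      = (c/2 * Real.exp z) * (Real.cosh (x/2) * Real.exp (-z * Real.cosh x)) := by
    intro x
    have hch : Real.cosh x = 2 * Real.sinh (x/2)^2 + 1 := by
      have h1 := Real.cosh_two_mul (x/2)
      have h2 := Real.cosh_sq (x/2)
      rw [show 2 * (x/2) = x by ring] at h1
      rw [h1, h2]; ring
    have habs : |f' x| = c * (Real.cosh (x/2) * (1/2)) := by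
      rw [hf']
      have := Real.cosh_pos (x/2)
      exact abs_of_pos (by positivity)
    have hexp : -(f x)^2 = z + (-z * Real.cosh x) := by
      rw [hf]
      simp only []
      rw [mul_pow, hc2, hch]; ring
    rw [smul_eq_mul, habs, hexp, Real.exp_add]
    ring
  simp only [hpt] at key
  rw [MeasureTheory.integral_const_mul, hgauss] at key
  have hsq : Real.sqrt (π / (2*z)) = Real.sqrt π / c := by
    rw [hc, ← Real.sqrt_div Real.pi_pos.le]
  rw [hsq]
  have hez := Real.exp_pos z
  rw [Real.exp_neg]
  field_simp at key ⊢
  linarith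

lemma F_zero_re (z φ : ℝ) (hz : 0 < z) :
    (∫ t : ℝ, gg z φ ((t:ℂ) + ((0:ℝ):ℝ) * Complex.I)).re
      = Real.cos (φ/2) * ∫ t : ℝ, Real.cosh (t/2) * Real.exp (-z * Real.cosh t) := by
  have hk : z ≤ z * Real.cos (0:ℝ) := by simp
  have hint := integrable_gg_line (φ := φ) (θ := 0) hz hz hk
  have h1 : ∫ t : ℝ, ((gg z φ ((t:ℂ) + ((0:ℝ):ℝ) * Complex.I)).re)
      = (∫ t : ℝ, gg z φ ((t:ℂ) + ((0:ℝ):ℝ) * Complex.I)).re := integral_re hint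
  rw [← h1, ← MeasureTheory.integral_const_mul]
  apply integral_congr_ae
  filter_upwards with t
  have hgg : gg z φ ((t:ℂ) + ((0:ℝ):ℝ) * Complex.I)
      = ((Real.cosh (t/2) * Real.cos (φ/2) * Real.exp (-z * Real.cosh t) : ℝ) : ℂ)
        + ((Real.sinh (t/2) * Real.sin (-(φ/2)) * Real.exp (-z * Real.cosh t) : ℝ) : ℂ)
          * Complex.I := by
    unfold gg
    rw [line_arg, cosh_real_add_mul_I]
    rw [show ((0:ℝ) - φ)/2 = -(φ/2) by ring, Real.cos_neg]
    rw [show ((t:ℂ) + (((0:ℝ):ℝ):ℂ) * Complex.I) = (t:ℂ) by push_cast; ring]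
    rw [show -(z:ℂ) * Complex.cosh (t:ℂ) = ((-z * Real.cosh t : ℝ) : ℂ) by
      rw [← Complex.ofReal_cosh]; push_cast; ring]
    rw [← Complex.ofReal_exp]
    push_cast
    ring
  rw [hgg]
  simp only [Complex.add_re, Complex.mul_re, Complex.I_re, Complex.I_im, Complex.ofReal_re,
    Complex.ofReal_im, RCLike.re_to_complex]
  ring


lemma F_phi_re (z φ : ℝ) (hz : 0 < z) (hφ0 : 0 ≤ φ) (hφ : φ < π/2) :
    (∫ t : ℝ, gg z φ ((t:ℂ) + (φ:ℝ) * Complex.I)).re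
      = ∫ t : ℝ, Real.cosh (t/2) * (Real.exp (-(z * Real.cos φ) * Real.cosh t)
          * Real.cos (z * Real.sin φ * Real.sinh t)) := by
  have hcosφ : 0 < Real.cos φ := Real.cos_pos_of_mem_Ioo ⟨by linarith [Real.pi_pos], hφ⟩
  have hint := integrable_gg_line (φ := φ) (θ := φ) hz (mul_pos hz hcosφ) le_rfl
  have h1 : ∫ t : ℝ, ((gg z φ ((t:ℂ) + (φ:ℝ) * Complex.I)).re)
      = (∫ t : ℝ, gg z φ ((t:ℂ) + (φ:ℝ) * Complex.I)).re := integral_re hint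
  rw [← h1]
  apply integral_congr_ae
  filter_upwards with t
  have hgg : gg z φ ((t:ℂ) + (φ:ℝ) * Complex.I)
      = ((Real.cosh (t/2) * (Real.exp (-(z * Real.cos φ) * Real.cosh t)
            * Real.cos (-(z * Real.sin φ) * Real.sinh t)) : ℝ) : ℂ)
        + ((Real.cosh (t/2) * (Real.exp (-(z * Real.cos φ) * Real.cosh t)
            * Real.sin (-(z * Real.sin φ) * Real.sinh t)) : ℝ) : ℂ) * Complex.I := by
    unfold gg
    rw [line_arg]
    rw [show ((φ - φ)/2 : ℝ) = 0 by ring]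
    rw [cosh_real_add_mul_I t φ]
    have harg : -(z:ℂ) * (((Real.cosh t * Real.cos φ : ℝ) : ℂ)
          + ((Real.sinh t * Real.sin φ : ℝ) : ℂ) * Complex.I)
        = ((-(z * Real.cos φ) * Real.cosh t : ℝ) : ℂ)
          + ((-(z * Real.sin φ) * Real.sinh t : ℝ) : ℂ) * Complex.I := by
      push_cast; ring
    rw [harg, Complex.exp_eq_exp_re_mul_sin_add_cos]
    simp only [Complex.add_re, Complex.add_im, Complex.ofReal_re, Complex.ofReal_im,
      Complex.mul_re, Complex.mul_im, Complex.I_re, Complex.I_im, mul_zero, mul_one,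
      zero_mul, sub_zero, zero_sub, add_zero, zero_add, neg_zero, neg_neg,
      Complex.ofReal_zero]
    rw [← Complex.ofReal_exp, ← Complex.ofReal_cos, ← Complex.ofReal_sin,
      ← Complex.ofReal_cosh]
    push_cast
    ring
  rw [hgg]
  simp only [Complex.add_re, Complex.mul_re, Complex.I_re, Complex.I_im, Complex.ofReal_re,
    Complex.ofReal_im, RCLike.re_to_complex]
  rw [show -(z * Real.sin φ) * Real.sinh t = -(z * Real.sin φ * Real.sinh t) by ring,
    Real.cos_neg]
  ring


lemma subst_sinh (a b c : ℝ) (ha : 0 < a) :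
    ∫ x in Ioi (0:ℝ),
        Real.sqrt (Real.sqrt (x^2 + a^2) + a) / Real.sqrt (x^2 + a^2)
          * Real.cos (c * x) * Real.exp (-b * Real.sqrt (x^2 + a^2))
      = ∫ t in Ioi (0:ℝ), Real.sqrt (2*a) *
          (Real.cosh (t/2) * (Real.exp (-(a*b) * Real.cosh t)
            * Real.cos (a*c * Real.sinh t))) := by
  set f : ℝ → ℝ := fun t => a * Real.sinh t with hf
  set g : ℝ → ℝ := fun x => Real.sqrt (Real.sqrt (x^2 + a^2) + a) / Real.sqrt (x^2 + a^2)
      * Real.cos (c * x) * Real.exp (-b * Real.sqrt (x^2 + a^2)) with hg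
  have hderiv : ∀ t : ℝ, HasDerivAt f (a * Real.cosh t) t :=
    fun t => (Real.hasDerivAt_sinh t).const_mul a
  have hinj : InjOn f (Ioi 0) := by
    have hm : StrictMono f := fun s t hst =>
      (mul_lt_mul_iff_right₀ ha).2 (Real.sinh_strictMono hst)
    exact hm.injective.injOn
  have himg : f '' (Ioi 0) = Ioi 0 := by
    ext y
    constructor
    · rintro ⟨t, ht, rfl⟩
      have : 0 < Real.sinh t := Real.sinh_pos_iff.2 ht
      exact mul_pos ha this
    · intro hy
      refine ⟨Real.arsinh (y / a), ?_, ?_⟩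
      · exact Real.arsinh_pos_iff.2 (div_pos hy ha)
      · rw [hf]
        simp only []
        rw [Real.sinh_arsinh]
        field_simp
  have key := integral_image_eq_integral_abs_deriv_smul measurableSet_Ioi
    (fun x _ => (hderiv x).hasDerivWithinAt) hinj g
  rw [himg] at key
  rw [key]
  apply setIntegral_congr_fun measurableSet_Ioi
  intro t ht
  have hct := Real.cosh_pos t
  have habs : |a * Real.cosh t| = a * Real.cosh t := abs_of_pos (by positivity)
  have hsq : (a * Real.sinh t)^2 + a^2 = (a * Real.cosh t)^2 := by
    have := Real.cosh_sq t
    nlinarith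
  have hsqrt : Real.sqrt ((a * Real.sinh t)^2 + a^2) = a * Real.cosh t := by
    rw [hsq, Real.sqrt_sq (by positivity)]
  have hch2 : Real.cosh t = 2 * Real.cosh (t/2)^2 - 1 := by
    have h1 := Real.cosh_two_mul (t/2)
    have h2 := Real.cosh_sq (t/2)
    rw [show 2 * (t/2) = t by ring] at h1
    rw [h1, h2]; ring
  have hsqrt2 : Real.sqrt (a * Real.cosh t + a) = Real.sqrt (2*a) * Real.cosh (t/2) := by
    rw [show a * Real.cosh t + a = (2*a) * Real.cosh (t/2)^2 from by rw [hch2]; ring]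
    rw [Real.sqrt_mul (by positivity), Real.sqrt_sq (Real.cosh_pos (t/2)).le]
  simp only [hf, hg, smul_eq_mul]
  rw [habs, hsqrt, hsqrt2]
  have hcc := Real.cosh_pos (t/2)
  field_simp

lemma even_integral (F : ℝ → ℝ) (hF : ∀ t, F (-t) = F t) :
    ∫ t : ℝ, F t = 2 * ∫ t in Ioi (0:ℝ), F t := by
  have h : ∀ t : ℝ, F |t| = F t := by
    intro t
    rcases abs_choice t with h | h
    · rw [h]
    · rw [h, hF]
  calc ∫ t : ℝ, F t = ∫ t : ℝ, F |t| := by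
        congr 1
        ext t
        rw [h]
    _ = 2 * ∫ t in Ioi (0:ℝ), F t := integral_comp_abs

end Line
end Stmt4Aux


open Stmt4Aux in
theorem stmt4 (a b c : ℝ) (ha : 0 < a) (hb : 0 < b) (hc : 0 < c) :
    ∫ x in Set.Ioi (0:ℝ),
        Real.sqrt (Real.sqrt (x^2 + a^2) + a) / Real.sqrt (x^2 + a^2)
          * Real.cos (c * x) * Real.exp (-b * Real.sqrt (x^2 + a^2))
      = Real.sqrt (π / 2) * Real.sqrt (b + Real.sqrt (b^2 + c^2)) / Real.sqrt (b^2 + c^2)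
        * Real.exp (-a * Real.sqrt (b^2 + c^2)) := by
  have hb2c2 : (0:ℝ) < b^2 + c^2 := by positivity
  set R := Real.sqrt (b^2 + c^2) with hRdef
  have hR0 : 0 < R := Real.sqrt_pos.2 hb2c2
  have hR2 : R^2 = b^2 + c^2 := Real.sq_sqrt hb2c2.le
  have hbR : b < R := by nlinarith
  set φ := Real.arccos (b / R) with hφdef
  have hbR1 : b / R ≤ 1 := by rw [div_le_one hR0]; exact hbR.le
  have hbR0 : 0 < b / R := div_pos hb hR0
  have hcosφ : Real.cos φ = b / R := Real.cos_arccos (by linarith) hbR1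
  have hφ0 : 0 ≤ φ := Real.arccos_nonneg _
  have hφlt : φ < π/2 := Real.arccos_lt_pi_div_two.2 hbR0
  have hsinφ : Real.sin φ = c / R := by
    rw [hφdef, Real.sin_arccos]
    rw [show 1 - (b/R)^2 = (c/R)^2 from by field_simp; nlinarith]
    exact Real.sqrt_sq (by positivity)
  set z := a * R with hzdef
  have hz0 : 0 < z := mul_pos ha hR0
  have hzc : z * Real.cos φ = a * b := by
    rw [hcosφ, hzdef]; field_simp
  have hzs : z * Real.sin φ = a * c := by
    rw [hsinφ, hzdef]; field_simp
  set E : ℝ → ℝ := fun t => Real.cosh (t/2) * (Real.exp (-(a*b) * Real.cosh t)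
    * Real.cos (a*c * Real.sinh t)) with hEdef
  have hEeven : ∀ t, E (-t) = E t := by
    intro t
    simp only [hEdef, neg_div, Real.cosh_neg, Real.sinh_neg, mul_neg, Real.cos_neg]
  rw [subst_sinh a b c ha]
  rw [MeasureTheory.integral_const_mul]
  have h3 : ∫ t : ℝ, E t = (∫ t : ℝ, gg z φ ((t:ℂ) + (φ:ℝ) * Complex.I)).re := by
    rw [F_phi_re z φ hz0 hφ0 hφlt]
    simp only [hEdef, hzc, hzs]
  have h4 := FF_const z φ ((φ + π/2)/2) hz0 hφ0 (by linarith) (by linarith)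
  have h5 := F_zero_re z φ hz0
  have h6 := G1 z hz0
  have h2 : ∫ t : ℝ, E t = 2 * ∫ t in Set.Ioi (0:ℝ), E t := even_integral E hEeven
  have h7 : ∫ t in Set.Ioi (0:ℝ), E t
      = Real.cos (φ/2) * (Real.sqrt (π/(2*z)) * Real.exp (-z)) := by
    have h8 := h3
    rw [h4, h5, h6] at h8
    rw [h2] at h8
    linarith
  rw [h7]
  have hcoshalf : Real.cos (φ/2) = Real.sqrt ((1 + b/R)/2) := by
    rw [← hcosφ]
    exact Real.cos_half (by linarith [Real.pi_pos]) (by linarith [Real.pi_pos])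
  have hexpz : Real.exp (-z) = Real.exp (-a * R) := by
    rw [hzdef]; ring_nf
  rw [hcoshalf, hexpz]
  have key : Real.sqrt (2*a) * (Real.sqrt ((1 + b/R)/2) * Real.sqrt (π/(2*z)))
      = Real.sqrt (π/2) * Real.sqrt (b + R) / R := by
    rw [← Real.sqrt_mul (by positivity : (0:ℝ) ≤ (1+b/R)/2) (π/(2*z))]
    rw [← Real.sqrt_mul (by positivity : (0:ℝ) ≤ 2*a)]
    rw [← Real.sqrt_mul (by positivity : (0:ℝ) ≤ π/2) (b+R)]
    rw [show Real.sqrt (π/2*(b+R)) / R = Real.sqrt (π/2*(b+R)) / Real.sqrt (R^2) from by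
      rw [Real.sqrt_sq hR0.le]]
    rw [← Real.sqrt_div (by positivity : (0:ℝ) ≤ π/2*(b+R))]
    congr 1
    rw [hzdef]
    field_simp
    ring
  linear_combination Real.exp (-a * R) * key
end
end

section
/- The integral over x from 0 to ∞ of (√(√(x²+4)+2)/√(x²+4))·cos(4x)·e^{-3√(x²+4)} equals 2√π/(5e^{10}). -/
open Real MeasureTheory Set

lemma sqrt_pos4 (v : ℝ) : 0 < Real.sqrt (v^2+4) := Real.sqrt_pos.2 (by positivity)

lemma sq_sqrt4 (v : ℝ) : (Real.sqrt (v^2+4))^2 = v^2+4 := Real.sq_sqrt (by positivity)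

lemma g1_deriv (v : ℝ) (hv : v ∈ Set.Ioi (0:ℝ)) :
    HasDerivWithinAt (fun v : ℝ => v * Real.sqrt (v^2+4))
      ((2*v^2+4)/Real.sqrt (v^2+4)) (Set.Ioi 0) v := by
  have h1 : HasDerivAt (fun v : ℝ => v^2+4) (2*v) v := by
    simpa using ((hasDerivAt_pow 2 v).add_const 4)
  have h2 : HasDerivAt (fun v : ℝ => Real.sqrt (v^2+4))
      (1/(2*Real.sqrt (v^2+4)) * (2*v)) v :=
    (Real.hasDerivAt_sqrt (by positivity)).comp v h1
  have h3 := (hasDerivAt_id v).mul h2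
  have he : (1 : ℝ) * Real.sqrt (v^2+4) + v * (1/(2*Real.sqrt (v^2+4)) * (2*v))
      = (2*v^2+4)/Real.sqrt (v^2+4) := by
    have h4 := sqrt_pos4 v
    have h5 := sq_sqrt4 v
    field_simp
    nlinarith [h5]
  have h6 := h3.hasDerivWithinAt (s := Set.Ioi 0)
  exact he ▸ h6

lemma g1_inj : Set.InjOn (fun v : ℝ => v * Real.sqrt (v^2+4)) (Set.Ioi 0) := by
  intro x hx y hy hxy
  simp only [Set.mem_Ioi] at hx hy
  have hxy : x * Real.sqrt (x^2+4) = y * Real.sqrt (y^2+4) := hxy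
  have hx2 : (x * Real.sqrt (x^2+4))^2 = x^2*(x^2+4) := by
    rw [mul_pow, sq_sqrt4]
  have hy2 : (y * Real.sqrt (y^2+4))^2 = y^2*(y^2+4) := by
    rw [mul_pow, sq_sqrt4]
  have : x^2*(x^2+4) = y^2*(y^2+4) := by rw [← hx2, ← hy2, hxy]
  have h0 : (x^2 - y^2) * (x^2+y^2+4) = 0 := by linear_combination this
  have h1 : x^2 = y^2 := by
    rcases mul_eq_zero.1 h0 with h|h
    · linarith
    · nlinarith
  have h2 : (x-y)*(x+y) = 0 := by linear_combination h1
  rcases mul_eq_zero.1 h2 with h|h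
  · linarith
  · linarith

lemma g1_image : (fun v : ℝ => v * Real.sqrt (v^2+4)) '' (Set.Ioi 0) = Set.Ioi 0 := by
  apply Set.eq_of_subset_of_subset
  · rintro x ⟨v, hv, rfl⟩
    simp only [Set.mem_Ioi] at hv ⊢
    exact mul_pos hv (sqrt_pos4 v)
  · intro x hx
    simp only [Set.mem_Ioi] at hx
    refine ⟨Real.sqrt (Real.sqrt (x^2+4) - 2), ?_, ?_⟩
    · simp only [Set.mem_Ioi]
      apply Real.sqrt_pos.2
      have : (2:ℝ) < Real.sqrt (x^2+4) := by
        rw [show (2:ℝ) = Real.sqrt 4 by rw [show (4:ℝ) = 2^2 by norm_num, Real.sqrt_sq]; norm_num]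
        exact Real.sqrt_lt_sqrt (by norm_num) (by nlinarith)
      linarith
    · have h4 : (2:ℝ) ≤ Real.sqrt (x^2+4) := by
        rw [show (2:ℝ) = Real.sqrt 4 by rw [show (4:ℝ) = 2^2 by norm_num, Real.sqrt_sq]; norm_num]
        exact Real.sqrt_le_sqrt (by nlinarith)
      set s := Real.sqrt (x^2+4) with hs
      have hs2 : s^2 = x^2+4 := sq_sqrt4 x
      have h1 : (Real.sqrt (s-2))^2 = s - 2 := Real.sq_sqrt (by linarith)
      have h2 : (Real.sqrt (s-2))^2 + 4 = s + 2 := by rw [h1]; ring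
      show Real.sqrt (s-2) * Real.sqrt ((Real.sqrt (s-2))^2 + 4) = x
      rw [h2]
      have h3 : Real.sqrt (s+2) * Real.sqrt (s-2) = Real.sqrt ((s+2)*(s-2)) :=
        (Real.sqrt_mul (by linarith) _).symm
      have h5 : (s+2)*(s-2) = x^2 := by nlinarith
      rw [mul_comm, h3, h5, Real.sqrt_sq hx.le]

lemma stepA :
    (∫ x in Set.Ioi (0:ℝ), Real.sqrt (Real.sqrt (x^2 + 4) + 2) / Real.sqrt (x^2 + 4)
          * Real.cos (4 * x) * Real.exp (-3 * Real.sqrt (x^2 + 4)))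
    = ∫ v in Set.Ioi (0:ℝ), 2 * (Real.cos (4 * (v * Real.sqrt (v^2+4))) * Real.exp (-3*v^2-6)) := by
  conv_lhs => rw [← g1_image]
  rw [integral_image_eq_integral_abs_deriv_smul measurableSet_Ioi g1_deriv g1_inj]
  apply setIntegral_congr_fun measurableSet_Ioi
  intro v hv
  simp only [Set.mem_Ioi] at hv
  simp only [smul_eq_mul]
  have h4 := sqrt_pos4 v
  have h5 := sq_sqrt4 v
  have hx2 : (v * Real.sqrt (v^2+4))^2 + 4 = (v^2+2)^2 := by
    rw [mul_pow, h5]; ring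
  rw [hx2, Real.sqrt_sq (by positivity), show v^2 + 2 + 2 = v^2 + 4 by ring,
    abs_of_pos (by positivity), show (-3:ℝ)*(v^2+2) = -3*v^2-6 by ring]
  field_simp
  ring

lemma stepB : (∫ v in Set.Ioi (0:ℝ), 2 * (Real.cos (4*(v*Real.sqrt (v^2+4))) * Real.exp (-3*v^2-6)))
    = ∫ v : ℝ, Real.cos (4*(v*Real.sqrt (v^2+4))) * Real.exp (-3*v^2-6) := by
  rw [MeasureTheory.integral_const_mul 2 _,
    ← integral_comp_abs (f := fun v => Real.cos (4*(v*Real.sqrt (v^2+4))) * Real.exp (-3*v^2-6))]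
  apply integral_congr_ae
  filter_upwards with x
  rcases le_or_gt 0 x with h | h
  · rw [abs_of_nonneg h]
  · rw [abs_of_neg h]
    rw [show (-x)^2 = x^2 by ring, show 4*(-x*Real.sqrt (x^2+4)) = -(4*(x*Real.sqrt (x^2+4))) by ring,
      Real.cos_neg]

lemma g2_deriv (t : ℝ) (ht : t ∈ Set.Ioi (0:ℝ)) :
    HasDerivWithinAt (fun t : ℝ => t - 1/t) (1+1/t^2) (Set.Ioi 0) t := by
  simp only [Set.mem_Ioi] at ht
  have h := ((hasDerivAt_id t).sub (hasDerivAt_inv (ne_of_gt ht))).hasDerivWithinAt (s := Set.Ioi 0)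
  have he : (1 : ℝ) - (-(t^2)⁻¹) = 1 + 1/t^2 := by
    field_simp
    ring
  simpa only [one_div, he, Pi.sub_def, id_eq] using h

lemma g2_inj : Set.InjOn (fun t : ℝ => t - 1/t) (Set.Ioi 0) := by
  intro x hx y hy hxy
  simp only [Set.mem_Ioi] at hx hy
  have hxy : x - 1/x = y - 1/y := hxy
  have hx' : x ≠ 0 := ne_of_gt hx
  have hy' : y ≠ 0 := ne_of_gt hy
  field_simp at hxy
  have h0 : (x - y) * (x*y+1) = 0 := by linear_combination hxy
  rcases mul_eq_zero.1 h0 with h|h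
  · linarith
  · nlinarith

lemma g2_image : (fun t : ℝ => t - 1/t) '' (Set.Ioi 0) = Set.univ := by
  apply Set.eq_univ_of_forall
  intro v
  set s := Real.sqrt (v^2+4) with hs
  have hs2 : s^2 = v^2+4 := sq_sqrt4 v
  have hs0 : 0 ≤ s := Real.sqrt_nonneg _
  have hsv : -v < s := by nlinarith
  refine ⟨(v+s)/2, ?_, ?_⟩
  · simp only [Set.mem_Ioi]; linarith
  · show (v+s)/2 - 1/((v+s)/2) = v
    have hvs : (0:ℝ) < v + s := by linarith
    have hne : v + s ≠ 0 := ne_of_gt hvs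
    field_simp
    nlinarith

lemma stepC : (∫ v : ℝ, Real.cos (4*(v*Real.sqrt (v^2+4))) * Real.exp (-3*v^2-6))
    = ∫ t in Set.Ioi (0:ℝ), (1+1/t^2) * (Real.cos (4*(t^2-1/t^2)) * Real.exp (-3*t^2-3/t^2)) := by
  have h := integral_image_eq_integral_abs_deriv_smul measurableSet_Ioi g2_deriv g2_inj
    (fun v => Real.cos (4*(v*Real.sqrt (v^2+4))) * Real.exp (-3*v^2-6))
  rw [g2_image, MeasureTheory.setIntegral_univ] at h
  rw [h]
  apply setIntegral_congr_fun measurableSet_Ioi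
  intro t ht
  simp only [Set.mem_Ioi] at ht
  have ht' : t ≠ 0 := ne_of_gt ht
  have h1 : (t-1/t)^2 + 4 = (t+1/t)^2 := by field_simp; ring
  have h2 : Real.sqrt ((t-1/t)^2+4) = t+1/t := by
    rw [h1, Real.sqrt_sq (by positivity)]
  simp only [smul_eq_mul]
  rw [h2, abs_of_pos (by positivity), show (t-1/t)*(t+1/t) = t^2-1/t^2 by field_simp; ring,
    show -3*(t-1/t)^2-6 = -3*t^2-3/t^2 by field_simp; ring]


noncomputable def EE (c t : ℝ) : ℂ :=
  Complex.exp (-(3-4*Complex.I)*((t^2 : ℝ):ℂ) - (3+4*Complex.I)*((c^2/t^2 : ℝ):ℂ))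

noncomputable def Phi (c : ℝ) : ℂ := ∫ t in Set.Ioi (0:ℝ), EE c t

lemma re_lin (r q : ℝ) : ((-(3-4*Complex.I)*(r:ℂ) - (3+4*Complex.I)*(q:ℂ)).re) = -3*r-3*q := by
  simp [Complex.sub_re, Complex.mul_re]

lemma im_lin (r q : ℝ) : ((-(3-4*Complex.I)*(r:ℂ) - (3+4*Complex.I)*(q:ℂ)).im) = 4*r-4*q := by
  simp [Complex.sub_im, Complex.mul_im]

lemma EE_norm (c t : ℝ) : ‖EE c t‖ = Real.exp (-3*t^2 - 3*(c^2/t^2)) := by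
  rw [EE, Complex.norm_exp, re_lin]

lemma EE_meas (c : ℝ) : Measurable (EE c) := by
  apply Complex.measurable_exp.comp
  apply Measurable.sub
  · exact (Complex.measurable_ofReal.comp ((measurable_id.pow_const 2))).const_mul _
  · exact (Complex.measurable_ofReal.comp (measurable_const.div (measurable_id.pow_const 2))).const_mul _

lemma exp_aux (k x : ℝ) (hk : 0 < k) (hx : 0 ≤ x) : x * Real.exp (-(k*x)) ≤ 1/k := by
  have h1 : k*x + 1 ≤ Real.exp (k*x) := Real.add_one_le_exp _
  have h2 : (0:ℝ) < Real.exp (k*x) := Real.exp_pos _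
  rw [Real.exp_neg]
  rw [show (Real.exp (k*x))⁻¹ = 1/Real.exp (k*x) by ring, ← div_eq_mul_one_div,
    div_le_div_iff₀ h2 hk]
  nlinarith

lemma EE_norm_le (c t : ℝ) (ht : 0 < t) : ‖EE c t‖ ≤ Real.exp (-3*t^2) := by
  rw [EE_norm]
  apply Real.exp_le_exp.2
  have : 0 ≤ c^2/t^2 := by positivity
  linarith

lemma EE_integrable (c : ℝ) : IntegrableOn (EE c) (Set.Ioi 0) := by
  apply Integrable.mono' ((integrable_exp_neg_mul_sq (by norm_num : (0:ℝ) < 3)).integrableOn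
    (s := Set.Ioi 0))
  · exact (EE_meas c).aestronglyMeasurable
  · filter_upwards [ae_restrict_mem measurableSet_Ioi] with t ht
    simpa [neg_mul] using EE_norm_le c t ht

noncomputable def EEc (c t : ℝ) : ℂ :=
  Complex.exp (-(3+4*Complex.I)*((t^2 : ℝ):ℂ) - (3-4*Complex.I)*((c^2/t^2 : ℝ):ℂ))

lemma conj_EE (c t : ℝ) : (starRingEnd ℂ) (EE c t) = EEc c t := by
  rw [EE, EEc, ← Complex.exp_conj]
  congr 1
  simp [map_sub, map_mul, Complex.conj_ofReal, Complex.conj_I, map_ofNat]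
  ring

lemma EEc_at (c t : ℝ) (hc : c ≠ 0) (ht : t ≠ 0) : EEc c (c/t) = EE c t := by
  rw [EEc, EE]
  congr 1
  have h1 : (c/t)^2 = c^2/t^2 := by rw [div_pow]
  have h2 : c^2/(c/t)^2 = t^2 := by rw [div_pow]; field_simp
  rw [h2, h1]
  ring

lemma lem_H (c : ℝ) (hc : 0 < c) :
    (∫ t in Set.Ioi (0:ℝ), ((1/t^2 : ℝ) : ℂ) * EE c t) = (starRingEnd ℂ) (Phi c) / c := by
  have hc' : c ≠ 0 := ne_of_gt hc
  have himg : (fun t : ℝ => c/t) '' (Set.Ioi 0) = Set.Ioi 0 := by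
    apply Set.eq_of_subset_of_subset
    · rintro x ⟨t, ht, rfl⟩
      simp only [Set.mem_Ioi] at ht ⊢
      positivity
    · intro x hx
      simp only [Set.mem_Ioi] at hx
      exact ⟨c/x, by simp only [Set.mem_Ioi]; positivity, by field_simp⟩
  have hderiv : ∀ t ∈ Set.Ioi (0:ℝ), HasDerivWithinAt (fun t : ℝ => c/t) (-(c/t^2)) (Set.Ioi 0) t := by
    intro t ht
    simp only [Set.mem_Ioi] at ht
    have h := ((hasDerivAt_inv (ne_of_gt ht)).const_mul c).hasDerivWithinAt (s := Set.Ioi 0)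
    have he : c * (-(t^2)⁻¹) = -(c/t^2) := by field_simp
    simpa only [he, div_eq_mul_inv] using h
  have hinj : Set.InjOn (fun t : ℝ => c/t) (Set.Ioi 0) := by
    intro x hx y hy hxy
    simp only [Set.mem_Ioi] at hx hy
    have hxy : c/x = c/y := hxy
    field_simp at hxy
    linarith
  have h := integral_image_eq_integral_abs_deriv_smul measurableSet_Ioi hderiv hinj (EEc c)
  rw [himg] at h
  have hL : (∫ u in Set.Ioi (0:ℝ), EEc c u) = (starRingEnd ℂ) (Phi c) := by
    rw [Phi, ← integral_conj]
    exact setIntegral_congr_fun measurableSet_Ioi fun t _ => (conj_EE c t).symm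
  have hR : (∫ t in Set.Ioi (0:ℝ), |(-(c/t^2))| • EEc c (c/t))
      = c * ∫ t in Set.Ioi (0:ℝ), ((1/t^2 : ℝ) : ℂ) * EE c t := by
    rw [← MeasureTheory.integral_const_mul]
    apply setIntegral_congr_fun measurableSet_Ioi
    intro t ht
    simp only [Set.mem_Ioi] at ht
    show |(-(c/t^2))| • EEc c (c/t) = (c:ℂ) * (((1/t^2:ℝ):ℂ) * EE c t)
    rw [EEc_at c t hc' (ne_of_gt ht), abs_of_neg (neg_lt_zero.2 (by positivity : (0:ℝ) < c/t^2)), neg_neg]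
    rw [Complex.real_smul]
    push_cast
    ring
  rw [hL, hR] at h
  have hcc : (c:ℂ) ≠ 0 := Complex.ofReal_ne_zero.2 hc'
  rw [h]
  field_simp

lemma phi0 : Phi 0 = (Real.sqrt π : ℂ) * (2+Complex.I) / 10 := by
  have h1 : Phi 0 = ∫ t in Set.Ioi (0:ℝ), Complex.exp (-(3-4*Complex.I) * (t:ℂ)^2) := by
    rw [Phi]
    apply setIntegral_congr_fun measurableSet_Ioi
    intro t ht
    rw [EE]
    norm_num
  have hre : 0 < (3-4*Complex.I).re := by simp [Complex.sub_re]
  rw [h1, integral_gaussian_complex_Ioi hre]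
  have hden : (3-4*Complex.I) ≠ 0 := by
    simp [Complex.ext_iff]
  set z : ℂ := (π:ℂ)/(3-4*Complex.I) with hz
  have hz0 : z ≠ 0 := div_ne_zero (Complex.ofReal_ne_zero.2 Real.pi_ne_zero) hden
  have hzval : z = (↑(π/25) : ℂ) * (3+4*Complex.I) := by
    rw [hz, div_eq_iff hden]
    push_cast
    ring_nf
    simp [Complex.I_sq]
    ring
  set w : ℂ := z ^ (1/2 : ℂ) with hw
  have hw2 : w^2 = z := by
    have := Complex.cpow_nat_inv_pow z (n := 2) two_ne_zero
    rw [hw, show (1/2 : ℂ) = (((2:ℕ)):ℂ)⁻¹ by norm_num]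
    exact this
  set u : ℂ := (Real.sqrt π : ℂ) * (2+Complex.I) / 5 with hu
  have hu2 : u^2 = z := by
    rw [hu, hzval]
    have : ((Real.sqrt π : ℝ):ℂ)^2 = (π:ℂ) := by
      rw [← Complex.ofReal_pow, Real.sq_sqrt Real.pi_pos.le]
    field_simp
    push_cast
    linear_combination (3+4*Complex.I) * this + ((Real.sqrt π : ℝ):ℂ)^2 * Complex.I_sq
  have hzim : z.im ≠ 0 := by
    rw [hzval]
    simp [Complex.mul_im]
  have hwre : 0 < w.re := by
    rw [hw, Complex.cpow_def_of_ne_zero hz0, Complex.exp_re]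
    apply mul_pos (Real.exp_pos _)
    have him : (Complex.log z * (1/2)).im = Complex.arg z / 2 := by
      simp [Complex.mul_im, Complex.log_im]
      ring
    rw [him]
    apply Real.cos_pos_of_mem_Ioo
    constructor
    · have := Complex.neg_pi_lt_arg z
      linarith
    · have h2 := Complex.arg_le_pi z
      have h3 : Complex.arg z ≠ π := fun h => hzim (Complex.arg_eq_pi_iff.1 h).2
      have : Complex.arg z < π := lt_of_le_of_ne h2 h3
      linarith
  have hure : 0 < u.re := by
    rw [hu]
    have h0 : 0 < Real.sqrt π := Real.sqrt_pos.2 Real.pi_pos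
    simp [Complex.div_re, Complex.mul_re]
    positivity
  have hfac : (w - u) * (w + u) = 0 := by linear_combination hw2 - hu2
  have hwu : w = u := by
    rcases mul_eq_zero.1 hfac with h|h
    · exact sub_eq_zero.1 h
    · exfalso
      have : w = -u := by linear_combination h
      rw [this] at hwre
      simp [Complex.neg_re] at hwre
      linarith
  rw [hwu, hu]
  ring

lemma abs345 : ‖(3+4*Complex.I : ℂ)‖ = 5 := by
  rw [Complex.norm_def, Complex.normSq_apply]
  simp
  rw [show (3:ℝ)*3 + 4*4 = 5^2 by norm_num, Real.sqrt_sq (by norm_num)]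

lemma EE_hasDeriv (t : ℝ) (ht : 0 < t) (x : ℝ) :
    HasDerivAt (fun x : ℝ => EE x t) (EE x t * (-(3+4*Complex.I) * ((2*x/t^2 : ℝ):ℂ))) x := by
  have h1 : HasDerivAt (fun x : ℝ => x^2/t^2) (2*x/t^2) x := by
    simpa using (hasDerivAt_pow 2 x).div_const (t^2)
  have h2 : HasDerivAt (fun x : ℝ => ((x^2/t^2 : ℝ):ℂ)) ((2*x/t^2 : ℝ):ℂ) x :=
    h1.ofReal_comp
  have h3 : HasDerivAt (fun x : ℝ => -(3-4*Complex.I)*((t^2 : ℝ):ℂ) - (3+4*Complex.I)*((x^2/t^2 : ℝ):ℂ))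
      (-((3+4*Complex.I) * ((2*x/t^2 : ℝ):ℂ))) x :=
    HasDerivAt.const_sub _ (h2.const_mul _)
  have h4 := h3.cexp
  simp only [neg_mul] at h4 ⊢
  simp only [EE, neg_mul]
  exact h4

lemma phi_deriv (c : ℝ) (hc : 0 < c) :
    HasDerivAt Phi (-2*(3+4*Complex.I) * (starRingEnd ℂ) (Phi c)) c := by
  have hc' : c ≠ 0 := ne_of_gt hc
  have key := hasDerivAt_integral_of_dominated_loc_of_deriv_le
    (F := fun x t => EE x t)
    (F' := fun x t => EE x t * (-(3+4*Complex.I) * ((2*x/t^2 : ℝ):ℂ)))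
    (x₀ := c) (s := Metric.ball c (c/2))
    (μ := volume.restrict (Set.Ioi 0))
    (bound := fun t => (7/c) * Real.exp (-3*t^2))
    (Metric.ball_mem_nhds c (by positivity))
    (Filter.Eventually.of_forall fun x => (EE_meas x).aestronglyMeasurable)
    (EE_integrable c)
    ?_ ?_ ?_ ?_
  · obtain ⟨-, hd⟩ := key
    have heq : (∫ t in Set.Ioi (0:ℝ), EE c t * (-(3+4*Complex.I) * ((2*c/t^2 : ℝ):ℂ)))
        = -2*(3+4*Complex.I) * (starRingEnd ℂ) (Phi c) := by
      have hpt : ∀ t ∈ Set.Ioi (0:ℝ), EE c t * (-(3+4*Complex.I) * ((2*c/t^2 : ℝ):ℂ))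
          = ((-2*c)*(3+4*Complex.I)) * (((1/t^2 : ℝ):ℂ) * EE c t) := by
        intro t ht
        push_cast
        ring
      rw [setIntegral_congr_fun measurableSet_Ioi hpt, MeasureTheory.integral_const_mul,
        lem_H c hc]
      have hcc : (c:ℂ) ≠ 0 := Complex.ofReal_ne_zero.2 hc'
      field_simp
    rw [← heq]
    exact hd
  · apply Measurable.aestronglyMeasurable
    apply (EE_meas c).mul
    apply Measurable.const_mul
    exact Complex.measurable_ofReal.comp (measurable_const.div (measurable_id.pow_const 2))
  · filter_upwards [ae_restrict_mem measurableSet_Ioi] with t ht x hx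
    simp only [Set.mem_Ioi] at ht
    simp only [Metric.mem_ball, Real.dist_eq] at hx
    have hx1 : c/2 < x := by cases abs_lt.1 hx; linarith
    have hx0 : 0 < x := by linarith
    rw [norm_mul, EE_norm, norm_mul, norm_neg]
    have h5 : ‖(3+4*Complex.I)‖ = 5 := abs345
    rw [h5, Complex.norm_real, Real.norm_eq_abs, abs_of_pos (by positivity : (0:ℝ) < 2*x/t^2)]
    have hb1 : Real.exp (-3*t^2 - 3*(x^2/t^2)) = Real.exp (-3*t^2) * Real.exp (-(3*x^2*(1/t^2))) := by
      rw [← Real.exp_add]; congr 1; ring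
    rw [hb1]
    have hb2 : (1/t^2) * Real.exp (-(3*x^2*(1/t^2))) ≤ 1/(3*x^2) :=
      exp_aux (3*x^2) (1/t^2) (by positivity) (by positivity)
    have hb3 : Real.exp (-3*t^2) * Real.exp (-(3*x^2*(1/t^2))) * (5 * (2*x/t^2))
        = (10*x) * ((1/t^2) * Real.exp (-(3*x^2*(1/t^2)))) * Real.exp (-3*t^2) := by
      field_simp
      ring
    rw [hb3]
    have hb4 : (10*x) * ((1/t^2) * Real.exp (-(3*x^2*(1/t^2)))) ≤ (10*x) * (1/(3*x^2)) :=
      mul_le_mul_of_nonneg_left hb2 (by positivity)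
    have hb5 : (10*x) * (1/(3*x^2)) ≤ 7/c := by
      rw [show (10*x)*(1/(3*x^2)) = 10/(3*x) by field_simp]
      rw [div_le_div_iff₀ (by positivity) hc]
      nlinarith
    calc (10*x) * ((1/t^2) * Real.exp (-(3*x^2*(1/t^2)))) * Real.exp (-3*t^2)
        ≤ ((10*x) * (1/(3*x^2))) * Real.exp (-3*t^2) :=
          mul_le_mul_of_nonneg_right hb4 (Real.exp_pos _).le
      _ ≤ (7/c) * Real.exp (-3*t^2) := mul_le_mul_of_nonneg_right hb5 (Real.exp_pos _).le
  · exact ((integrable_exp_neg_mul_sq (by norm_num : (0:ℝ) < 3)).integrableOn.const_mul _)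
  · filter_upwards [ae_restrict_mem measurableSet_Ioi] with t ht x hx
    simp only [Set.mem_Ioi] at ht
    exact EE_hasDeriv t ht x

lemma EE_cont_in_c (t : ℝ) : Continuous (fun c : ℝ => EE c t) := by
  have h1 : Continuous fun c:ℝ => ((c^2/t^2 : ℝ):ℂ) :=
    Complex.continuous_ofReal.comp ((continuous_pow 2).div_const _)
  exact Complex.continuous_exp.comp (continuous_const.sub (Continuous.mul continuous_const h1))

lemma phi_cont0 : Filter.Tendsto Phi (nhdsWithin 0 (Set.Ioi 0)) (nhds (Phi 0)) := by
  apply tendsto_integral_filter_of_dominated_convergence (bound := fun t => Real.exp (-3*t^2))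
  · exact Filter.Eventually.of_forall fun c => (EE_meas c).aestronglyMeasurable
  · apply Filter.Eventually.of_forall
    intro c
    filter_upwards [ae_restrict_mem measurableSet_Ioi] with t ht
    exact EE_norm_le c t ht
  · exact ((integrable_exp_neg_mul_sq (by norm_num : (0:ℝ) < 3)).integrableOn)
  · filter_upwards [ae_restrict_mem measurableSet_Ioi] with t ht
    exact (((EE_cont_in_c t).tendsto 0)).mono_left nhdsWithin_le_nhds

noncomputable def q1 (c : ℝ) : ℂ := (2-Complex.I) * Phi c + (2+Complex.I) * (starRingEnd ℂ) (Phi c)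
noncomputable def q2 (c : ℝ) : ℂ := (2-Complex.I) * Phi c - (2+Complex.I) * (starRingEnd ℂ) (Phi c)

lemma conj_phi_deriv (c : ℝ) (hc : 0 < c) :
    HasDerivAt (fun c => (starRingEnd ℂ) (Phi c)) (-2*(3-4*Complex.I) * Phi c) c := by
  have h := (phi_deriv c hc).star
  simp only [RCLike.star_def] at h
  have he : (starRingEnd ℂ) (-2*(3+4*Complex.I) * (starRingEnd ℂ) (Phi c))
      = -2*(3-4*Complex.I) * Phi c := by
    rw [map_mul, Complex.conj_conj, map_mul]
    simp only [map_neg, map_ofNat, map_add, map_mul, Complex.conj_I]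
    ring
  rw [he] at h
  exact h

lemma q1_deriv (c : ℝ) (hc : 0 < c) : HasDerivAt q1 (-10 * q1 c) c := by
  have h := ((phi_deriv c hc).const_mul (2-Complex.I)).add
    ((conj_phi_deriv c hc).const_mul (2+Complex.I))
  have he : (2-Complex.I) * (-2*(3+4*Complex.I) * (starRingEnd ℂ) (Phi c))
      + (2+Complex.I) * (-2*(3-4*Complex.I) * Phi c) = -10 * q1 c := by
    rw [q1]
    linear_combination (8 * Phi c + 8 * (starRingEnd ℂ) (Phi c)) * Complex.I_sq
  rw [← he]
  exact h

lemma q2_deriv (c : ℝ) (hc : 0 < c) : HasDerivAt q2 (10 * q2 c) c := by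
  have h := ((phi_deriv c hc).const_mul (2-Complex.I)).sub
    ((conj_phi_deriv c hc).const_mul (2+Complex.I))
  have he : (2-Complex.I) * (-2*(3+4*Complex.I) * (starRingEnd ℂ) (Phi c))
      - (2+Complex.I) * (-2*(3-4*Complex.I) * Phi c) = 10 * q2 c := by
    rw [q2]
    linear_combination (8 * (starRingEnd ℂ) (Phi c) - 8 * Phi c) * Complex.I_sq
  rw [← he]
  exact h

lemma const_from_deriv (F : ℝ → ℂ) (L : ℂ)
    (hd : ∀ c, 0 < c → HasDerivAt F 0 c)
    (ht : Filter.Tendsto F (nhdsWithin 0 (Set.Ioi 0)) (nhds L)) : F 1 = L := by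
  have hconst : ∀ ε ∈ Set.Ioc (0:ℝ) 1, F 1 = F ε := by
    intro ε hε
    obtain ⟨hε0, hε1⟩ := hε
    have hcont : ContinuousOn F (Set.Icc ε 1) := fun x hx =>
      ((hd x (lt_of_lt_of_le hε0 hx.1)).continuousAt).continuousWithinAt
    have hder : ∀ x ∈ Set.Ico ε 1, HasDerivWithinAt F 0 (Set.Ici x) x := fun x hx =>
      ((hd x (lt_of_lt_of_le hε0 hx.1)).hasDerivWithinAt)
    exact constant_of_has_deriv_right_zero hcont hder 1 (Set.right_mem_Icc.2 hε1)
  have hev : F =ᶠ[nhdsWithin 0 (Set.Ioi 0)] fun _ => F 1 := by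
    filter_upwards [Ioc_mem_nhdsGT_of_mem (Set.left_mem_Ico.2 one_pos)] with ε hε
    exact (hconst ε hε).symm
  have ht2 : Filter.Tendsto (fun _ : ℝ => F 1) (nhdsWithin 0 (Set.Ioi 0)) (nhds L) :=
    Filter.Tendsto.congr' hev ht
  exact tendsto_nhds_unique tendsto_const_nhds ht2

lemma exp10_deriv (c : ℝ) (k : ℝ) :
    HasDerivAt (fun c : ℝ => Complex.exp ((k*c : ℝ):ℂ))
      (Complex.exp ((k*c : ℝ):ℂ) * k) c := by
  have h1 : HasDerivAt (fun c : ℝ => k*c) k c := by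
    simpa using (hasDerivAt_id c).const_mul k
  exact (h1.ofReal_comp).cexp

lemma conj_phi_cont0 :
    Filter.Tendsto (fun c => (starRingEnd ℂ) (Phi c)) (nhdsWithin 0 (Set.Ioi 0))
      (nhds ((starRingEnd ℂ) (Phi 0))) :=
  (Complex.continuous_conj.tendsto _).comp phi_cont0

lemma q1_one : q1 1 = (Real.sqrt π : ℂ) * Complex.exp (-10) := by
  have hF1 : ∀ c, 0 < c → HasDerivAt (fun c : ℝ => Complex.exp ((10*c : ℝ):ℂ) * q1 c) 0 c := by
    intro c hc
    have h := (exp10_deriv c 10).mul (q1_deriv c hc)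
    have he : Complex.exp ((10*c : ℝ):ℂ) * 10 * q1 c
        + Complex.exp ((10*c : ℝ):ℂ) * (-10 * q1 c) = 0 := by push_cast; ring
    rw [← he]
    exact h
  have hq10 : q1 0 = (Real.sqrt π : ℂ) := by
    rw [q1, phi0]
    have hconj : (starRingEnd ℂ) ((Real.sqrt π : ℂ) * (2+Complex.I) / 10)
        = (Real.sqrt π : ℂ) * (2-Complex.I) / 10 := by
      simp [map_div₀, map_mul, map_add, Complex.conj_ofReal, Complex.conj_I, map_ofNat]
      left; ring
    rw [hconj]
    linear_combination (-(Real.sqrt π : ℂ)/5) * Complex.I_sq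
  have htend : Filter.Tendsto (fun c : ℝ => Complex.exp ((10*c : ℝ):ℂ) * q1 c)
      (nhdsWithin 0 (Set.Ioi 0)) (nhds ((Real.sqrt π : ℂ))) := by
    have h1 : Filter.Tendsto (fun c : ℝ => q1 c) (nhdsWithin 0 (Set.Ioi 0)) (nhds (q1 0)) := by
      apply Filter.Tendsto.add
      · exact (phi_cont0.const_mul _)
      · exact (conj_phi_cont0.const_mul _)
    have h2 : Filter.Tendsto (fun c : ℝ => Complex.exp ((10*c : ℝ):ℂ))
        (nhdsWithin 0 (Set.Ioi 0)) (nhds 1) := by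
      have : Continuous fun c : ℝ => Complex.exp ((10*c : ℝ):ℂ) :=
        Complex.continuous_exp.comp (Complex.continuous_ofReal.comp (continuous_const.mul continuous_id))
      have h3 := (this.tendsto 0).mono_left (nhdsWithin_le_nhds (s := Set.Ioi (0:ℝ)))
      norm_num at h3
      have h4 : (fun c : ℝ => Complex.exp ((10*c : ℝ):ℂ)) = fun c : ℝ => Complex.exp (10 * (c:ℂ)) := by
        funext c; push_cast; ring_nf
      rw [h4]
      exact h3
    have := h2.mul h1
    rw [one_mul, hq10] at this
    exact this
  have hkey := const_from_deriv _ _ hF1 htend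
  have hexp : ((10*(1:ℝ) : ℝ):ℂ) = 10 := by norm_num
  rw [hexp] at hkey
  rw [show (-10:ℂ) = -(10:ℂ) by norm_num, Complex.exp_neg]
  field_simp
  linear_combination hkey

lemma q2_one : q2 1 = 0 := by
  have hF2 : ∀ c, 0 < c → HasDerivAt (fun c : ℝ => Complex.exp ((-10*c : ℝ):ℂ) * q2 c) 0 c := by
    intro c hc
    have h := (exp10_deriv c (-10)).mul (q2_deriv c hc)
    have he : Complex.exp ((-10*c : ℝ):ℂ) * ((-10:ℝ):ℂ) * q2 c
        + Complex.exp ((-10*c : ℝ):ℂ) * (10 * q2 c) = 0 := by push_cast; ring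
    rw [← he]
    exact h
  have hq20 : q2 0 = 0 := by
    rw [q2, phi0]
    have hconj : (starRingEnd ℂ) ((Real.sqrt π : ℂ) * (2+Complex.I) / 10)
        = (Real.sqrt π : ℂ) * (2-Complex.I) / 10 := by
      simp [map_div₀, map_mul, map_add, Complex.conj_ofReal, Complex.conj_I, map_ofNat]
      left; ring
    rw [hconj]
    ring
  have htend : Filter.Tendsto (fun c : ℝ => Complex.exp ((-10*c : ℝ):ℂ) * q2 c)
      (nhdsWithin 0 (Set.Ioi 0)) (nhds 0) := by
    have h1 : Filter.Tendsto (fun c : ℝ => q2 c) (nhdsWithin 0 (Set.Ioi 0)) (nhds (q2 0)) := by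
      apply Filter.Tendsto.sub
      · exact (phi_cont0.const_mul _)
      · exact (conj_phi_cont0.const_mul _)
    have h2 : Filter.Tendsto (fun c : ℝ => Complex.exp ((-10*c : ℝ):ℂ))
        (nhdsWithin 0 (Set.Ioi 0)) (nhds 1) := by
      have : Continuous fun c : ℝ => Complex.exp ((-10*c : ℝ):ℂ) :=
        Complex.continuous_exp.comp (Complex.continuous_ofReal.comp (continuous_const.mul continuous_id))
      have h3 := (this.tendsto 0).mono_left (nhdsWithin_le_nhds (s := Set.Ioi (0:ℝ)))
      norm_num at h3
      have h4 : (fun c : ℝ => Complex.exp ((-10*c : ℝ):ℂ)) = fun c : ℝ => Complex.exp (-(10 * (c:ℂ))) := by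
        funext c; push_cast; ring_nf
      rw [h4]
      exact h3
    have := h2.mul h1
    rw [one_mul, hq20] at this
    exact this
  have hkey := const_from_deriv _ _ hF2 htend
  have : Complex.exp ((-10*(1:ℝ) : ℝ):ℂ) ≠ 0 := Complex.exp_ne_zero _
  exact (mul_eq_zero.1 hkey).resolve_left this

lemma phi_one : Phi 1 = (Real.sqrt π : ℂ) * Complex.exp (-10) * (2+Complex.I) / 10 := by
  have h1 := q1_one
  have h2 := q2_one
  rw [q1] at h1
  rw [q2] at h2
  have hsum : 2*(2-Complex.I) * Phi 1 = (Real.sqrt π : ℂ) * Complex.exp (-10) := by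
    linear_combination h1 + h2
  have h5 : (2-Complex.I) * (2+Complex.I) = 5 := by
    linear_combination -Complex.I_sq
  field_simp
  linear_combination (2+Complex.I) * hsum + ((Real.sqrt π : ℂ) * Complex.exp (-10) - 2*Phi 1) * h5 - 2*Phi 1*Complex.I_sq + (2*Phi 1 + (Real.sqrt π : ℂ) * Complex.exp (-10)) * Complex.I_sq

lemma EE_div_integrable : IntegrableOn (fun t => ((1/t^2 : ℝ):ℂ) * EE 1 t) (Set.Ioi 0) := by
  apply Integrable.mono' (((integrable_exp_neg_mul_sq (by norm_num : (0:ℝ) < 3)).integrableOn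
    (s := Set.Ioi 0)).const_mul (1/3 : ℝ))
  · apply Measurable.aestronglyMeasurable
    exact (Complex.measurable_ofReal.comp (measurable_const.div (measurable_id.pow_const 2))).mul
      (EE_meas 1)
  · filter_upwards [ae_restrict_mem measurableSet_Ioi] with t ht
    simp only [Set.mem_Ioi] at ht
    rw [norm_mul, EE_norm, Complex.norm_real, Real.norm_eq_abs,
      abs_of_pos (by positivity : (0:ℝ) < 1/t^2)]
    have hb1 : Real.exp (-3*t^2 - 3*(1^2/t^2)) = Real.exp (-3*t^2) * Real.exp (-(3*(1/t^2))) := by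
      rw [← Real.exp_add]; congr 1; ring
    rw [hb1]
    have hb2 : (1/t^2) * Real.exp (-(3*(1/t^2))) ≤ 1/3 := by
      have := exp_aux 3 (1/t^2) (by norm_num) (by positivity)
      calc (1/t^2) * Real.exp (-(3*(1/t^2))) = (1/t^2) * Real.exp (-(3*(1/t^2))) := rfl
        _ ≤ 1/3 := this
    calc (1/t^2) * (Real.exp (-3*t^2) * Real.exp (-(3*(1/t^2))))
        = ((1/t^2) * Real.exp (-(3*(1/t^2)))) * Real.exp (-3*t^2) := by ring
      _ ≤ (1/3) * Real.exp (-3*t^2) :=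
          mul_le_mul_of_nonneg_right hb2 (Real.exp_pos _).le

lemma total_integrable :
    IntegrableOn (fun t => (((1+1/t^2 : ℝ)):ℂ) * EE 1 t) (Set.Ioi 0) := by
  have h : ∀ t ∈ Set.Ioi (0:ℝ), (((1+1/t^2 : ℝ)):ℂ) * EE 1 t
      = EE 1 t + ((1/t^2 : ℝ):ℂ) * EE 1 t := by
    intro t ht
    push_cast
    ring
  apply (IntegrableOn.congr_fun ((EE_integrable 1).add EE_div_integrable) _ measurableSet_Ioi)
  intro t ht
  exact (h t ht).symm

lemma stepD : (∫ t in Set.Ioi (0:ℝ), (1+1/t^2) * (Real.cos (4*(t^2-1/t^2)) * Real.exp (-3*t^2-3/t^2)))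
    = (Phi 1 + (starRingEnd ℂ) (Phi 1)).re := by
  have h1 : (∫ t in Set.Ioi (0:ℝ), (1+1/t^2) * (Real.cos (4*(t^2-1/t^2)) * Real.exp (-3*t^2-3/t^2)))
      = ∫ t in Set.Ioi (0:ℝ), ((((1+1/t^2 : ℝ)):ℂ) * EE 1 t).re := by
    apply setIntegral_congr_fun measurableSet_Ioi
    intro t ht
    show (1+1/t^2) * (Real.cos (4*(t^2-1/t^2)) * Real.exp (-3*t^2-3/t^2))
      = ((((1+1/t^2 : ℝ)):ℂ) * EE 1 t).re
    rw [Complex.re_ofReal_mul]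
    congr 1
    rw [EE, Complex.exp_re, re_lin, im_lin]
    rw [show -3*t^2-3*(1^2/t^2) = -3*t^2-3/t^2 by ring,
      show 4*t^2-4*(1^2/t^2) = 4*(t^2-1/t^2) by ring]
    ring
  rw [h1]
  have h2 := integral_re (μ := volume.restrict (Set.Ioi 0)) total_integrable
  simp only [RCLike.re_to_complex] at h2
  rw [h2]
  congr 1
  have h3 : ∀ t ∈ Set.Ioi (0:ℝ), (((1+1/t^2 : ℝ)):ℂ) * EE 1 t
      = EE 1 t + ((1/t^2 : ℝ):ℂ) * EE 1 t := by
    intro t ht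
    push_cast
    ring
  rw [setIntegral_congr_fun measurableSet_Ioi h3,
    MeasureTheory.integral_add (EE_integrable 1) EE_div_integrable]
  have h4 : (∫ t in Set.Ioi (0:ℝ), ((1/t^2 : ℝ):ℂ) * EE 1 t) = (starRingEnd ℂ) (Phi 1) := by
    rw [lem_H 1 one_pos]
    norm_num
  rw [h4]
  rfl

lemma final_re : (Phi 1 + (starRingEnd ℂ) (Phi 1)).re = 2 * Real.sqrt π / (5 * Real.exp 10) := by
  have hexp : Complex.exp (-10) = ((Real.exp (-10) : ℝ):ℂ) := by
    rw [Complex.ofReal_exp]; norm_num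
  have hz : Phi 1 + (starRingEnd ℂ) (Phi 1) = ((2 * (Real.sqrt π * Real.exp (-10)) / 5 : ℝ):ℂ) := by
    rw [phi_one, hexp]
    have hc : (starRingEnd ℂ) (((Real.sqrt π : ℝ):ℂ) * ((Real.exp (-10) : ℝ):ℂ) * (2+Complex.I) / 10)
        = ((Real.sqrt π : ℝ):ℂ) * ((Real.exp (-10) : ℝ):ℂ) * (2-Complex.I) / 10 := by
      simp [map_div₀, map_mul, map_add, Complex.conj_ofReal, Complex.conj_I, map_ofNat]
      rw [show (starRingEnd ℂ) (Complex.exp (-10)) = Complex.exp (-10) by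
        rw [← Complex.exp_conj, map_neg, map_ofNat]]
      ring
    rw [hc]
    push_cast
    ring
  rw [hz, Complex.ofReal_re, Real.exp_neg]
  have h0 : Real.exp 10 ≠ 0 := (Real.exp_pos _).ne'
  field_simp

theorem stmt5 :
    ∫ x in Set.Ioi (0:ℝ),
        Real.sqrt (Real.sqrt (x^2 + 4) + 2) / Real.sqrt (x^2 + 4)
          * Real.cos (4 * x) * Real.exp (-3 * Real.sqrt (x^2 + 4))
      = 2 * Real.sqrt π / (5 * Real.exp 10) :=
  stepA.trans (stepB.trans (stepC.trans (stepD.trans final_re)))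
end
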